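/- arXiv:1805.12587 — 12 statements merged into one kernel-verified Lean document; each statement's English description precedes it below -/
import Mathlib

section
/- Let α ∈ (0,2] and let λ, μ, ν be complex numbers with λ ≠ 0 and ν ≠ 0. Set c_α = 2^{2 − max(1−2α,0) − 2·max(α−1,0)} · α^{α−1} · B(min(α,1), min(α,1)) (where B is the Beta function) and τ_* = 2^{1/α − max(1/α−2,0)} · α / (|μ| + √(|μ|² + c_α·|λ|·|ν|/Γ(α)))^{1/α}. Then τ_* > 0 and the convergence radius satisfies R(λ,μ,ν) ≥ τ_*; in particular Σ_{k≥1} |a_k| t^{αk} < ∞ for every t ∈ [0, τ_*). -/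
open MeasureTheory Finset

/-- The Euler Beta function `B(a,b) = ∫₀¹ u^(a-1) (1-u)^(b-1) du`. -/
noncomputable def Beta (a b : ℝ) : ℝ :=
  ∫ u in Set.Ioo (0:ℝ) 1, u ^ (a - 1) * (1 - u) ^ (b - 1)

/-- The sequence `(a_k)` solving `(A_{λ,μ,ν})`:
`a 0 = 0`, `a 1 = ν/Γ(α+1)`, and
`a (k+1) = (λ a*²_k + μ a_k) Γ(αk+1)/Γ(αk+α+1)` for `k ≥ 1`,
where `a*²_k = ∑_{j=1}^{k-1} a_j a_{k-j}`. -/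
def IsRiccatiSeq (α : ℝ) (l m n : ℂ) (a : ℕ → ℂ) : Prop :=
  a 0 = 0 ∧ a 1 = n / (Real.Gamma (α + 1) : ℂ) ∧
  ∀ k : ℕ, 1 ≤ k →
    a (k + 1) = (l * (∑ j ∈ Finset.Ico 1 k, a j * a (k - j)) + m * a k) *
      ((Real.Gamma (α * (k:ℝ) + 1) / Real.Gamma (α * (k:ℝ) + α + 1) : ℝ) : ℂ)

/-- Convergence radius of the fractional power series `∑_{k≥1} a_k t^(αk)`:
`R = sup { t ≥ 0 : ∑_{k≥1} |a_k| t^(αk) < ∞ }`. -/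
noncomputable def radius (α : ℝ) (a : ℕ → ℂ) : ENNReal :=
  ⨆ (t : NNReal) (_ : Summable fun k : ℕ => ‖a k‖ * (t : ℝ) ^ (α * (k : ℝ))), (t : ENNReal)

/-!
Write `β = min α 1`. By strong induction, `‖a k‖ ≤ C wᵏ k^(β-1)`: the convolution
`∑ i^(β-1) (k-i)^(β-1)` is a midpoint Riemann sum of `k^(2β-1) B(β,β)` (the integrand
`u^(β-1) (1-u)^(β-1)` is midpoint convex), and log-convexity of `Γ` bounds
`Γ(αk+1)/Γ(αk+α+1)` by roughly `(α(k+1))^(-α)`. The induction closes for a rate `w` that is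
affine in the scale `C`. Matching `a 1` fixes `C = ‖ν‖ τ^α / Γ(α+1)`, and then `w τ^α = 1` is
exactly the quadratic equation whose positive root defines `τ^α`. Hence
`∑ ‖a k‖ t^(αk)` is dominated by a geometric series of ratio `(t/τ)^α`.
-/
open Real

theorem integrableOn_beta_integrand {a b : ℝ} (ha : 0 < a) (hb : 0 < b) :
    IntegrableOn (fun u : ℝ => u ^ (a - 1) * (1 - u) ^ (b - 1)) (Set.Ioo 0 1) := by
  have hc := (Complex.betaIntegral_convergent (u := a) (v := b) (by simpa) (by simpa)).norm
  rw [intervalIntegrable_iff_integrableOn_Ioo_of_le zero_le_one] at hc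
  refine hc.congr_fun (fun u hu => ?_) measurableSet_Ioo
  have h1u : (1 - (u : ℂ)) = ((1 - u : ℝ) : ℂ) := by push_cast; ring
  simp only [norm_mul, h1u, Complex.norm_cpow_eq_rpow_re_of_pos hu.1,
    Complex.norm_cpow_eq_rpow_re_of_pos (sub_pos.2 hu.2)]
  simp

theorem Beta_pos {a b : ℝ} (ha : 0 < a) (hb : 0 < b) : 0 < Beta a b := by
  have hpos : ∀ u ∈ Set.Ioo (0 : ℝ) 1, 0 < u ^ (a - 1) * (1 - u) ^ (b - 1) := fun u hu =>
    mul_pos (rpow_pos_of_pos hu.1 _) (rpow_pos_of_pos (sub_pos.2 hu.2) _)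
  rw [Beta, setIntegral_pos_iff_support_of_nonneg_ae
    ((ae_restrict_iff' measurableSet_Ioo).2 (ae_of_all _ fun u hu => (hpos u hu).le))
    (integrableOn_beta_integrand ha hb)]
  refine lt_of_lt_of_le ?_ (measure_mono fun u hu => ⟨(hpos u hu).ne', hu⟩)
  simp

theorem Beta_one_one : Beta 1 1 = 1 := by
  simp [Beta]

noncomputable def betaKernel (β u : ℝ) : ℝ := u ^ (β - 1) * (1 - u) ^ (β - 1)

theorem continuousOn_betaKernel (β : ℝ) : ContinuousOn (betaKernel β) (Set.Ioo 0 1) :=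
  ((continuousOn_id.rpow_const fun _ hu => Or.inl hu.1.ne').mul
    ((continuousOn_const.sub continuousOn_id).rpow_const
      fun _ hu => Or.inl (sub_pos.2 hu.2).ne'))

theorem intervalIntegrable_betaKernel (β : ℝ) {a b : ℝ} (ha : a ∈ Set.Ioo (0 : ℝ) 1)
    (hb : b ∈ Set.Ioo (0 : ℝ) 1) : IntervalIntegrable (betaKernel β) volume a b :=
  ((continuousOn_betaKernel β).mono (Set.ordConnected_Ioo.uIcc_subset ha hb)).intervalIntegrable

theorem betaKernel_pos {β u : ℝ} (hu : u ∈ Set.Ioo (0 : ℝ) 1) : 0 < betaKernel β u :=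
  mul_pos (rpow_pos_of_pos hu.1 _) (rpow_pos_of_pos (sub_pos.2 hu.2) _)

theorem two_mul_betaKernel_midpoint_le {β u v : ℝ} (hβ : β ≤ 1) (hu : u ∈ Set.Ioo (0 : ℝ) 1)
    (hv : v ∈ Set.Ioo (0 : ℝ) 1) :
    2 * betaKernel β ((u + v) / 2) ≤ betaKernel β u + betaKernel β v := by
  set m := (u + v) / 2 with hm_def
  have hm : m ∈ Set.Ioo (0 : ℝ) 1 := by
    rw [hm_def]; constructor <;> linarith [hu.1, hu.2, hv.1, hv.2]
  have hβ' : β - 1 ≤ 0 := by linarith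
  -- `uv ≤ m²` and `(1-u)(1-v) ≤ (1-m)²`, and `t ↦ t^(β-1)` is antitone
  have hsq : betaKernel β m ^ 2 ≤ betaKernel β u * betaKernel β v := by
    calc betaKernel β m ^ 2 = (m ^ 2) ^ (β - 1) * ((1 - m) ^ 2) ^ (β - 1) := by
          rw [betaKernel, mul_pow, rpow_pow_comm hm.1.le, rpow_pow_comm (sub_pos.2 hm.2).le]
      _ ≤ (u * v) ^ (β - 1) * ((1 - u) * (1 - v)) ^ (β - 1) := by
          have h1 := mul_pos hu.1 hv.1
          have h2 := mul_pos (sub_pos.2 hu.2) (sub_pos.2 hv.2)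
          gcongr ?_ * ?_
          · exact rpow_le_rpow_of_nonpos h1 (by rw [hm_def]; nlinarith [sq_nonneg (u - v)]) hβ'
          · exact rpow_le_rpow_of_nonpos h2 (by rw [hm_def]; nlinarith [sq_nonneg (u - v)]) hβ'
      _ = betaKernel β u * betaKernel β v := by
          rw [betaKernel, betaKernel, mul_rpow hu.1.le hv.1.le,
            mul_rpow (sub_pos.2 hu.2).le (sub_pos.2 hv.2).le]
          ring
  nlinarith [betaKernel_pos (β := β) hm, betaKernel_pos (β := β) hu, betaKernel_pos (β := β) hv,
    sq_nonneg (betaKernel β u - betaKernel β v)]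

theorem mul_betaKernel_le_integral {β m h : ℝ} (hβ : β ≤ 1) (hh : 0 ≤ h) (hm0 : h < m)
    (hm1 : m + h < 1) :
    2 * h * betaKernel β m ≤ ∫ u in (m - h)..(m + h), betaKernel β u := by
  have hab : m - h ≤ m + h := by linarith
  have hsub : Set.Icc (m - h) (m + h) ⊆ Set.Ioo 0 1 := fun u hu =>
    ⟨by linarith [hu.1], by linarith [hu.2]⟩
  have hint : IntervalIntegrable (betaKernel β) volume (m - h) (m + h) :=
    intervalIntegrable_betaKernel β (hsub ⟨le_rfl, hab⟩) (hsub ⟨hab, le_rfl⟩)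
  have hrefl :
      IntervalIntegrable (fun u => betaKernel β (2 * m - u)) volume (m - h) (m + h) := by
    simpa [show 2 * m - (m - h) = m + h by ring, show 2 * m - (m + h) = m - h by ring]
      using (hint.comp_sub_left (2 * m)).symm
  have hsymm : ∫ u in (m - h)..(m + h), betaKernel β (2 * m - u) =
      ∫ u in (m - h)..(m + h), betaKernel β u := by
    rw [intervalIntegral.integral_comp_sub_left]
    congr 1 <;> ring
  have hmono : ∫ _ in (m - h)..(m + h), 2 * betaKernel β m ≤
      ∫ u in (m - h)..(m + h), (betaKernel β u + betaKernel β (2 * m - u)) := by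
    refine intervalIntegral.integral_mono_on hab intervalIntegrable_const (hint.add hrefl)
      fun u hu => ?_
    have := two_mul_betaKernel_midpoint_le hβ (hsub hu)
      (hsub (a := 2 * m - u) ⟨by linarith [hu.2], by linarith [hu.1]⟩)
    rwa [show (u + (2 * m - u)) / 2 = m by ring] at this
  rw [intervalIntegral.integral_const, intervalIntegral.integral_add hint hrefl, hsymm,
    smul_eq_mul] at hmono
  linarith

theorem div_mul_betaKernel_le_integral {β i k : ℝ} (hβ : β ≤ 1) (hi : 1 ≤ i)
    (hik : i + 1 ≤ k) :
    1 / k * betaKernel β (i / k) ≤ ∫ u in (i - 1 / 2) / k..(i + 1 / 2) / k, betaKernel β u := by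
  have hk : 0 < k := by linarith
  have := mul_betaKernel_le_integral hβ (h := 1 / (2 * k)) (m := i / k) (by positivity)
    (by rw [div_lt_div_iff₀ (by positivity) hk]; nlinarith)
    (by rw [div_add_div _ _ hk.ne' (by positivity), div_lt_one (by positivity)]; nlinarith)
  convert this using 2 <;> field_simp

theorem intervalIntegral_betaKernel_le_Beta {β a b : ℝ} (hβ : 0 < β) (ha : 0 < a) (hab : a ≤ b)
    (hb : b < 1) : ∫ u in a..b, betaKernel β u ≤ Beta β β := by
  rw [intervalIntegral.integral_of_le hab, Beta]
  exact setIntegral_mono_set (integrableOn_beta_integrand hβ hβ)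
    ((ae_restrict_iff' measurableSet_Ioo).2 (ae_of_all _ fun u hu => (betaKernel_pos hu).le))
    (Filter.Eventually.of_forall fun u hu => ⟨ha.trans hu.1, hu.2.trans_lt hb⟩)

theorem rpow_mul_rpow_sub_eq {β i k : ℝ} (hi : 0 < i) (hik : i < k) :
    i ^ (β - 1) * (k - i) ^ (β - 1) = k ^ (2 * β - 1) * (1 / k * betaKernel β (i / k)) := by
  have hk : 0 < k := hi.trans hik
  rw [betaKernel, show 1 - i / k = (k - i) / k by field_simp, div_rpow hi.le hk.le,
    div_rpow (sub_pos.2 hik).le hk.le, show 2 * β - 1 = (β - 1) + (β - 1) + 1 by ring,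
    rpow_add hk, rpow_add hk, rpow_one]
  field_simp

theorem sum_rpow_mul_rpow_sub_le_Beta {β : ℝ} (hβ0 : 0 < β) (hβ1 : β ≤ 1) (k : ℕ) :
    ∑ i ∈ Finset.Ico 1 k, (i : ℝ) ^ (β - 1) * ((k - i : ℕ) : ℝ) ^ (β - 1) ≤
      Beta β β * (k : ℝ) ^ (2 * β - 1) := by
  rcases Nat.eq_zero_or_pos k with rfl | hk
  · simpa using mul_nonneg (Beta_pos hβ0 hβ0).le (rpow_nonneg le_rfl _)
  have hK : (0 : ℝ) < k := Nat.cast_pos.2 hk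
  -- the `i`-th term is `k^(2β-1)` times the midpoint rule for `betaKernel β` on the cell
  -- `[A i, A (i+1)]` centred at `i/k`
  set A : ℕ → ℝ := fun n => ((n : ℝ) - 1 / 2) / k with hA
  have hA0 : 0 < A 1 := by norm_num [hA, hK]
  have hA1 : ∀ n ≤ k, A n < 1 := fun n hn => by
    rw [hA, div_lt_one hK]; linarith [(Nat.cast_le (α := ℝ)).2 hn]
  have hmono : Monotone A := fun m n hmn => by simp only [hA]; gcongr
  have hcell : ∀ i ∈ Finset.Ico 1 k,
      1 / (k : ℝ) * betaKernel β (i / k) ≤ ∫ u in A i..A (i + 1), betaKernel β u := by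
    intro i hi
    obtain ⟨hi1, hik⟩ := Finset.mem_Ico.1 hi
    convert div_mul_betaKernel_le_integral hβ1 (Nat.one_le_cast.2 hi1)
      (by exact_mod_cast hik : (i : ℝ) + 1 ≤ k) using 2
    simp only [hA]; push_cast; ring
  have hintegrable : ∀ i ∈ Set.Ico 1 k,
      IntervalIntegrable (betaKernel β) volume (A i) (A (i + 1)) := fun i hi =>
    intervalIntegrable_betaKernel β ⟨hA0.trans_le (hmono hi.1), hA1 i hi.2.le⟩
      ⟨hA0.trans_le (hmono (by omega)), hA1 (i + 1) hi.2⟩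
  calc ∑ i ∈ Finset.Ico 1 k, (i : ℝ) ^ (β - 1) * ((k - i : ℕ) : ℝ) ^ (β - 1)
      = (k : ℝ) ^ (2 * β - 1) * ∑ i ∈ Finset.Ico 1 k, 1 / (k : ℝ) * betaKernel β (i / k) := by
        rw [Finset.mul_sum]
        refine Finset.sum_congr rfl fun i hi => ?_
        obtain ⟨hi1, hik⟩ := Finset.mem_Ico.1 hi
        rw [Nat.cast_sub hik.le]
        exact rpow_mul_rpow_sub_eq (Nat.cast_pos.2 hi1) (Nat.cast_lt.2 hik)
    _ ≤ (k : ℝ) ^ (2 * β - 1) * ∫ u in A 1..A k, betaKernel β u := by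
        rw [← intervalIntegral.sum_integral_adjacent_intervals_Ico hk hintegrable]
        exact mul_le_mul_of_nonneg_left (Finset.sum_le_sum hcell) (rpow_nonneg hK.le _)
    _ ≤ Beta β β * (k : ℝ) ^ (2 * β - 1) := by
        rw [mul_comm]
        exact mul_le_mul_of_nonneg_right (intervalIntegral_betaKernel_le_Beta hβ0 hA0
          (hmono hk) (hA1 k le_rfl)) (rpow_nonneg hK.le _)

theorem Gamma_add_one_mul_rpow_le {s x : ℝ} (hs0 : 0 ≤ s) (hs1 : s ≤ 1) (hx : 0 < x) :
    Gamma (x + 1) * (x + s) ^ s ≤ Gamma (x + 1 + s) := by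
  have hxs : 0 < x + s := by linarith
  have hG : 0 < Gamma (x + s) := Gamma_pos_of_pos hxs
  have hG' : 0 < Gamma (x + 1 + s) := Gamma_pos_of_pos (by linarith)
  -- log-convexity of `Γ` at `x + 1 = s • (x + s) + (1 - s) • (x + 1 + s)`
  have hlog := convexOn_log_Gamma.2 (Set.mem_Ioi.mpr hxs)
    (Set.mem_Ioi.mpr (by linarith : 0 < x + 1 + s)) hs0 (sub_nonneg.2 hs1) (add_sub_cancel s 1)
  simp only [Function.comp, smul_eq_mul,
    show s * (x + s) + (1 - s) * (x + 1 + s) = x + 1 by ring] at hlog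
  have hconv : Gamma (x + 1) ≤ Gamma (x + s) ^ s * Gamma (x + 1 + s) ^ (1 - s) := by
    rw [← exp_le_exp, exp_log (Gamma_pos_of_pos (by linarith)), exp_add, ← log_rpow hG,
      ← log_rpow hG', exp_log (rpow_pos_of_pos hG _), exp_log (rpow_pos_of_pos hG' _)] at hlog
    exact hlog
  have hrec : Gamma (x + s) * (x + s) = Gamma (x + 1 + s) := by
    rw [show x + 1 + s = x + s + 1 by ring, Gamma_add_one hxs.ne', mul_comm]
  calc Gamma (x + 1) * (x + s) ^ s
      ≤ Gamma (x + s) ^ s * Gamma (x + 1 + s) ^ (1 - s) * (x + s) ^ s := by gcongr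
    _ = (Gamma (x + s) * (x + s)) ^ s * Gamma (x + 1 + s) ^ (1 - s) := by
        rw [mul_rpow hG.le hxs.le]; ring
    _ = Gamma (x + 1 + s) := by rw [hrec, ← rpow_add hG', add_sub_cancel, rpow_one]

theorem Gamma_div_Gamma_add_nonneg {α x : ℝ} (hα : 0 < α) (hx : 0 ≤ x) :
    0 ≤ Gamma (x + 1) / Gamma (x + α + 1) :=
  div_nonneg (Gamma_pos_of_pos (by linarith)).le (Gamma_pos_of_pos (by linarith)).le

theorem Gamma_div_Gamma_add_le_of_le_one {α x : ℝ} (hα : 0 < α) (hα1 : α ≤ 1) (hx : 0 < x) :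
    Gamma (x + 1) / Gamma (x + α + 1) ≤ (x + α) ^ (-α) := by
  have hxα : 0 < x + α := by linarith
  rw [div_le_iff₀ (Gamma_pos_of_pos (by linarith)), rpow_neg hxα.le, inv_mul_eq_div,
    le_div_iff₀ (rpow_pos_of_pos hxα _), add_right_comm]
  exact Gamma_add_one_mul_rpow_le hα.le hα1 hx

theorem Gamma_div_Gamma_add_le_of_one_lt {α x : ℝ} (hα1 : 1 < α) (hα2 : α ≤ 2) (hx : 0 < x) :
    Gamma (x + 1) / Gamma (x + α + 1) ≤ ((x + α) * (x + α - 1) ^ (α - 1))⁻¹ := by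
  have hxα : 0 < x + α := by linarith
  have hinterp := Gamma_add_one_mul_rpow_le (by linarith : 0 ≤ α - 1) (by linarith) hx
  rw [show x + 1 + (α - 1) = x + α by ring, show x + (α - 1) = x + α - 1 by ring] at hinterp
  rw [div_le_iff₀ (Gamma_pos_of_pos (by linarith)), inv_mul_eq_div,
    le_div_iff₀ (mul_pos hxα (rpow_pos_of_pos (by linarith) _)),
    Gamma_add_one hxα.ne']
  calc Gamma (x + 1) * ((x + α) * (x + α - 1) ^ (α - 1))
      = Gamma (x + 1) * (x + α - 1) ^ (α - 1) * (x + α) := by ring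
    _ ≤ (x + α) * Gamma (x + α) := by rw [mul_comm (x + α)]; gcongr

theorem rpow_le_two_rpow_mul_add_one_rpow {J : ℝ} (hJ : 1 ≤ J) (p : ℝ) :
    J ^ p ≤ 2 ^ max (-p) 0 * (J + 1) ^ p := by
  rcases le_total 0 p with hp | hp
  · rw [max_eq_right (by linarith), rpow_zero, one_mul]
    exact rpow_le_rpow (by linarith) (by linarith) hp
  · rw [max_eq_left (by linarith)]
    calc J ^ p = 2 ^ (-p) * (2 * J) ^ p := by
          rw [mul_rpow zero_le_two (by linarith : (0:ℝ) ≤ J), ← mul_assoc, ← rpow_add two_pos,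
            neg_add_cancel, rpow_zero, one_mul]
      _ ≤ 2 ^ (-p) * (J + 1) ^ p :=
          mul_le_mul_of_nonneg_left (rpow_le_rpow_of_nonpos (by linarith) (by linarith) hp)
            (by positivity)

theorem four_rpow_mul_sub_one_le {s J : ℝ} (hs0 : 0 ≤ s) (hs1 : s ≤ 1) (hJ : 1 ≤ J) :
    4 ^ s * (J - 1) ≤ (J + 1) * J ^ s := by
  have hJ0 : 0 < J := by linarith
  have hsplit : (4 : ℝ) ^ s = (4 / J) ^ s * J ^ s := by
    rw [← mul_rpow (by positivity) hJ0.le, div_mul_cancel₀ _ hJ0.ne']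
  rw [hsplit, mul_right_comm]
  refine mul_le_mul_of_nonneg_right ?_ (rpow_nonneg hJ0.le _)
  rcases le_total 4 J with h4 | h4
  · calc (4 / J) ^ s * (J - 1) ≤ 1 * (J + 1) :=
          mul_le_mul (rpow_le_one (by positivity) ((div_le_one hJ0).2 h4) hs0) (by linarith)
            (by linarith) zero_le_one
      _ = J + 1 := one_mul _
  · calc (4 / J) ^ s * (J - 1) ≤ (4 / J) ^ (1 : ℝ) * (J - 1) := by
          have : 0 ≤ J - 1 := by linarith
          gcongr
          exact (one_le_div hJ0).2 h4
      _ ≤ J + 1 := by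
          rw [rpow_one, div_mul_eq_mul_div, div_le_iff₀ hJ0]
          nlinarith [sq_nonneg (J - 2)]

theorem rpow_two_mul_sub_one_mul_Gamma_div_le {α J : ℝ} (hα : 0 < α) (hα1 : α ≤ 1)
    (hJ : 1 ≤ J) :
    J ^ (2 * α - 1) * (Gamma (α * J + 1) / Gamma (α * J + α + 1)) ≤
      2 ^ max (1 - 2 * α) 0 * α ^ (-α) * (J + 1) ^ (α - 1) := by
  have hJ1 : 0 < J + 1 := by linarith
  have hG := Gamma_div_Gamma_add_le_of_le_one hα hα1 (x := α * J) (by positivity)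
  rw [show (α * J + α) ^ (-α) = α ^ (-α) * (J + 1) ^ (-α) by
    rw [show α * J + α = α * (J + 1) by ring, mul_rpow hα.le hJ1.le]] at hG
  have hpow := rpow_le_two_rpow_mul_add_one_rpow hJ (2 * α - 1)
  rw [neg_sub] at hpow
  calc J ^ (2 * α - 1) * (Gamma (α * J + 1) / Gamma (α * J + α + 1))
      ≤ 2 ^ max (1 - 2 * α) 0 * (J + 1) ^ (2 * α - 1) * (α ^ (-α) * (J + 1) ^ (-α)) := by
        have := Gamma_div_Gamma_add_nonneg hα (x := α * J) (by positivity)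
        gcongr
    _ = 2 ^ max (1 - 2 * α) 0 * α ^ (-α) * (J + 1) ^ (α - 1) := by
        rw [show α - 1 = 2 * α - 1 + -α by ring, rpow_add hJ1]
        ring

theorem Gamma_div_le_of_one_lt {α J : ℝ} (hα1 : 1 < α) (hα2 : α ≤ 2) (hJ : 1 ≤ J) :
    Gamma (α * J + 1) / Gamma (α * J + α + 1) ≤ (α ^ α * ((J + 1) * J ^ (α - 1)))⁻¹ := by
  have hα : 0 < α := by linarith
  have hJ0 : 0 < J := by linarith
  refine (Gamma_div_Gamma_add_le_of_one_lt hα1 hα2 (by positivity)).trans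
    (inv_anti₀ (by positivity) ?_)
  calc α ^ α * ((J + 1) * J ^ (α - 1)) = (α * J + α) * (α * J) ^ (α - 1) := by
        rw [mul_rpow hα.le hJ0.le, show α ^ α = α * α ^ (α - 1) by
          rw [← rpow_one_add' hα.le (by linarith), add_sub_cancel]]
        ring
    _ ≤ (α * J + α) * (α * J + α - 1) ^ (α - 1) := by
        gcongr
        linarith

theorem rpow_mul_Gamma_div_le {α : ℝ} (hα : 0 < α) (hα2 : α ≤ 2) {j : ℕ} (hj : 1 ≤ j) :
    (j : ℝ) ^ (min α 1 - 1) * (Gamma (α * j + 1) / Gamma (α * j + α + 1)) ≤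
      2 ^ max (1 - 2 * α) 0 * α ^ (-α) * ((j + 1 : ℕ) : ℝ) ^ (min α 1 - 1) := by
  have hJ : (1 : ℝ) ≤ j := Nat.one_le_cast.2 hj
  push_cast
  rcases le_or_gt α 1 with h1 | h1
  · rw [min_eq_left h1]
    calc (j : ℝ) ^ (α - 1) * (Gamma (α * j + 1) / Gamma (α * j + α + 1))
        ≤ (j : ℝ) ^ (2 * α - 1) * (Gamma (α * j + 1) / Gamma (α * j + α + 1)) :=
          mul_le_mul_of_nonneg_right (rpow_le_rpow_of_exponent_le hJ (by linarith))
            (Gamma_div_Gamma_add_nonneg hα (by positivity))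
      _ ≤ _ := rpow_two_mul_sub_one_mul_Gamma_div_le hα h1 hJ
  · rw [min_eq_right h1.le, max_eq_right (by linarith), sub_self]
    simp only [rpow_zero, one_mul, mul_one]
    rw [rpow_neg hα.le]
    refine (Gamma_div_le_of_one_lt h1 hα2 hJ).trans (inv_anti₀ (by positivity) ?_)
    exact le_mul_of_one_le_right (by positivity)
      (one_le_mul_of_one_le_of_one_le (by linarith) (one_le_rpow hJ (by linarith)))

theorem sum_mul_Gamma_div_le {α : ℝ} (hα : 0 < α) (hα2 : α ≤ 2) {j : ℕ} (hj : 1 ≤ j) :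
    (∑ i ∈ Finset.Ico 1 j, (i : ℝ) ^ (min α 1 - 1) * ((j - i : ℕ) : ℝ) ^ (min α 1 - 1)) *
        (Gamma (α * j + 1) / Gamma (α * j + α + 1)) ≤
      2 ^ max (1 - 2 * α) 0 * α ^ (-α) *
        (2 ^ (-(2 * max (α - 1) 0)) * Beta (min α 1) (min α 1)) *
          ((j + 1 : ℕ) : ℝ) ^ (min α 1 - 1) := by
  have hJ : (1 : ℝ) ≤ j := Nat.one_le_cast.2 hj
  have hG := Gamma_div_Gamma_add_nonneg hα (x := α * j) (by positivity)
  push_cast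
  rcases le_or_gt α 1 with h1 | h1
  · rw [min_eq_left h1, max_eq_right (show α - 1 ≤ 0 by linarith), mul_zero, neg_zero,
      rpow_zero, one_mul]
    calc (∑ i ∈ Finset.Ico 1 j, (i : ℝ) ^ (α - 1) * ((j - i : ℕ) : ℝ) ^ (α - 1)) *
          (Gamma (α * j + 1) / Gamma (α * j + α + 1))
        ≤ Beta α α *
            ((j : ℝ) ^ (2 * α - 1) * (Gamma (α * j + 1) / Gamma (α * j + α + 1))) := by
          rw [← mul_assoc]
          exact mul_le_mul_of_nonneg_right (sum_rpow_mul_rpow_sub_le_Beta hα h1 j) hG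
      _ ≤ Beta α α * (2 ^ max (1 - 2 * α) 0 * α ^ (-α) * ((j : ℝ) + 1) ^ (α - 1)) :=
          mul_le_mul_of_nonneg_left (rpow_two_mul_sub_one_mul_Gamma_div_le hα h1 hJ)
            (Beta_pos hα hα).le
      _ = _ := by ring
  · rw [min_eq_right h1.le, max_eq_right (by linarith), max_eq_left (by linarith), sub_self]
    simp only [rpow_zero, mul_one, one_mul, Beta_one_one, Finset.sum_const, Nat.card_Ico,
      nsmul_eq_mul, Nat.cast_sub hj, Nat.cast_one]
    have h4 := four_rpow_mul_sub_one_le (s := α - 1) (by linarith) (by linarith) hJ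
    rw [show (4 : ℝ) = 2 ^ (2 : ℝ) by norm_num, ← rpow_mul zero_le_two] at h4
    calc ((j : ℝ) - 1) * (Gamma (α * j + 1) / Gamma (α * j + α + 1))
        ≤ ((j : ℝ) - 1) * (α ^ α * (((j : ℝ) + 1) * (j : ℝ) ^ (α - 1)))⁻¹ :=
          mul_le_mul_of_nonneg_left (Gamma_div_le_of_one_lt h1 hα2 hJ) (by linarith)
      _ ≤ (α ^ α * 2 ^ (2 * (α - 1)))⁻¹ := by
          rw [← div_eq_mul_inv, div_le_iff₀ (by positivity), inv_mul_eq_div,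
            le_div_iff₀ (by positivity)]
          nlinarith [rpow_pos_of_pos hα α]
      _ = α ^ (-α) * 2 ^ (-(2 * (α - 1))) := by
          rw [rpow_neg hα.le, rpow_neg zero_le_two, mul_inv]

theorem norm_le_of_recursion {l m : ℂ} {a : ℕ → ℂ} {r ρ : ℕ → ℝ} {C w : ℝ} (hC : 0 ≤ C)
    (hw : 0 ≤ w) (hr : ∀ k, 0 ≤ r k)
    (hrec : ∀ k, 1 ≤ k →
      a (k + 1) = (l * ∑ j ∈ Finset.Ico 1 k, a j * a (k - j) + m * a k) * (r k : ℂ))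
    (h1 : ‖a 1‖ ≤ C * w * ρ 1)
    (hstep : ∀ k, 1 ≤ k →
      (‖l‖ * C * ∑ j ∈ Finset.Ico 1 k, ρ j * ρ (k - j) + ‖m‖ * ρ k) * r k ≤ w * ρ (k + 1)) :
    ∀ k, 1 ≤ k → ‖a k‖ ≤ C * w ^ k * ρ k := by
  intro k hk
  induction k using Nat.strong_induction_on with
  | _ k IH =>
  obtain ⟨j, rfl⟩ : ∃ j, k = j + 1 := ⟨k - 1, by omega⟩
  rcases Nat.eq_zero_or_pos j with rfl | hj
  · simpa using h1
  have hconv : ‖∑ i ∈ Finset.Ico 1 j, a i * a (j - i)‖ ≤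
      C * w ^ j * (C * ∑ i ∈ Finset.Ico 1 j, ρ i * ρ (j - i)) := by
    rw [Finset.mul_sum, Finset.mul_sum]
    refine (norm_sum_le _ _).trans (Finset.sum_le_sum fun i hi => ?_)
    obtain ⟨hi1, hij⟩ := Finset.mem_Ico.1 hi
    have hi := IH i (by omega) hi1
    have hji := IH (j - i) (by omega) (by omega)
    calc ‖a i * a (j - i)‖ ≤ (C * w ^ i * ρ i) * (C * w ^ (j - i) * ρ (j - i)) := by
          rw [norm_mul]
          exact mul_le_mul hi hji (norm_nonneg _) ((norm_nonneg _).trans hi)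
      _ = C * w ^ j * (C * (ρ i * ρ (j - i))) := by
          rw [show j = i + (j - i) by omega, pow_add, Nat.add_sub_cancel_left]
          ring
  have hCw : 0 ≤ C * w ^ j := by positivity
  calc ‖a (j + 1)‖
      ≤ (‖l‖ * ‖∑ i ∈ Finset.Ico 1 j, a i * a (j - i)‖ + ‖m‖ * ‖a j‖) * r j := by
        rw [hrec j hj, norm_mul, Complex.norm_real, Real.norm_of_nonneg (hr j)]
        refine mul_le_mul_of_nonneg_right ?_ (hr j)
        calc ‖l * ∑ i ∈ Finset.Ico 1 j, a i * a (j - i) + m * a j‖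
            ≤ ‖l * ∑ i ∈ Finset.Ico 1 j, a i * a (j - i)‖ + ‖m * a j‖ := norm_add_le _ _
          _ = _ := by rw [norm_mul, norm_mul]
    _ ≤ (‖l‖ * (C * w ^ j * (C * ∑ i ∈ Finset.Ico 1 j, ρ i * ρ (j - i))) +
          ‖m‖ * (C * w ^ j * ρ j)) * r j := by
        gcongr
        · exact hr j
        · exact IH j (by omega) hj
    _ = C * w ^ j *
          ((‖l‖ * C * ∑ i ∈ Finset.Ico 1 j, ρ i * ρ (j - i) + ‖m‖ * ρ j) * r j) := by
        ring
    _ ≤ C * w ^ j * (w * ρ (j + 1)) := mul_le_mul_of_nonneg_left (hstep j hj) hCw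
    _ = C * w ^ (j + 1) * ρ (j + 1) := by ring

theorem summable_norm_mul_rpow_of_le_geometric {α C w t : ℝ} {a : ℕ → ℂ} (hw : 0 ≤ w)
    (ht : 0 ≤ t) (ha : ∀ k, ‖a k‖ ≤ C * w ^ k) (hwt : w * t ^ α < 1) :
    Summable fun k : ℕ => ‖a k‖ * t ^ (α * k) := by
  have hpow : ∀ k : ℕ, t ^ (α * k) = (t ^ α) ^ k := fun k => by
    rw [← rpow_natCast, ← rpow_mul ht]
  refine Summable.of_nonneg_of_le (fun k => by positivity) (fun k => ?_)
    ((summable_geometric_of_lt_one (by positivity) hwt).mul_left C)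
  rw [hpow, mul_pow, ← mul_assoc]
  exact mul_le_mul_of_nonneg_right (ha k) (by positivity)

theorem ofReal_le_radius {α τ : ℝ} {a : ℕ → ℂ}
    (h : ∀ t : ℝ, 0 ≤ t → t < τ → Summable fun k : ℕ => ‖a k‖ * t ^ (α * (k : ℝ))) :
    ENNReal.ofReal τ ≤ radius α a := by
  refine le_of_forall_lt fun c hc => ?_
  obtain ⟨y, hcy, hyτ⟩ := exists_between hc
  have hy : y ≠ ⊤ := hyτ.ne_top
  refine hcy.trans_le ?_
  rw [← ENNReal.coe_toNNReal hy]
  exact le_iSup₂_of_le y.toNNReal (h _ y.toNNReal.coe_nonneg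
    ((ENNReal.lt_ofReal_iff_toReal_lt hy).1 hyτ)) le_rfl

-- `L`, `M` stand for `‖λ‖`, `‖μ‖`; the two constants are those of `rpow_mul_Gamma_div_le`
-- and `sum_mul_Gamma_div_le`.
noncomputable def riccatiRate (α L M C : ℝ) : ℝ :=
  2 ^ max (1 - 2 * α) 0 * α ^ (-α) *
    (L * C * (2 ^ (-(2 * max (α - 1) 0)) * Beta (min α 1) (min α 1)) + M)

theorem riccatiRate_nonneg {α L M C : ℝ} (hα : 0 < α) (hL : 0 ≤ L) (hM : 0 ≤ M)
    (hC : 0 ≤ C) :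
    0 ≤ riccatiRate α L M C :=
  have hB := Beta_pos (lt_min hα one_pos) (lt_min hα one_pos)
  by unfold riccatiRate; positivity

theorem IsRiccatiSeq.norm_le {α : ℝ} (hα : 0 < α) (hα2 : α ≤ 2) {l m n : ℂ} {a : ℕ → ℂ}
    (ha : IsRiccatiSeq α l m n a) {C : ℝ} (hC : 0 ≤ C)
    (h1 : ‖n‖ / Gamma (α + 1) ≤ C * riccatiRate α ‖l‖ ‖m‖ C) (k : ℕ) :
    ‖a k‖ ≤ C * riccatiRate α ‖l‖ ‖m‖ C ^ k := by
  obtain ⟨ha0, ha1, hrec⟩ := ha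
  have hw := riccatiRate_nonneg hα (norm_nonneg l) (norm_nonneg m) hC
  rcases Nat.eq_zero_or_pos k with rfl | hk
  · simpa [ha0] using hC
  have hρ : ((k : ℕ) : ℝ) ^ (min α 1 - 1) ≤ 1 :=
    rpow_le_one_of_one_le_of_nonpos (Nat.one_le_cast.2 hk) (by linarith [min_le_right α 1])
  refine (norm_le_of_recursion (ρ := fun k : ℕ => (k : ℝ) ^ (min α 1 - 1)) hC hw
    (fun k => Gamma_div_Gamma_add_nonneg hα (by positivity)) hrec ?_ (fun j hj => ?_) k
    hk).trans (mul_le_of_le_one_right (by positivity) hρ)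
  · rw [ha1, norm_div, Complex.norm_real,
      Real.norm_of_nonneg (Gamma_pos_of_pos (by linarith)).le]
    simpa using h1
  · have hA := mul_le_mul_of_nonneg_left (rpow_mul_Gamma_div_le hα hα2 hj) (norm_nonneg m)
    have hB := mul_le_mul_of_nonneg_left (sum_mul_Gamma_div_le hα hα2 hj)
      (mul_nonneg (norm_nonneg l) hC)
    unfold riccatiRate
    linarith

theorem rpow_tau_eq {α D : ℝ} (hα : 0 < α) (hD : 0 < D) :
    ((2 : ℝ) ^ (1 / α - max (1 / α - 2) 0) * α / D ^ (1 / α)) ^ α =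
      2 ^ (1 - max (1 - 2 * α) 0) * α ^ α / D := by
  rw [div_rpow (by positivity) (by positivity), mul_rpow (by positivity) hα.le,
    ← rpow_mul zero_le_two, ← rpow_mul hD.le, sub_mul, max_mul_of_nonneg _ _ hα.le,
    sub_mul, one_div_mul_cancel hα.ne', zero_mul, rpow_one, mul_comm 2 α]

theorem riccatiRate_mul_eq_one {α cα L M N D s : ℝ} (hα : 0 < α)
    (hc : cα = (2:ℝ) ^ (2 - max (1 - 2*α) 0 - 2 * max (α - 1) 0) * α ^ (α - 1) *
      Beta (min α 1) (min α 1))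
    (hdisc : 0 ≤ M ^ 2 + cα * L * N / Gamma α)
    (hD : D = M + √(M ^ 2 + cα * L * N / Gamma α)) (hD0 : 0 < D)
    (hs : s = 2 ^ (1 - max (1 - 2 * α) 0) * α ^ α / D) :
    riccatiRate α L M (N / Gamma (α + 1) * s) * s = 1 := by
  have hΓ : 0 < Gamma α := Gamma_pos_of_pos hα
  have hD2 : Gamma α * D ^ 2 = Gamma α * (2 * M * D) + cα * L * N := by
    have : D ^ 2 = 2 * M * D + cα * L * N / Gamma α := by
      rw [hD]; nlinarith [sq_sqrt hdisc]
    rw [this, mul_add, mul_div_cancel₀ _ hΓ.ne']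
  have hKE : 2 ^ max (1 - 2 * α) 0 * α ^ (-α) * (2 ^ (1 - max (1 - 2 * α) 0) * α ^ α) =
      (2 : ℝ) := by
    rw [mul_mul_mul_comm, ← rpow_add two_pos, ← rpow_add hα, add_sub_cancel, neg_add_cancel,
      rpow_one, rpow_zero, mul_one]
  have hEc : 2 * (2 ^ (1 - max (1 - 2 * α) 0) * α ^ α) * 2 ^ (-(2 * max (α - 1) 0)) *
      Beta (min α 1) (min α 1) = α * cα := by
    rw [hc, show α ^ α = α * α ^ (α - 1) by rw [← rpow_one_add' hα.le (by linarith),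
      add_sub_cancel], show 2 - max (1 - 2 * α) 0 - 2 * max (α - 1) 0 =
      1 + (1 - max (1 - 2 * α) 0) + -(2 * max (α - 1) 0) by ring, rpow_add two_pos,
      rpow_add two_pos, rpow_one]
    ring
  rw [hs, riccatiRate, Gamma_add_one hα.ne']
  field_simp
  linear_combination (L * N * (2 ^ (1 - max (1 - 2 * α) 0) * α ^ α) *
    2 ^ (-(2 * max (α - 1) 0)) * Beta (min α 1) (min α 1) + α * Gamma α * D * M) * hKE +
    L * N * hEc - α * hD2

theorem stmt_0 (α : ℝ) (hα : 0 < α) (hα2 : α ≤ 2)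
    (lam mu nu : ℂ) (hlam : lam ≠ 0) (hnu : nu ≠ 0)
    (a : ℕ → ℂ) (ha : IsRiccatiSeq α lam mu nu a)
    (cα τ : ℝ)
    (hc : cα = (2:ℝ) ^ (2 - max (1 - 2*α) 0 - 2 * max (α - 1) 0) * α ^ (α - 1) *
      Beta (min α 1) (min α 1))
    (hτ : τ = (2:ℝ) ^ (1/α - max (1/α - 2) 0) * α /
      (‖mu‖ + Real.sqrt (‖mu‖^2 + cα * ‖lam‖ * ‖nu‖ / Real.Gamma α)) ^ (1/α)) :
    0 < τ ∧ ENNReal.ofReal τ ≤ radius α a ∧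
      ∀ t : ℝ, 0 ≤ t → t < τ → Summable fun k : ℕ => ‖a k‖ * t ^ (α * (k:ℝ)) := by
  have hB := Beta_pos (lt_min hα one_pos) (lt_min hα one_pos)
  have hΓ := Gamma_pos_of_pos hα
  have hcα : 0 < cα := hc ▸ by positivity
  have hdisc : 0 < ‖mu‖ ^ 2 + cα * ‖lam‖ * ‖nu‖ / Gamma α := by
    have := norm_pos_iff.2 hlam
    have := norm_pos_iff.2 hnu
    positivity
  set D := ‖mu‖ + √(‖mu‖ ^ 2 + cα * ‖lam‖ * ‖nu‖ / Gamma α) with hD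
  have hD0 : 0 < D := add_pos_of_nonneg_of_pos (norm_nonneg _) (sqrt_pos.2 hdisc)
  have hτ0 : 0 < τ := hτ ▸ by positivity
  set C := ‖nu‖ / Gamma (α + 1) * τ ^ α
  have hroot : riccatiRate α ‖lam‖ ‖mu‖ C * τ ^ α = 1 :=
    riccatiRate_mul_eq_one hα hc hdisc.le hD hD0 (hτ ▸ rpow_tau_eq hα hD0)
  have hw : 0 < riccatiRate α ‖lam‖ ‖mu‖ C :=
    (riccatiRate_nonneg hα (norm_nonneg _) (norm_nonneg _) (by positivity)).lt_of_ne
      fun h => by simp [← h] at hroot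
  have hC : C * riccatiRate α ‖lam‖ ‖mu‖ C = ‖nu‖ / Gamma (α + 1) := by
    rw [show C * _ = ‖nu‖ / Gamma (α + 1) * (riccatiRate α ‖lam‖ ‖mu‖ C * τ ^ α) by
      simp only [C]; ring, hroot, mul_one]
  have hbound := ha.norm_le hα hα2 (C := C) (by positivity) hC.ge
  have hsum : ∀ t : ℝ, 0 ≤ t → t < τ → Summable fun k : ℕ => ‖a k‖ * t ^ (α * (k:ℝ)) :=
    fun t ht htτ => summable_norm_mul_rpow_of_le_geometric hw.le ht hbound
      (hroot ▸ mul_lt_mul_of_pos_left (rpow_lt_rpow ht htτ hα) hw)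
  exact ⟨hτ0, ofReal_le_radius hsum, hsum⟩
end

section
/- Let α ∈ (0,2] and let λ > 0, ν > 0 and μ ≥ 0 be real numbers. Then the convergence radii satisfy R(λ,μ,ν) ≤ R(λ,0,ν) ≤ C_α · (Γ(α+1)/(λν))^{1/(2α)}, where C_α = (3·5^{α−1})^{1/(2α)} · √α if α ∈ (0,1], and C_α = √(2α) / (B(α,α) − 2^{1−2α}) if α ∈ (1,2]. -/
open MeasureTheory Finset

/-!
Term-by-term comparison of the recurrences gives `‖a_k(λ,μ,ν)‖ ≥ ‖a_k(λ,0,ν)‖`, so only the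
case `μ = 0` needs work. There every `a_k` is a nonnegative real, and a lower bound
`‖a_{2m+1}‖ ≥ A q^m` forces `R ≤ q^{-1/(2α)}`.

The lower bound is proved by induction on `m`, keeping only the odd-odd products of the
convolution: with a weight `w` and `q = λ a₁ c`, the bound `‖a_{2m+1}‖ ≥ a₁ q^m w_m` propagates as
soon as `c w_{m+1} ≤ Γ(2α(m+1)+1)/Γ(2α(m+1)+α+1) · ∑_{i ≤ m} w_i w_{m-i}`. Log-convexity of `Γ`
bounds the Gamma ratio below by `(2α(m+1)+1)^{-α}` when `α ≤ 1` and by `(2α(m+1)+2)^{-α}` when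
`1 ≤ α ≤ 2`. For `α ≤ 1` the weights `1, 2α/3, 2α/3, …` and `c = 5/(3(5α)^α)` work by Bernoulli's
inequality. For `1 ≤ α ≤ 2` the weights `(m+1)^{α-1}` and `c = B(α,α) 2^{1-2α}/(2α)^α` work,
because `∑_{i ≤ m} (i+1)^{α-1}(m+1-i)^{α-1}` dominates
`∫₀^{m+1} x^{α-1}(m+1-x)^{α-1} dx = (m+1)^{2α-1} B(α,α)`.
-/

namespace Real

theorem Gamma_add_le_mul_rpow {x s : ℝ} (hx : 0 < x) (hs0 : 0 ≤ s) (hs1 : s ≤ 1) :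
    Gamma (x + s) ≤ Gamma x * x ^ s := by
  have hΓ := Gamma_pos_of_pos hx
  rcases hs0.eq_or_lt with rfl | hs0
  · simp
  rcases hs1.eq_or_lt with rfl | hs1
  · rw [Gamma_add_one hx.ne', rpow_one, mul_comm]
  calc Gamma (x + s) = Gamma ((1 - s) * x + s * (x + 1)) := by ring_nf
    _ ≤ Gamma x ^ (1 - s) * Gamma (x + 1) ^ s :=
      Gamma_mul_add_mul_le_rpow_Gamma_mul_rpow_Gamma hx (by linarith) (by linarith) hs0
        (by ring)
    _ = Gamma x * x ^ s := by
      rw [Gamma_add_one hx.ne', mul_rpow hx.le hΓ.le, ← mul_assoc, mul_comm _ (x ^ s),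
        mul_assoc, ← rpow_add hΓ]
      ring_nf
      rw [rpow_one, mul_comm]

end Real

noncomputable def riccatiFactor (α : ℝ) (k : ℕ) : ℝ :=
  Real.Gamma (α * k + 1) / Real.Gamma (α * k + α + 1)

lemma riccatiFactor_pos {α : ℝ} (hα : 0 ≤ α) (k : ℕ) : 0 < riccatiFactor α k :=
  div_pos (Real.Gamma_pos_of_pos (by positivity)) (Real.Gamma_pos_of_pos (by positivity))

lemma inv_rpow_le_riccatiFactor {α : ℝ} (hα0 : 0 < α) (hα1 : α ≤ 1) (k : ℕ) :
    ((α * k + 1) ^ α)⁻¹ ≤ riccatiFactor α k := by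
  have hx : 0 < α * k + 1 := by positivity
  rw [riccatiFactor, inv_eq_one_div, div_le_div_iff₀ (by positivity)
    (Real.Gamma_pos_of_pos (by positivity)), one_mul, add_right_comm]
  exact Real.Gamma_add_le_mul_rpow hx hα0.le hα1

lemma inv_rpow_le_riccatiFactor_of_one_le {α : ℝ} (hα1 : 1 ≤ α) (hα2 : α ≤ 2) (k : ℕ) :
    ((α * k + 2) ^ α)⁻¹ ≤ riccatiFactor α k := by
  have hx : 0 < α * k + 1 := by positivity
  rw [riccatiFactor, inv_eq_one_div, div_le_div_iff₀ (by positivity)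
    (Real.Gamma_pos_of_pos (by positivity)), one_mul]
  calc Real.Gamma (α * k + α + 1) = Real.Gamma ((α * k + 2) + (α - 1)) := by ring_nf
    _ ≤ Real.Gamma (α * k + 2) * (α * k + 2) ^ (α - 1) :=
      Real.Gamma_add_le_mul_rpow (by positivity) (by linarith) (by linarith)
    _ = (α * k + 1) * (α * k + 2) ^ (α - 1) * Real.Gamma (α * k + 1) := by
      rw [show α * k + 2 = (α * k + 1) + 1 by ring, Real.Gamma_add_one hx.ne']; ring
    _ ≤ (α * k + 2) * (α * k + 2) ^ (α - 1) * Real.Gamma (α * k + 1) := by gcongr; linarith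
    _ = _ := by rw [← Real.rpow_one_add' (by positivity) (by linarith)]; ring_nf

namespace IsRiccatiSeq

open scoped ComplexOrder

variable {α l m n : ℝ} {a : ℕ → ℂ}

lemma nonneg (ha : IsRiccatiSeq α l m n a) (hα : 0 ≤ α) (hl : 0 ≤ l) (hm : 0 ≤ m)
    (hn : 0 ≤ n) (k : ℕ) : 0 ≤ a k := by
  induction k using Nat.strong_induction_on with
  | _ k ih =>
    match k with
    | 0 => rw [ha.1]
    | 1 =>
      rw [ha.2.1, ← Complex.ofReal_div]
      exact Complex.zero_le_real.2 (div_nonneg hn (Real.Gamma_pos_of_pos (by linarith)).le)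
    | k + 2 =>
      rw [ha.2.2 (k + 1) (by omega)]
      refine mul_nonneg (add_nonneg (mul_nonneg (Complex.zero_le_real.2 hl)
        (sum_nonneg fun j hj => mul_nonneg (ih j ?_) (ih _ (by omega))))
        (mul_nonneg (Complex.zero_le_real.2 hm) (ih _ (by omega))))
        (Complex.zero_le_real.2 (riccatiFactor_pos hα _).le)
      exact (mem_Ico.1 hj).2.trans (by omega)

lemma norm_one (ha : IsRiccatiSeq α l m n a) (hα : 0 ≤ α) (hn : 0 ≤ n) :
    ‖a 1‖ = n / Real.Gamma (α + 1) := by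
  rw [ha.2.1, ← Complex.ofReal_div, Complex.norm_of_nonneg
    (div_nonneg hn (Real.Gamma_pos_of_pos (by linarith)).le)]

lemma norm_succ (ha : IsRiccatiSeq α l m n a) (hα : 0 ≤ α) (hl : 0 ≤ l) (hm : 0 ≤ m)
    (hn : 0 ≤ n) {k : ℕ} (hk : 1 ≤ k) :
    ‖a (k + 1)‖ =
      (l * ∑ j ∈ Ico 1 k, ‖a j‖ * ‖a (k - j)‖ + m * ‖a k‖) * riccatiFactor α k := by
  have hcoe (i : ℕ) : a i = ‖a i‖ := Complex.eq_coe_norm_of_nonneg (ha.nonneg hα hl hm hn i)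
  apply Complex.ofReal_injective
  rw [← hcoe, ha.2.2 k hk, riccatiFactor]
  push_cast
  rw [← hcoe k]
  congr 3
  exact sum_congr rfl fun j _ => by rw [← hcoe, ← hcoe]

lemma norm_le_norm_of_le {m' : ℝ} {b : ℕ → ℂ} (ha : IsRiccatiSeq α l m n a)
    (hb : IsRiccatiSeq α l m' n b) (hα : 0 ≤ α) (hl : 0 ≤ l) (hm : 0 ≤ m) (hmm' : m ≤ m')
    (hn : 0 ≤ n) (k : ℕ) : ‖a k‖ ≤ ‖b k‖ := by
  induction k using Nat.strong_induction_on with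
  | _ k ih =>
    match k with
    | 0 => rw [ha.1, hb.1]
    | 1 => rw [ha.norm_one hα hn, hb.norm_one hα hn]
    | k + 2 =>
      rw [ha.norm_succ hα hl hm hn (by omega), hb.norm_succ hα hl (hm.trans hmm') hn (by omega)]
      have hconv : ∑ j ∈ Ico 1 (k + 1), ‖a j‖ * ‖a (k + 1 - j)‖ ≤
          ∑ j ∈ Ico 1 (k + 1), ‖b j‖ * ‖b (k + 1 - j)‖ :=
        sum_le_sum fun j hj => mul_le_mul (ih j ((mem_Ico.1 hj).2.trans (by omega)))
          (ih _ (by omega)) (norm_nonneg _) (norm_nonneg _)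
      exact mul_le_mul_of_nonneg_right (add_le_add (mul_le_mul_of_nonneg_left hconv hl)
        (mul_le_mul hmm' (ih _ (by omega)) (norm_nonneg _) (hm.trans hmm')))
        (riccatiFactor_pos hα _).le

end IsRiccatiSeq

lemma radius_anti {α : ℝ} {a b : ℕ → ℂ} (h : ∀ k, ‖b k‖ ≤ ‖a k‖) :
    radius α a ≤ radius α b :=
  iSup₂_mono' fun t ht => ⟨t, ht.of_nonneg_of_le (fun k => by positivity)
    (fun k => mul_le_mul_of_nonneg_right (h k) (by positivity)), le_rfl⟩

lemma rpow_le_inv_of_summable {α A q s : ℝ} {a : ℕ → ℂ} (hα : 0 < α) (hA : 0 < A) (hq : 0 < q)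
    (hs : 0 ≤ s) (h : ∀ m : ℕ, A * q ^ m ≤ ‖a (2 * m + 1)‖)
    (hsum : Summable fun k : ℕ => ‖a k‖ * s ^ (α * k)) : s ^ (2 * α) ≤ q⁻¹ := by
  by_contra! hlt
  have hgrow : 1 ≤ q * s ^ (2 * α) := ((inv_lt_iff_one_lt_mul₀' hq).1 hlt).le
  have hs0 : 0 < s := by
    refine hs.lt_of_ne fun h0 => ?_
    rw [← h0, Real.zero_rpow (by positivity)] at hgrow
    linarith
  have hterm (m : ℕ) : A * s ^ α ≤ ‖a (2 * m + 1)‖ * s ^ (α * ((2 * m + 1 : ℕ) : ℝ)) :=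
    calc A * s ^ α ≤ A * s ^ α * (q * s ^ (2 * α)) ^ m :=
          le_mul_of_one_le_right (by positivity) (one_le_pow₀ hgrow)
      _ = A * q ^ m * (s ^ α * (s ^ (2 * α)) ^ m) := by ring
      _ ≤ ‖a (2 * m + 1)‖ * (s ^ α * (s ^ (2 * α)) ^ m) := by gcongr; exact h m
      _ = ‖a (2 * m + 1)‖ * s ^ (α * ((2 * m + 1 : ℕ) : ℝ)) := by
        rw [← Real.rpow_natCast, ← Real.rpow_mul hs, ← Real.rpow_add hs0]; push_cast; ring_nf
  have hlim : Filter.Tendsto (fun m : ℕ => ‖a (2 * m + 1)‖ * s ^ (α * ((2 * m + 1 : ℕ) : ℝ)))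
      Filter.atTop (nhds 0) :=
    hsum.tendsto_atTop_zero.comp <|
      Filter.tendsto_atTop_mono (fun m => show m ≤ 2 * m + 1 by omega) Filter.tendsto_id
  have := ge_of_tendsto hlim (Filter.Eventually.of_forall hterm)
  have : 0 < A * s ^ α := by positivity
  linarith

lemma radius_le_of_pow_le_norm {α A q : ℝ} {a : ℕ → ℂ} (hα : 0 < α) (hA : 0 < A) (hq : 0 < q)
    (h : ∀ m : ℕ, A * q ^ m ≤ ‖a (2 * m + 1)‖) :
    radius α a ≤ ENNReal.ofReal (q⁻¹ ^ (2 * α)⁻¹) := by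
  refine iSup₂_le fun t ht => ?_
  rw [← ENNReal.ofReal_coe_nnreal]
  exact ENNReal.ofReal_le_ofReal <|
    (Real.le_rpow_inv_iff_of_pos t.2 (inv_nonneg.2 hq.le) (by positivity)).2 <|
    rpow_le_inv_of_summable hα hA hq t.2 h ht

lemma sum_range_odd_mul_le_sum_Ico {r : ℕ → ℝ} (hr : ∀ k, 0 ≤ r k) (m : ℕ) :
    ∑ i ∈ range (m + 1), r (2 * i + 1) * r (2 * (m - i) + 1) ≤
      ∑ j ∈ Ico 1 (2 * m + 2), r j * r (2 * m + 2 - j) := by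
  have hodd : ∑ i ∈ range (m + 1), r (2 * i + 1) * r (2 * (m - i) + 1) =
      ∑ j ∈ (range (m + 1)).image (2 * · + 1), r j * r (2 * m + 2 - j) := by
    rw [sum_image fun x _ y _ h => by omega]
    exact sum_congr rfl fun i hi => by rw [mem_range] at hi; congr 2; omega
  rw [hodd]
  refine sum_le_sum_of_subset_of_nonneg ?_ fun j _ _ => mul_nonneg (hr _) (hr _)
  intro j hj
  simp only [mem_image, mem_range] at hj
  obtain ⟨i, hi, rfl⟩ := hj
  simp only [mem_Ico]
  omega

lemma mul_pow_mul_weight_le {l b c : ℝ} {g w r : ℕ → ℝ} (hl : 0 ≤ l) (hb : 0 ≤ b) (hc : 0 ≤ c)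
    (hg : ∀ k, 0 ≤ g k) (hw : ∀ m, 0 ≤ w m) (hr : ∀ k, 0 ≤ r k) (hr1 : b * w 0 ≤ r 1)
    (hrec : ∀ k, 1 ≤ k → l * (∑ j ∈ Ico 1 k, r j * r (k - j)) * g k ≤ r (k + 1))
    (hweight : ∀ m, c * w (m + 1) ≤ g (2 * m + 2) * ∑ i ∈ range (m + 1), w i * w (m - i))
    (m : ℕ) : b * (l * b * c) ^ m * w m ≤ r (2 * m + 1) := by
  induction m using Nat.strong_induction_on with
  | _ m ih =>
    match m with
    | 0 => simpa using hr1
    | m + 1 =>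
      have hq : 0 ≤ l * b * c := by positivity
      set q := l * b * c
      have hsplit (i : ℕ) (hi : i ∈ range (m + 1)) :
          b * q ^ m * b * (w i * w (m - i)) =
            (b * q ^ i * w i) * (b * q ^ (m - i) * w (m - i)) := by
        rw [← Nat.add_sub_of_le (mem_range_succ_iff.1 hi), pow_add, Nat.add_sub_cancel_left]
        ring
      have hpair : ∑ i ∈ range (m + 1), (b * q ^ i * w i) * (b * q ^ (m - i) * w (m - i)) ≤
          ∑ i ∈ range (m + 1), r (2 * i + 1) * r (2 * (m - i) + 1) :=
        sum_le_sum fun i hi => by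
          have hi := mem_range_succ_iff.1 hi
          exact mul_le_mul (ih i (by omega)) (ih _ (by omega))
            (mul_nonneg (mul_nonneg hb (pow_nonneg hq _)) (hw _)) (hr _)
      calc b * q ^ (m + 1) * w (m + 1) = b * q ^ m * l * b * (c * w (m + 1)) := by ring
        _ ≤ b * q ^ m * l * b * (g (2 * m + 2) * ∑ i ∈ range (m + 1), w i * w (m - i)) :=
          mul_le_mul_of_nonneg_left (hweight m) (by positivity)
        _ = l * (∑ i ∈ range (m + 1), (b * q ^ i * w i) * (b * q ^ (m - i) * w (m - i))) *
            g (2 * m + 2) := by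
          rw [← sum_congr rfl hsplit, ← mul_sum]; ring
        _ ≤ l * (∑ j ∈ Ico 1 (2 * m + 2), r j * r (2 * m + 2 - j)) * g (2 * m + 2) :=
          mul_le_mul_of_nonneg_right (mul_le_mul_of_nonneg_left
            (hpair.trans (sum_range_odd_mul_le_sum_Ico hr m)) hl) (hg _)
        _ ≤ r (2 * (m + 1) + 1) := hrec _ (by omega)

lemma rpow_rpow_inv_two_mul {x α : ℝ} (hx : 0 ≤ x) (hα : 0 < α) :
    (x ^ α) ^ (2 * α)⁻¹ = √x := by
  rw [← Real.rpow_mul hx, Real.sqrt_eq_rpow]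
  field_simp

lemma mul_rpow_le_of_le_one {α : ℝ} (hα0 : 0 < α) (hα1 : α ≤ 1) (n : ℕ) :
    5 / (3 * (5 * α) ^ α) * (α * (2 * n) + 1) ^ α ≤ 2 + (2 * n - 5) * α / 3 := by
  have hy : 0 ≤ (α * (2 * n) + 1) / (5 * α) := by positivity
  have hbern := rpow_one_add_le_one_add_mul_self
    (s := (α * (2 * n) + 1) / (5 * α) - 1) (by linarith) hα0.le hα1
  rw [add_sub_cancel, Real.div_rpow (by positivity) (by positivity)] at hbern
  have e : α * ((α * (2 * n) + 1) / (5 * α) - 1) = (α * (2 * n) + 1 - 5 * α) / 5 := by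
    field_simp
  rw [e] at hbern
  calc 5 / (3 * (5 * α) ^ α) * (α * (2 * n) + 1) ^ α
      = 5 / 3 * ((α * (2 * n) + 1) ^ α / (5 * α) ^ α) := by field_simp
    _ ≤ 5 / 3 * (1 + (α * (2 * n) + 1 - 5 * α) / 5) := by gcongr
    _ = 2 + (2 * n - 5) * α / 3 := by ring

def oneThen (κ : ℝ) (i : ℕ) : ℝ := if i = 0 then 1 else κ

lemma sum_range_oneThen_mul (κ : ℝ) (m : ℕ) :
    ∑ i ∈ range (m + 2), oneThen κ i * oneThen κ (m + 1 - i) = 2 * κ + m * κ ^ 2 := by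
  have hmid (i : ℕ) (hi : i ∈ range m) :
      oneThen κ (i + 1) * oneThen κ (m + 1 - (i + 1)) = κ ^ 2 := by
    have : m - i ≠ 0 := by rw [mem_range] at hi; omega
    simp [oneThen, this, sq]
  rw [sum_range_succ, sum_range_succ', sum_congr rfl hmid]
  simp [oneThen]
  ring

lemma riccatiFactor_weight_of_le_one {α : ℝ} (hα0 : 0 < α) (hα1 : α ≤ 1) (m : ℕ) :
    5 / (3 * (5 * α) ^ α) * oneThen (2 * α / 3) (m + 1) ≤
      riccatiFactor α (2 * m + 2) *
        ∑ i ∈ range (m + 1), oneThen (2 * α / 3) i * oneThen (2 * α / 3) (m - i) := by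
  have hfac := inv_rpow_le_riccatiFactor hα0 hα1 (2 * m + 2)
  have hbound := mul_rpow_le_of_le_one hα0 hα1 (m + 1)
  push_cast at hfac hbound
  rw [show (2 : ℝ) * m + 2 = 2 * (m + 1) by ring] at hfac
  set x := (α * (2 * (m + 1)) + 1) ^ α
  set S := ∑ i ∈ range (m + 1), oneThen (2 * α / 3) i * oneThen (2 * α / 3) (m - i)
  have hx : 0 < x := by positivity
  have hS : 2 * α / 3 * (2 + (2 * (m + 1) - 5) * α / 3) ≤ S := by
    rcases m with _ | m
    · simp [S, oneThen]; nlinarith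
    · simp only [S, sum_range_oneThen_mul]
      push_cast
      nlinarith
  calc 5 / (3 * (5 * α) ^ α) * oneThen (2 * α / 3) (m + 1)
      ≤ 5 / (3 * (5 * α) ^ α) * (2 * α / 3) * (x * riccatiFactor α (2 * m + 2)) :=
        le_mul_of_one_le_right (by simp [oneThen]; positivity) ((inv_le_iff_one_le_mul₀' hx).1 hfac)
    _ = 2 * α / 3 * (5 / (3 * (5 * α) ^ α) * x) * riccatiFactor α (2 * m + 2) := by ring
    _ ≤ S * riccatiFactor α (2 * m + 2) := by
        gcongr
        · exact (riccatiFactor_pos hα0.le _).le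
        · exact (mul_le_mul_of_nonneg_left hbound (by positivity)).trans hS
    _ = _ := mul_comm _ _

lemma radius_le_of_le_one {α l n : ℝ} {a : ℕ → ℂ} (hα0 : 0 < α) (hα1 : α ≤ 1) (hl : 0 < l)
    (hn : 0 < n) (ha : IsRiccatiSeq α l 0 n a) :
    radius α a ≤ ENNReal.ofReal ((3 * (5:ℝ) ^ (α - 1)) ^ (1/(2*α)) * Real.sqrt α *
      (Real.Gamma (α + 1) / (l * n)) ^ (1/(2*α))) := by
  set b := n / Real.Gamma (α + 1)
  set c := 5 / (3 * (5 * α) ^ α)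
  have hb : 0 < b := by positivity
  have hc : 0 < c := by positivity
  have hlow := mul_pow_mul_weight_le (g := riccatiFactor α) (w := oneThen (2 * α / 3))
    (r := fun k => ‖a k‖) hl.le hb.le hc.le (fun k => (riccatiFactor_pos hα0.le k).le)
    (fun i => by unfold oneThen; split_ifs <;> positivity) (fun k => norm_nonneg _)
    (by simp [oneThen, b, ha.norm_one hα0.le hn.le])
    (fun k hk => by simp [ha.norm_succ hα0.le hl.le le_rfl hn.le hk])
    (riccatiFactor_weight_of_le_one hα0 hα1)
  have hlow' (m : ℕ) : 2 * α / 3 * b * (l * b * c) ^ m ≤ ‖a (2 * m + 1)‖ := by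
    calc 2 * α / 3 * b * (l * b * c) ^ m = b * (l * b * c) ^ m * (2 * α / 3) := by ring
      _ ≤ b * (l * b * c) ^ m * oneThen (2 * α / 3) m :=
        mul_le_mul_of_nonneg_left (by unfold oneThen; split_ifs <;> linarith) (by positivity)
      _ ≤ ‖a (2 * m + 1)‖ := hlow m
  refine (radius_le_of_pow_le_norm hα0 (by positivity) (by positivity) hlow').trans_eq ?_
  have e : (l * b * c)⁻¹ = 3 * (5:ℝ) ^ (α - 1) * α ^ α * (Real.Gamma (α + 1) / (l * n)) := by
    simp only [b, c]
    rw [Real.mul_rpow (by norm_num) hα0.le, Real.rpow_sub_one (by norm_num)]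
    field_simp
  rw [e, Real.mul_rpow (by positivity) (by positivity),
    Real.mul_rpow (by positivity) (by positivity), rpow_rpow_inv_two_mul hα0.le hα0, one_div]

lemma Beta_eq_intervalIntegral (a b : ℝ) :
    Beta a b = ∫ u in (0:ℝ)..1, u ^ (a - 1) * (1 - u) ^ (b - 1) := by
  rw [intervalIntegral.integral_of_le zero_le_one, integral_Ioc_eq_integral_Ioo, Beta]

lemma intervalIntegral_rpow_mul_sub_rpow {M : ℝ} (hM : 0 < M) (a b : ℝ) :
    ∫ x in (0:ℝ)..M, x ^ (a - 1) * (M - x) ^ (b - 1) = M ^ (a + b - 1) * Beta a b := by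
  have hscale := intervalIntegral.integral_comp_mul_left
    (fun x => x ^ (a - 1) * (M - x) ^ (b - 1)) (a := 0) (b := 1) hM.ne'
  rw [mul_zero, mul_one, smul_eq_mul, eq_inv_mul_iff_mul_eq₀ hM.ne'] at hscale
  rw [← hscale, Beta_eq_intervalIntegral, ← intervalIntegral.integral_const_mul,
    ← intervalIntegral.integral_const_mul]
  refine intervalIntegral.integral_congr fun x hx => ?_
  rw [Set.uIcc_of_le zero_le_one] at hx
  rw [show M - M * x = M * (1 - x) by ring, Real.mul_rpow hM.le hx.1,
    Real.mul_rpow hM.le (by linarith [hx.2]), show a + b - 1 = 1 + (a - 1) + (b - 1) by ring,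
    Real.rpow_add hM, Real.rpow_add hM, Real.rpow_one]
  ring

lemma continuous_rpow_mul_sub_rpow {α : ℝ} (hα : 1 ≤ α) (M : ℝ) :
    Continuous fun u : ℝ => u ^ (α - 1) * (M - u) ^ (α - 1) :=
  (continuous_id.rpow_const fun _ => Or.inr (by linarith)).mul
    ((continuous_const.sub continuous_id).rpow_const fun _ => Or.inr (by linarith))

lemma Beta_le {α : ℝ} (hα : 1 ≤ α) : Beta α α ≤ 2 ^ (2 - 2 * α) := by
  have hpt : ∀ u ∈ Set.Icc (0:ℝ) 1, u ^ (α - 1) * (1 - u) ^ (α - 1) ≤ (1 / 4) ^ (α - 1) := by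
    intro u hu
    rw [← Real.mul_rpow hu.1 (by linarith [hu.2])]
    exact Real.rpow_le_rpow (mul_nonneg hu.1 (by linarith [hu.2]))
      (by nlinarith [sq_nonneg (u - 1 / 2)]) (by linarith)
  have := intervalIntegral.integral_mono_on zero_le_one
    ((continuous_rpow_mul_sub_rpow hα 1).intervalIntegrable _ _)
    (intervalIntegrable_const (μ := volume)) hpt
  rw [← Beta_eq_intervalIntegral, intervalIntegral.integral_const, sub_zero, one_smul] at this
  refine this.trans_eq ?_
  rw [one_div, Real.inv_rpow (by norm_num), ← Real.rpow_neg (by norm_num),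
    show (4:ℝ) = 2 ^ (2:ℝ) by norm_num, ← Real.rpow_mul (by norm_num)]
  ring_nf

lemma Beta_ge {α : ℝ} (hα1 : 1 ≤ α) (hα2 : α ≤ 2) : 4 / 3 * 2 ^ (1 - 2 * α) ≤ Beta α α := by
  have hpt : ∀ u ∈ Set.Icc (0:ℝ) 1,
      (1 / 4) ^ (α - 2) * (u * (1 - u)) ≤ u ^ (α - 1) * (1 - u) ^ (α - 1) := by
    intro u hu
    have ht : 0 ≤ u * (1 - u) := mul_nonneg hu.1 (by linarith [hu.2])
    rw [← Real.mul_rpow hu.1 (by linarith [hu.2])]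
    rcases ht.eq_or_lt with ht0 | ht0
    · rw [← ht0, mul_zero]; positivity
    rw [show α - 1 = (α - 2) + 1 by ring, Real.rpow_add ht0, Real.rpow_one]
    exact mul_le_mul_of_nonneg_right (Real.rpow_le_rpow_of_nonpos ht0
      (by nlinarith [sq_nonneg (u - 1 / 2)]) (by linarith)) ht
  have := intervalIntegral.integral_mono_on zero_le_one
    (Continuous.intervalIntegrable (μ := volume)
      (by fun_prop : Continuous fun u : ℝ => (1 / 4 : ℝ) ^ (α - 2) * (u * (1 - u))) _ _)
    ((continuous_rpow_mul_sub_rpow hα1 1).intervalIntegrable _ _) hpt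
  rw [← Beta_eq_intervalIntegral, intervalIntegral.integral_const_mul] at this
  refine le_trans (le_of_eq ?_) this
  have hint : ∫ u in (0:ℝ)..1, u * (1 - u) = 1 / 6 := by
    have : (fun u : ℝ => u * (1 - u)) = fun u => u - u ^ 2 := funext fun u => by ring
    rw [this, intervalIntegral.integral_sub intervalIntegral.intervalIntegrable_id
      (intervalIntegral.intervalIntegrable_pow 2), integral_id, integral_pow]
    norm_num
  rw [hint, one_div, Real.inv_rpow (by norm_num), ← Real.rpow_neg (by norm_num),
    show (4:ℝ) = 2 ^ (2:ℝ) by norm_num, ← Real.rpow_mul (by norm_num),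
    show (2:ℝ) * -(α - 2) = 2 + 1 + (1 - 2 * α) by ring, Real.rpow_add (by norm_num),
    Real.rpow_add (by norm_num)]
  norm_num
  ring

lemma Beta_mul_le_sum {α : ℝ} (hα : 1 ≤ α) (m : ℕ) :
    ((m : ℝ) + 1) ^ (2 * α - 1) * Beta α α ≤
      ∑ i ∈ range (m + 1), ((i : ℝ) + 1) ^ (α - 1) * (((m - i : ℕ) : ℝ) + 1) ^ (α - 1) := by
  set M : ℝ := (m : ℝ) + 1
  set f : ℝ → ℝ := fun x => x ^ (α - 1) * (M - x) ^ (α - 1)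
  have hf : Continuous f := continuous_rpow_mul_sub_rpow hα M
  have hpiece (i : ℕ) (hi : i ∈ range (m + 1)) :
      ∫ x in (i : ℝ)..((i + 1 : ℕ) : ℝ), f x ≤
        ((i : ℝ) + 1) ^ (α - 1) * (((m - i : ℕ) : ℝ) + 1) ^ (α - 1) := by
    have him := mem_range_succ_iff.1 hi
    have hi : (i : ℝ) + 1 ≤ M := by simp only [M]; exact_mod_cast Nat.succ_le_succ him
    rw [Nat.cast_sub him]
    have hmono : ∀ x ∈ Set.Icc (i : ℝ) ((i + 1 : ℕ) : ℝ),
        f x ≤ ((i : ℝ) + 1) ^ (α - 1) * (((m : ℝ) - i) + 1) ^ (α - 1) := by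
      intro x ⟨hx1, hx2⟩
      push_cast at hx2
      have hx0 : 0 ≤ x := (Nat.cast_nonneg i).trans hx1
      exact mul_le_mul (Real.rpow_le_rpow hx0 hx2 (by linarith))
        (Real.rpow_le_rpow (by linarith) (by simp only [M] at hi ⊢; linarith) (by linarith))
        (Real.rpow_nonneg (by simp only [M] at hi ⊢; linarith) _) (by positivity)
    have := intervalIntegral.integral_mono_on (by push_cast; linarith) (hf.intervalIntegrable _ _)
      (intervalIntegrable_const (μ := volume)) hmono
    rw [intervalIntegral.integral_const, smul_eq_mul, Nat.cast_succ, add_sub_cancel_left,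
      one_mul] at this
    rwa [Nat.cast_succ]
  calc ((m : ℝ) + 1) ^ (2 * α - 1) * Beta α α = ∫ x in (0 : ℝ)..M, f x := by
        rw [intervalIntegral_rpow_mul_sub_rpow (by positivity), two_mul]
    _ = ∑ i ∈ range (m + 1), ∫ x in (i : ℝ)..((i + 1 : ℕ) : ℝ), f x := by
        rw [intervalIntegral.sum_integral_adjacent_intervals fun k _ => hf.intervalIntegrable _ _]
        simp [M]
    _ ≤ _ := sum_le_sum hpiece

lemma two_rpow_mul_rpow_le {α x : ℝ} (hα : 1 ≤ α) (hx : 0 ≤ x) :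
    2 ^ (1 - 2 * α) * (x + 2) ^ (α - 1) * (x + 2) ^ α ≤ (x + 1) ^ (2 * α - 1) := by
  rw [mul_assoc, ← Real.rpow_add (by positivity), show 1 - 2 * α = -(α - 1 + α) by ring,
    Real.rpow_neg (by norm_num), ← div_eq_inv_mul, ← Real.div_rpow (by positivity) (by norm_num),
    show α - 1 + α = 2 * α - 1 by ring]
  exact Real.rpow_le_rpow (by positivity) (by linarith) (by linarith)

lemma riccatiFactor_weight_of_one_le {α : ℝ} (hα1 : 1 ≤ α) (hα2 : α ≤ 2) (m : ℕ) :
    Beta α α * 2 ^ (1 - 2 * α) / (2 * α) ^ α * (((m + 1 : ℕ) : ℝ) + 1) ^ (α - 1) ≤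
      riccatiFactor α (2 * m + 2) *
        ∑ i ∈ range (m + 1), ((i : ℝ) + 1) ^ (α - 1) * (((m - i : ℕ) : ℝ) + 1) ^ (α - 1) := by
  have hB : 0 ≤ Beta α α := le_trans (by positivity) (Beta_ge hα1 hα2)
  have hfac := inv_rpow_le_riccatiFactor_of_one_le hα1 hα2 (2 * m + 2)
  have hfac' : ((2 * α) ^ α * ((m : ℝ) + 2) ^ α)⁻¹ ≤ riccatiFactor α (2 * m + 2) := by
    refine le_trans ?_ hfac
    rw [← Real.mul_rpow (by positivity) (by positivity)]
    gcongr
    push_cast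
    nlinarith
  have hkey := two_rpow_mul_rpow_le hα1 (Nat.cast_nonneg m)
  push_cast
  calc Beta α α * 2 ^ (1 - 2 * α) / (2 * α) ^ α * ((m : ℝ) + 1 + 1) ^ (α - 1)
      = Beta α α / (2 * α) ^ α * ((2 ^ (1 - 2 * α) * ((m : ℝ) + 2) ^ (α - 1) * (m + 2) ^ α) /
          (m + 2) ^ α) := by
        field_simp
        ring_nf
    _ ≤ Beta α α / (2 * α) ^ α * (((m : ℝ) + 1) ^ (2 * α - 1) / (m + 2) ^ α) := by gcongr
    _ = ((m : ℝ) + 1) ^ (2 * α - 1) * Beta α α * ((2 * α) ^ α * ((m : ℝ) + 2) ^ α)⁻¹ := by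
        field_simp
    _ ≤ (∑ i ∈ range (m + 1), ((i : ℝ) + 1) ^ (α - 1) * (((m - i : ℕ) : ℝ) + 1) ^ (α - 1)) *
          riccatiFactor α (2 * m + 2) :=
        mul_le_mul (Beta_mul_le_sum hα1 m) hfac' (by positivity)
          (sum_nonneg fun i _ => by positivity)
    _ = _ := mul_comm _ _

lemma inv_mul_rpow_inv_le_inv_sub {B c p : ℝ} (hp : 2 ≤ p) (hcB : c < B) (hB : B ≤ 2 * c)
    (hc : c ≤ 1) : ((B * c)⁻¹) ^ p⁻¹ ≤ (B - c)⁻¹ := by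
  have hc0 : 0 < c := by linarith
  have hB0 : 0 < B := by linarith
  rw [Real.inv_rpow (by positivity)]
  refine inv_anti₀ (sub_pos.2 hcB) ((Real.le_rpow_inv_iff_of_pos (sub_nonneg.2 hcB.le)
    (by positivity) (by linarith)).2 ?_)
  calc (B - c) ^ p ≤ (B - c) ^ (2 : ℝ) :=
        Real.rpow_le_rpow_of_exponent_ge (sub_pos.2 hcB) (by linarith) hp
    _ ≤ B * c := by rw [Real.rpow_two]; nlinarith

lemma radius_le_of_one_le {α l n : ℝ} {a : ℕ → ℂ} (hα1 : 1 ≤ α) (hα2 : α ≤ 2) (hl : 0 < l)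
    (hn : 0 < n) (ha : IsRiccatiSeq α l 0 n a) :
    radius α a ≤ ENNReal.ofReal (Real.sqrt (2*α) / (Beta α α - (2:ℝ) ^ (1 - 2*α)) *
      (Real.Gamma (α + 1) / (l * n)) ^ (1/(2*α))) := by
  have hα0 : 0 < α := by linarith
  have hc' : (2:ℝ) ^ (1 - 2 * α) ≤ 1 :=
    Real.rpow_le_one_of_one_le_of_nonpos (by norm_num) (by linarith)
  have hc'0 : (0:ℝ) < 2 ^ (1 - 2 * α) := by positivity
  have hBlow : 2 ^ (1 - 2 * α) < Beta α α := by linarith [Beta_ge hα1 hα2]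
  have hB0 : 0 < Beta α α := hc'0.trans hBlow
  have hBup : Beta α α ≤ 2 * 2 ^ (1 - 2 * α) := by
    have := Beta_le hα1
    rwa [show 2 - 2 * α = 1 + (1 - 2 * α) by ring, Real.rpow_add (by norm_num),
      Real.rpow_one] at this
  set b := n / Real.Gamma (α + 1)
  set c := Beta α α * 2 ^ (1 - 2 * α) / (2 * α) ^ α
  have hb : 0 < b := by positivity
  have hc : 0 < c := by positivity
  have hlow := mul_pow_mul_weight_le (g := riccatiFactor α) (w := fun i => ((i : ℝ) + 1) ^ (α - 1))
    (r := fun k => ‖a k‖) hl.le hb.le hc.le (fun k => (riccatiFactor_pos hα0.le k).le)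
    (fun i => by positivity) (fun k => norm_nonneg _)
    (by simp [b, ha.norm_one hα0.le hn.le])
    (fun k hk => by simp [ha.norm_succ hα0.le hl.le le_rfl hn.le hk])
    (riccatiFactor_weight_of_one_le hα1 hα2)
  have hlow' (m : ℕ) : b * (l * b * c) ^ m ≤ ‖a (2 * m + 1)‖ :=
    le_trans (le_mul_of_one_le_right (by positivity)
      (Real.one_le_rpow (by linarith [(Nat.cast_nonneg m : (0:ℝ) ≤ m)]) (by linarith))) (hlow m)
  refine (radius_le_of_pow_le_norm hα0 hb (by positivity) hlow').trans
    (ENNReal.ofReal_le_ofReal ?_)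
  have e : (l * b * c)⁻¹ = (2 * α) ^ α * (Beta α α * 2 ^ (1 - 2 * α))⁻¹ *
      (Real.Gamma (α + 1) / (l * n)) := by
    simp only [b, c]
    field_simp
  rw [e, Real.mul_rpow (by positivity) (by positivity),
    Real.mul_rpow (by positivity) (by positivity), rpow_rpow_inv_two_mul (by positivity) hα0,
    one_div, div_eq_mul_inv (√(2 * α))]
  gcongr
  exact inv_mul_rpow_inv_le_inv_sub (p := 2 * α) (by linarith) hBlow hBup hc'

theorem stmt_2 (α : ℝ) (hα : 0 < α) (hα2 : α ≤ 2)
    (lam mu nu : ℝ) (hlam : 0 < lam) (hnu : 0 < nu) (hmu : 0 ≤ mu)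
    (a a0 : ℕ → ℂ)
    (ha : IsRiccatiSeq α (lam : ℂ) (mu : ℂ) (nu : ℂ) a)
    (ha0 : IsRiccatiSeq α (lam : ℂ) 0 (nu : ℂ) a0)
    (Cα : ℝ)
    (hCα : Cα = if α ≤ 1 then (3 * (5:ℝ) ^ (α - 1)) ^ (1/(2*α)) * Real.sqrt α
      else Real.sqrt (2*α) / (Beta α α - (2:ℝ) ^ (1 - 2*α))) :
    radius α a ≤ radius α a0 ∧
      radius α a0 ≤ ENNReal.ofReal (Cα * (Real.Gamma (α + 1) / (lam * nu)) ^ (1/(2*α))) := by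
  refine ⟨radius_anti (ha0.norm_le_norm_of_le ha hα.le hlam.le le_rfl hmu hnu.le), ?_⟩
  rw [hCα]
  split_ifs with hα1
  · exact radius_le_of_le_one hα hα1 hlam hnu ha0
  · exact radius_le_of_one_le (by linarith) hα2 hlam hnu ha0
end

section
/- Let α ∈ (0,2] and let λ, ν be complex numbers, and let (a_k)_{k≥0} be the sequence solving (A_{λ,0,ν}) (i.e. with μ = 0). Then a_{2k} = 0 for every k ≥ 1, and the sequence b_k := a_{2k−1} (k ≥ 1) satisfies b_1 = ν/Γ(α+1) and, for every k ≥ 1, b_{k+1} = λ · (Γ(2αk+1)/Γ((2k+1)α+1)) · Σ_{j=1}^{k} b_j b_{k+1−j}. -/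
open Finset

theorem stmt_4 (α : ℝ) (hα : 0 < α) (hα2 : α ≤ 2)
    (lam nu : ℂ)
    (a : ℕ → ℂ) (ha : IsRiccatiSeq α lam 0 nu a)
    (b : ℕ → ℂ) (hb : ∀ k : ℕ, 1 ≤ k → b k = a (2 * k - 1)) :
    (∀ k : ℕ, 1 ≤ k → a (2 * k) = 0) ∧
      b 1 = nu / (Real.Gamma (α + 1) : ℂ) ∧
      ∀ k : ℕ, 1 ≤ k →
        b (k + 1) = lam *
          ((Real.Gamma (2 * α * (k:ℝ) + 1) / Real.Gamma ((2 * (k:ℝ) + 1) * α + 1) : ℝ) : ℂ) *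
          ∑ j ∈ Finset.Icc 1 k, b j * b (k + 1 - j) := by
  obtain ⟨h0, h1, hrec⟩ := ha
  have heven : ∀ n : ℕ, a (2 * n) = 0 := by
    intro n
    induction n using Nat.strong_induction_on with
    | _ n ih =>
      match n with
      | 0 => simpa using h0
      | 1 => simpa using hrec 1 le_rfl
      | (m+2) =>
        have hk : 1 ≤ 2*m+3 := by omega
        have hr := hrec (2*m+3) hk
        have hz : ∀ j ∈ Finset.Ico 1 (2*m+3), a j * a (2*m+3 - j) = 0 := by
          intro j hj
          simp only [Finset.mem_Ico] at hj
          rcases Nat.even_or_odd j with ⟨t, ht⟩ | ⟨t, ht⟩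
          · have hj0 : a j = 0 := by
              have hjt : j = 2 * t := by omega
              rw [hjt]; exact ih t (by omega)
            simp [hj0]
          · have h2 : 2*m+3 - j = 2 * (m + 1 - t) := by omega
            rw [h2, ih (m+1-t) (by omega)]
            simp
        rw [Finset.sum_eq_zero hz] at hr
        have key : a (2*(m+2)) = 0 := by
          have h24 : 2*(m+2) = 2*m+3+1 := by omega
          rw [h24]; simpa using hr
        exact key
  refine ⟨fun k hk => heven k, ?_, ?_⟩
  · rw [hb 1 le_rfl]; simpa using h1
  · intro k hk
    have hr := hrec (2*k) (by omega)
    have hsum : ∑ j ∈ Finset.Ico 1 (2*k), a j * a (2*k - j)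
        = ∑ i ∈ Finset.Icc 1 k, b i * b (k + 1 - i) := by
      have hinj : Set.InjOn (fun i => 2*i-1) (Finset.Icc 1 k) := by
        intro x hx y hy h
        simp only [Finset.coe_Icc, Set.mem_Icc] at hx hy
        have h' : 2*x-1 = 2*y-1 := h
        omega
      have hsub : Finset.image (fun i => 2*i-1) (Finset.Icc 1 k) ⊆ Finset.Ico 1 (2*k) := by
        intro j hj
        simp only [Finset.mem_image, Finset.mem_Icc] at hj
        obtain ⟨i, hi, rfl⟩ := hj
        simp only [Finset.mem_Ico]
        omega
      rw [← Finset.sum_subset hsub ?_]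
      · rw [Finset.sum_image hinj]
        apply Finset.sum_congr rfl
        intro i hi
        simp only [Finset.mem_Icc] at hi
        rw [hb i (by omega), hb (k+1-i) (by omega)]
        congr 2
        omega
      · intro j hj hj'
        simp only [Finset.mem_Ico] at hj
        simp only [Finset.mem_image, Finset.mem_Icc] at hj'
        rcases Nat.even_or_odd j with ⟨t, ht⟩ | ⟨t, ht⟩
        · have hjt : j = 2 * t := by omega
          rw [hjt, heven t]; ring
        · exact absurd ⟨t+1, by omega, by omega⟩ hj'
    rw [hb (k+1) (by omega)]
    have h2k : 2*(k+1)-1 = 2*k+1 := by omega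
    rw [h2k, hr, hsum]
    have hg1 : α * ((2*k : ℕ) : ℝ) + 1 = 2 * α * (k:ℝ) + 1 := by push_cast; ring
    have hg2 : α * ((2*k : ℕ) : ℝ) + α + 1 = (2 * (k:ℝ) + 1) * α + 1 := by push_cast; ring
    rw [hg1, hg2]
    ring
end

section
/- Let α ∈ (0,2] and let λ, μ, ν be nonnegative real numbers. Let (a_k)_{k≥0} be the sequence solving (A_{λ,μ,ν}) and (a⁰_k)_{k≥0} the sequence solving (A_{λ,0,ν}). Then a_k ≥ a⁰_k ≥ 0 for every k ≥ 1, and consequently the convergence radii satisfy R(λ,μ,ν) ≤ R(λ,0,ν). -/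
open Finset

/-- The real-valued sequence `(a_k)` solving `(A_{λ,μ,ν})` with real coefficients. -/
def IsRiccatiSeqReal (α : ℝ) (l m n : ℝ) (a : ℕ → ℝ) : Prop :=
  a 0 = 0 ∧ a 1 = n / Real.Gamma (α + 1) ∧
  ∀ k : ℕ, 1 ≤ k →
    a (k + 1) = (l * (∑ j ∈ Finset.Ico 1 k, a j * a (k - j)) + m * a k) *
      (Real.Gamma (α * (k:ℝ) + 1) / Real.Gamma (α * (k:ℝ) + α + 1))

/-- Convergence radius of the fractional power series `∑_{k≥1} a_k t^(αk)`. -/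
noncomputable def radiusReal (α : ℝ) (a : ℕ → ℝ) : ENNReal :=
  ⨆ (t : NNReal) (_ : Summable fun k : ℕ => |a k| * (t : ℝ) ^ (α * (k : ℝ))), (t : ENNReal)

theorem stmt_5 (α : ℝ) (hα : 0 < α) (hα2 : α ≤ 2)
    (lam mu nu : ℝ) (hlam : 0 ≤ lam) (hmu : 0 ≤ mu) (hnu : 0 ≤ nu)
    (a a0 : ℕ → ℝ)
    (ha : IsRiccatiSeqReal α lam mu nu a)
    (ha0 : IsRiccatiSeqReal α lam 0 nu a0) :
    (∀ k : ℕ, 1 ≤ k → 0 ≤ a0 k ∧ a0 k ≤ a k) ∧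
      radiusReal α a ≤ radiusReal α a0 := by
  obtain ⟨h00, h01, h0rec⟩ := ha0
  obtain ⟨h0, h1, hrec⟩ := ha
  have hG1 : 0 < Real.Gamma (α + 1) := Real.Gamma_pos_of_pos (by linarith)
  have key : ∀ k : ℕ, 1 ≤ k → 0 ≤ a0 k ∧ a0 k ≤ a k := by
    intro k
    induction k using Nat.strong_induction_on with
    | _ k ih =>
      intro hk
      match k, hk with
      | 1, _ =>
        rw [h01, h1]
        exact ⟨div_nonneg hnu hG1.le, le_refl _⟩
      | (k + 2), _ =>
        set m := k + 1 with hm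
        have hm1 : 1 ≤ m := Nat.le_add_left 1 k
        have hGpos : 0 < Real.Gamma (α * (m:ℝ) + 1) / Real.Gamma (α * (m:ℝ) + α + 1) := by
          have hmn : (0:ℝ) < (m:ℝ) := by positivity
          have h1' : 0 < α * (m:ℝ) + 1 := by nlinarith
          have h2' : 0 < α * (m:ℝ) + α + 1 := by nlinarith
          exact div_pos (Real.Gamma_pos_of_pos h1') (Real.Gamma_pos_of_pos h2')
        have hterm : ∀ j ∈ Finset.Ico 1 m,
            0 ≤ a0 j ∧ a0 j ≤ a j ∧ 0 ≤ a0 (m - j) ∧ a0 (m - j) ≤ a (m - j) := by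
          intro j hj
          simp only [Finset.mem_Ico] at hj
          have h1j := ih j (by omega) hj.1
          have h2j := ih (m - j) (by omega) (by omega)
          exact ⟨h1j.1, h1j.2, h2j.1, h2j.2⟩
        have hS0 : 0 ≤ ∑ j ∈ Finset.Ico 1 m, a0 j * a0 (m - j) := by
          refine Finset.sum_nonneg fun j hj => ?_
          obtain ⟨p1, p2, p3, p4⟩ := hterm j hj
          exact mul_nonneg p1 p3
        have hSle : (∑ j ∈ Finset.Ico 1 m, a0 j * a0 (m - j)) ≤
            ∑ j ∈ Finset.Ico 1 m, a j * a (m - j) := by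
          refine Finset.sum_le_sum fun j hj => ?_
          obtain ⟨p1, p2, p3, p4⟩ := hterm j hj
          exact mul_le_mul p2 p4 p3 (le_trans p1 p2)
        have hak : 0 ≤ a m := le_trans (ih m (by omega) hm1).1 (ih m (by omega) hm1).2
        rw [h0rec m hm1, hrec m hm1]
        constructor
        · have : 0 ≤ lam * (∑ j ∈ Finset.Ico 1 m, a0 j * a0 (m - j)) + 0 * a0 m := by
            simpa using mul_nonneg hlam hS0
          exact mul_nonneg this hGpos.le
        · refine mul_le_mul_of_nonneg_right ?_ hGpos.le
          have h1' : lam * (∑ j ∈ Finset.Ico 1 m, a0 j * a0 (m - j)) ≤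
              lam * ∑ j ∈ Finset.Ico 1 m, a j * a (m - j) :=
            mul_le_mul_of_nonneg_left hSle hlam
          have h2' : 0 ≤ mu * a m := mul_nonneg hmu hak
          linarith
  refine ⟨key, ?_⟩
  refine iSup_le fun t => iSup_le fun ht => ?_
  have ht' : Summable fun k : ℕ => |a0 k| * (t : ℝ) ^ (α * (k : ℝ)) := by
    refine Summable.of_nonneg_of_le (fun k => by positivity) (fun k => ?_) ht
    have habs : |a0 k| ≤ |a k| := by
      rcases Nat.eq_zero_or_pos k with hk | hk
      · simp [hk, h00, h0]
      · obtain ⟨p1, p2⟩ := key k hk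
        rw [abs_of_nonneg p1]
        exact le_trans p2 (le_abs_self _)
    have hpow : (0:ℝ) ≤ (t : ℝ) ^ (α * (k : ℝ)) := by positivity
    exact mul_le_mul_of_nonneg_right habs hpow
  exact le_iSup₂ (f := fun (t : NNReal) (_ : Summable fun k : ℕ =>
    |a0 k| * (t : ℝ) ^ (α * (k : ℝ))) => (t : ENNReal)) t ht'
end

section
/- Let f : (0,1) → [0,∞) be convex, symmetric in the sense that f(1−x) = f(x) for all x ∈ (0,1), and Lebesgue integrable on (0,1). Then for every integer k ≥ 2: (1 − 1/k)·f(1/2) ≤ (1/k)·Σ_{ℓ=1}^{k−1} f(ℓ/k), and moreover (1/k)·Σ_{ℓ=1}^{k−1} f(ℓ/k) ≤ ∫₀¹ f(u) du − ∫_{1/2}^{1/2+1/k} f(u) du when k is even, and (1/k)·Σ_{ℓ=1}^{k−1} f(ℓ/k) ≤ ∫₀¹ f(u) du − ∫_{(k−1)/(2k)}^{(k+1)/(2k)} f(u) du when k is odd. -/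
/-!
Each `ℓ / k` is the midpoint of a cell of width `1 / k`, and these cells tile
`[1 / (2k), 1 - 1 / (2k)]`; the left Hermite–Hadamard inequality on each cell bounds the
Riemann sum by `∫₀¹ f` minus the two end pieces of width `1 / (2k)`, which are equal by
symmetry.
Convexity and symmetry make `f` nondecreasing on `[1/2, 1)`, so any piece of width `1 / (2k)`
inside `[1/2, 1]` has integral at most that of the right end piece, and the central interval of
the statement is made of two such pieces (after reflecting its left half when `k` is odd).
The lower bound is midpoint convexity between `x` and `1 - x`.
-/

open MeasureTheory Set

lemma setIntegral_Ioo_eq_intervalIntegral {f : ℝ → ℝ} {a b : ℝ} (hab : a ≤ b) :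
    ∫ x in Ioo a b, f x = ∫ x in a..b, f x := by
  rw [intervalIntegral.integral_of_le hab, integral_Ioc_eq_integral_Ioo]

lemma MeasureTheory.IntegrableOn.intervalIntegrable_of_le {f : ℝ → ℝ} {c d a b : ℝ}
    (hf : IntegrableOn f (Ioo c d)) (hca : c ≤ a) (hab : a ≤ b) (hbd : b ≤ d) :
    IntervalIntegrable f volume a b :=
  (intervalIntegrable_iff_integrableOn_Ioo_of_le hab).2 (hf.mono_set (Ioo_subset_Ioo hca hbd))

lemma MonotoneOn.intervalIntegral_le_add {f : ℝ → ℝ} {a b c : ℝ}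
    (hf : MonotoneOn f (Ico a (b + c))) (hab : a ≤ b) (hc : 0 ≤ c)
    (hi : IntervalIntegrable f volume a (b + c)) :
    ∫ x in a..b, f x ≤ ∫ x in a + c..b + c, f x := by
  have hi₁ : IntervalIntegrable f volume a b :=
    hi.mono_set (uIcc_subset_uIcc_left (mem_uIcc_of_le hab (by linarith)))
  have hi₂ : IntervalIntegrable (fun x => f (x + c)) volume a b := by
    simpa using (hi.mono_set (uIcc_subset_uIcc_right
      (mem_uIcc_of_le (by linarith) (by linarith) : a + c ∈ _))).comp_add_right c
  rw [← intervalIntegral.integral_comp_add_right]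
  refine intervalIntegral.integral_mono_on_of_le_Ioo hab hi₁ hi₂ fun x hx => ?_
  exact hf ⟨hx.1.le, by linarith [hx.2]⟩ ⟨by linarith [hx.1], by linarith [hx.2]⟩
    (by linarith)

namespace ConvexOn

variable {f : ℝ → ℝ} {s : Set ℝ}

/-- The left Hermite–Hadamard inequality: pairing `x` with `a + b - x` turns midpoint
convexity into an inequality between integrands. -/
lemma mul_apply_midpoint_le_intervalIntegral (hf : ConvexOn ℝ s f) {a b : ℝ} (hab : a ≤ b)
    (hs : Icc a b ⊆ s) (hi : IntervalIntegrable f volume a b) :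
    (b - a) * f ((a + b) / 2) ≤ ∫ x in a..b, f x := by
  have hmid : ∀ x ∈ Icc a b, f ((a + b) / 2) ≤ (f x + f (a + b - x)) / 2 := by
    intro x hx
    have hx' : a + b - x ∈ Icc a b := ⟨by linarith [hx.2], by linarith [hx.1]⟩
    have h := hf.2 (hs hx) (hs hx') (by norm_num : (0:ℝ) ≤ 1 / 2)
      (by norm_num : (0:ℝ) ≤ 1 / 2) (by norm_num)
    rw [smul_eq_mul, smul_eq_mul, smul_eq_mul, smul_eq_mul,
      show 1 / 2 * x + 1 / 2 * (a + b - x) = (a + b) / 2 by ring] at h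
    linarith
  have hi' : IntervalIntegrable (fun x => f (a + b - x)) volume a b := by
    simpa using (hi.comp_sub_left (a + b)).symm
  have hrefl : ∫ x in a..b, f (a + b - x) = ∫ x in a..b, f x := by
    rw [intervalIntegral.integral_comp_sub_left f (a + b)]
    congr 1 <;> ring
  calc (b - a) * f ((a + b) / 2) = ∫ _ in a..b, f ((a + b) / 2) := by simp
    _ ≤ ∫ x in a..b, (f x + f (a + b - x)) / 2 :=
        intervalIntegral.integral_mono_on hab intervalIntegrable_const
          ((hi.add hi').div_const 2) hmid
    _ = ∫ x in a..b, f x := by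
        rw [intervalIntegral.integral_div, intervalIntegral.integral_add hi hi', hrefl]
        ring

lemma mul_sum_midpoint_le_intervalIntegral (hf : ConvexOn ℝ s f) {a h : ℝ} (hh : 0 ≤ h)
    (n : ℕ) (hs : Icc a (a + n * h) ⊆ s)
    (hi : IntervalIntegrable f volume a (a + n * h)) :
    h * ∑ i ∈ Finset.range n, f (a + (i + 1 / 2) * h) ≤ ∫ x in a..a + n * h, f x := by
  induction n with
  | zero => simp
  | succ n ih =>
    have hle : a + n * h ≤ a + (n + 1 : ℕ) * h := by push_cast; nlinarith
    have hstep : Icc a (a + n * h) ⊆ Icc a (a + (n + 1 : ℕ) * h) :=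
      Icc_subset_Icc_right hle
    have hn : 0 ≤ (n : ℝ) * h := by positivity
    have hi₁ : IntervalIntegrable f volume a (a + n * h) :=
      hi.mono_set (uIcc_subset_uIcc_left (mem_uIcc_of_le (by linarith) hle))
    have hi₂ : IntervalIntegrable f volume (a + n * h) (a + (n + 1 : ℕ) * h) :=
      hi.mono_set (uIcc_subset_uIcc_right (mem_uIcc_of_le (by linarith) hle))
    have hlast := hf.mul_apply_midpoint_le_intervalIntegral hle
      ((Icc_subset_Icc_left (by linarith)).trans hs) hi₂
    rw [Finset.sum_range_succ, mul_add,
      ← intervalIntegral.integral_add_adjacent_intervals hi₁ hi₂]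
    refine add_le_add (ih (hstep.trans hs) hi₁) (le_of_eq_of_le ?_ hlast)
    push_cast
    congr 2 <;> ring

end ConvexOn

section Symmetric

variable {f : ℝ → ℝ}

lemma apply_half_le_of_symm (hconv : ConvexOn ℝ (Ioo 0 1) f)
    (hsym : ∀ x ∈ Ioo (0 : ℝ) 1, f (1 - x) = f x) {x : ℝ} (hx : x ∈ Ioo (0 : ℝ) 1) :
    f (1 / 2) ≤ f x := by
  have h1x : 1 - x ∈ Ioo (0 : ℝ) 1 := ⟨by linarith [hx.2], by linarith [hx.1]⟩
  have h := hconv.2 hx h1x (by norm_num : (0:ℝ) ≤ 1 / 2) (by norm_num : (0:ℝ) ≤ 1 / 2)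
    (by norm_num)
  rw [smul_eq_mul, smul_eq_mul, smul_eq_mul, smul_eq_mul, hsym x hx,
    show 1 / 2 * x + 1 / 2 * (1 - x) = 1 / 2 by ring] at h
  linarith

lemma monotoneOn_Ico_half_of_symm (hconv : ConvexOn ℝ (Ioo 0 1) f)
    (hsym : ∀ x ∈ Ioo (0 : ℝ) 1, f (1 - x) = f x) : MonotoneOn f (Ico (1 / 2) 1) := by
  intro x hx y hy hxy
  have hy' : y ∈ Ioo (0 : ℝ) 1 := ⟨by linarith [hy.1], hy.2⟩
  have h1y : 1 - y ∈ Ioo (0 : ℝ) 1 := ⟨by linarith [hy.2], by linarith [hy.1]⟩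
  have h := hconv.le_max_of_mem_Icc h1y hy' ⟨by linarith [hx.1], hxy⟩
  rwa [hsym y hy', max_self] at h

lemma intervalIntegral_reflect_of_symm (hsym : ∀ x ∈ Ioo (0 : ℝ) 1, f (1 - x) = f x)
    {a b : ℝ} (ha : 0 ≤ a) (hab : a ≤ b) (hb : b < 1) :
    ∫ x in a..b, f x = ∫ x in 1 - b..1 - a, f x := by
  rw [← intervalIntegral.integral_comp_sub_left]
  refine intervalIntegral.integral_congr_ae (Filter.Eventually.of_forall fun x hx => ?_)
  rw [uIoc_of_le hab] at hx
  exact (hsym x ⟨by linarith [hx.1], by linarith [hx.2]⟩).symm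

lemma intervalIntegral_le_right_end_of_symm (hconv : ConvexOn ℝ (Ioo 0 1) f)
    (hsym : ∀ x ∈ Ioo (0 : ℝ) 1, f (1 - x) = f x) (hint : IntegrableOn f (Ioo 0 1))
    {p h : ℝ} (hp : 1 / 2 ≤ p) (hh : 0 ≤ h) (hph : p + h ≤ 1) :
    ∫ x in p..p + h, f x ≤ ∫ x in 1 - h..1, f x := by
  have hshift : p + h + (1 - (p + h)) = 1 := by ring
  have key := MonotoneOn.intervalIntegral_le_add (a := p) (b := p + h) (c := 1 - (p + h))
    ((monotoneOn_Ico_half_of_symm hconv hsym).mono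
      (by rw [hshift]; exact Ico_subset_Ico_left hp))
    (by linarith) (by linarith)
    (by rw [hshift]; exact hint.intervalIntegrable_of_le (by linarith) (by linarith) le_rfl)
  rwa [hshift, show p + (1 - (p + h)) = 1 - h by ring] at key

lemma intervalIntegral_half_add_two_mul_le_of_symm (hconv : ConvexOn ℝ (Ioo 0 1) f)
    (hsym : ∀ x ∈ Ioo (0 : ℝ) 1, f (1 - x) = f x) (hint : IntegrableOn f (Ioo 0 1))
    {e : ℝ} (he : 0 ≤ e) (he' : e ≤ 1 / 4) :
    ∫ x in 1 / 2..1 / 2 + 2 * e, f x ≤ 2 * ∫ x in 1 - e..1, f x := by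
  have hsplit := intervalIntegral.integral_add_adjacent_intervals
    (hint.intervalIntegrable_of_le (a := 1 / 2) (b := 1 / 2 + e)
      (by norm_num) (by linarith) (by linarith))
    (hint.intervalIntegrable_of_le (b := 1 / 2 + e + e)
      (by linarith) (by linarith) (by linarith))
  rw [show 1 / 2 + e + e = 1 / 2 + 2 * e by ring] at hsplit
  have hfirst := intervalIntegral_le_right_end_of_symm hconv hsym hint (p := 1 / 2) le_rfl he
    (by linarith)
  have hsecond := intervalIntegral_le_right_end_of_symm hconv hsym hint (p := 1 / 2 + e)
    (by linarith) he (by linarith)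
  rw [show 1 / 2 + e + e = 1 / 2 + 2 * e by ring] at hsecond
  linarith

lemma intervalIntegral_half_sub_half_add_le_of_symm (hconv : ConvexOn ℝ (Ioo 0 1) f)
    (hsym : ∀ x ∈ Ioo (0 : ℝ) 1, f (1 - x) = f x) (hint : IntegrableOn f (Ioo 0 1))
    {e : ℝ} (he : 0 ≤ e) (he' : e ≤ 1 / 2) :
    ∫ x in 1 / 2 - e..1 / 2 + e, f x ≤ 2 * ∫ x in 1 - e..1, f x := by
  have hsplit := intervalIntegral.integral_add_adjacent_intervals
    (hint.intervalIntegrable_of_le (a := 1 / 2 - e) (b := 1 / 2)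
      (by linarith) (by linarith) (by norm_num))
    (hint.intervalIntegrable_of_le (b := 1 / 2 + e) (by norm_num) (by linarith) (by linarith))
  have hrefl := intervalIntegral_reflect_of_symm hsym (a := 1 / 2 - e) (b := 1 / 2)
    (by linarith) (by linarith) (by norm_num)
  rw [show (1 : ℝ) - 1 / 2 = 1 / 2 by norm_num,
    show 1 - (1 / 2 - e) = 1 / 2 + e by ring] at hrefl
  rw [← hsplit, hrefl]
  linarith [intervalIntegral_le_right_end_of_symm hconv hsym hint (p := 1 / 2) le_rfl he
    (by linarith)]

lemma mul_sum_le_integral_sub_two_mul_end_of_symm (hconv : ConvexOn ℝ (Ioo 0 1) f)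
    (hsym : ∀ x ∈ Ioo (0 : ℝ) 1, f (1 - x) = f x) (hint : IntegrableOn f (Ioo 0 1))
    {k : ℕ} (hk : 1 ≤ k) :
    (1 / (k : ℝ)) * ∑ ℓ ∈ Finset.Ico 1 k, f (ℓ / k) ≤
      (∫ x in 0..1, f x) - 2 * ∫ x in 1 - 1 / (2 * k)..1, f x := by
  set e : ℝ := 1 / (2 * k) with he_def
  have hK : (1 : ℝ) ≤ k := by exact_mod_cast hk
  have he : 0 < e := by positivity
  have he' : e ≤ 1 / 2 := by
    rw [div_le_div_iff₀ (by positivity) (by norm_num)]; linarith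
  have hend : e + ((k - 1 : ℕ) : ℝ) * (1 / k) = 1 - e := by
    rw [Nat.cast_sub hk, he_def]; field_simp; ring
  have hcells := hconv.mul_sum_midpoint_le_intervalIntegral (a := e) (h := 1 / k)
    (by positivity) (k - 1) (by rw [hend]; exact Icc_subset_Ioo he (by linarith))
    (by rw [hend]; exact hint.intervalIntegrable_of_le he.le (by linarith) (by linarith))
  have hsum : ∑ ℓ ∈ Finset.Ico 1 k, f (ℓ / k) =
      ∑ i ∈ Finset.range (k - 1), f (e + (i + 1 / 2) * (1 / k)) := by
    rw [Finset.sum_Ico_eq_sum_range]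
    refine Finset.sum_congr rfl fun i _ => congrArg f ?_
    push_cast; rw [he_def]; field_simp; ring
  have hsplit : ∫ x in 0..1, f x = (∫ x in 0..e, f x) + (∫ x in e..1 - e, f x) +
      ∫ x in 1 - e..1, f x := by
    rw [intervalIntegral.integral_add_adjacent_intervals,
      intervalIntegral.integral_add_adjacent_intervals]
    all_goals exact hint.intervalIntegrable_of_le (by linarith) (by linarith) (by linarith)
  have hrefl := intervalIntegral_reflect_of_symm hsym le_rfl he.le (by linarith)
  rw [sub_zero] at hrefl
  rw [hsum, hsplit, hrefl]
  rw [hend] at hcells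
  linarith

lemma mul_apply_half_le_mul_sum_of_symm (hconv : ConvexOn ℝ (Ioo 0 1) f)
    (hsym : ∀ x ∈ Ioo (0 : ℝ) 1, f (1 - x) = f x) {k : ℕ} (hk : 1 ≤ k) :
    (1 - 1 / (k : ℝ)) * f (1 / 2) ≤
      (1 / (k : ℝ)) * ∑ ℓ ∈ Finset.Ico 1 k, f (ℓ / k) := by
  have hK : (1 : ℝ) ≤ k := by exact_mod_cast hk
  have hcard := Finset.card_nsmul_le_sum (Finset.Ico 1 k) (fun ℓ : ℕ => f (ℓ / k))
    (f (1 / 2)) fun ℓ hℓ => by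
      rw [Finset.mem_Ico] at hℓ
      have h1 : (1 : ℝ) ≤ ℓ := by exact_mod_cast hℓ.1
      have h2 : (ℓ : ℝ) < k := by exact_mod_cast hℓ.2
      exact apply_half_le_of_symm hconv hsym ⟨by positivity, (div_lt_one (by linarith)).2 h2⟩
  rw [Nat.card_Ico, nsmul_eq_mul, Nat.cast_sub hk, Nat.cast_one] at hcard
  calc (1 - 1 / (k : ℝ)) * f (1 / 2) = 1 / (k : ℝ) * ((k - 1) * f (1 / 2)) := by
        field_simp
    _ ≤ (1 / (k : ℝ)) * ∑ ℓ ∈ Finset.Ico 1 k, f (ℓ / k) := by gcongr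

end Symmetric

theorem stmt_6_general (f : ℝ → ℝ)
    (hconv : ConvexOn ℝ (Set.Ioo (0:ℝ) 1) f)
    (hsym : ∀ x ∈ Set.Ioo (0:ℝ) 1, f (1 - x) = f x)
    (hint : IntegrableOn f (Set.Ioo (0:ℝ) 1)) :
    ∀ k : ℕ, 2 ≤ k →
      ((1 - 1/(k:ℝ)) * f (1/2) ≤ (1/(k:ℝ)) * ∑ ℓ ∈ Finset.Ico 1 k, f ((ℓ:ℝ)/(k:ℝ))) ∧
      (Even k →
        (1/(k:ℝ)) * ∑ ℓ ∈ Finset.Ico 1 k, f ((ℓ:ℝ)/(k:ℝ)) ≤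
          (∫ u in Set.Ioo (0:ℝ) 1, f u) - ∫ u in Set.Ioo (1/2 : ℝ) (1/2 + 1/(k:ℝ)), f u) ∧
      (Odd k →
        (1/(k:ℝ)) * ∑ ℓ ∈ Finset.Ico 1 k, f ((ℓ:ℝ)/(k:ℝ)) ≤
          (∫ u in Set.Ioo (0:ℝ) 1, f u) -
            ∫ u in Set.Ioo (((k:ℝ) - 1)/(2*(k:ℝ))) (((k:ℝ) + 1)/(2*(k:ℝ))), f u) := by
  intro k hk
  have hK : (2 : ℝ) ≤ k := by exact_mod_cast hk
  set e : ℝ := 1 / (2 * k) with he_def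
  have he : 0 ≤ e := by positivity
  have he' : e ≤ 1 / 4 := by
    rw [he_def, div_le_div_iff₀ (by positivity) (by norm_num)]; linarith
  have hsum := mul_sum_le_integral_sub_two_mul_end_of_symm hconv hsym hint (k := k) (by omega)
  rw [← he_def] at hsum
  refine ⟨mul_apply_half_le_mul_sum_of_symm hconv hsym (by omega), fun _ => ?_, fun _ => ?_⟩
  · rw [show 1 / 2 + 1 / (k : ℝ) = 1 / 2 + 2 * e by rw [he_def]; field_simp,
      setIntegral_Ioo_eq_intervalIntegral zero_le_one,
      setIntegral_Ioo_eq_intervalIntegral (by linarith)]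
    linarith [intervalIntegral_half_add_two_mul_le_of_symm hconv hsym hint he he']
  · rw [show ((k : ℝ) - 1) / (2 * k) = 1 / 2 - e by rw [he_def]; field_simp,
      show ((k : ℝ) + 1) / (2 * k) = 1 / 2 + e by rw [he_def]; field_simp,
      setIntegral_Ioo_eq_intervalIntegral zero_le_one,
      setIntegral_Ioo_eq_intervalIntegral (by linarith)]
    linarith [intervalIntegral_half_sub_half_add_le_of_symm hconv hsym hint he (by linarith)]

theorem stmt_6 (f : ℝ → ℝ)
    (hconv : ConvexOn ℝ (Set.Ioo (0:ℝ) 1) f)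
    (hnonneg : ∀ x ∈ Set.Ioo (0:ℝ) 1, 0 ≤ f x)
    (hsym : ∀ x ∈ Set.Ioo (0:ℝ) 1, f (1 - x) = f x)
    (hint : IntegrableOn f (Set.Ioo (0:ℝ) 1)) :
    ∀ k : ℕ, 2 ≤ k →
      ((1 - 1/(k:ℝ)) * f (1/2) ≤ (1/(k:ℝ)) * ∑ ℓ ∈ Finset.Ico 1 k, f ((ℓ:ℝ)/(k:ℝ))) ∧
      (Even k →
        (1/(k:ℝ)) * ∑ ℓ ∈ Finset.Ico 1 k, f ((ℓ:ℝ)/(k:ℝ)) ≤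
          (∫ u in Set.Ioo (0:ℝ) 1, f u) - ∫ u in Set.Ioo (1/2 : ℝ) (1/2 + 1/(k:ℝ)), f u) ∧
      (Odd k →
        (1/(k:ℝ)) * ∑ ℓ ∈ Finset.Ico 1 k, f ((ℓ:ℝ)/(k:ℝ)) ≤
          (∫ u in Set.Ioo (0:ℝ) 1, f u) -
            ∫ u in Set.Ioo (((k:ℝ) - 1)/(2*(k:ℝ))) (((k:ℝ) + 1)/(2*(k:ℝ))), f u) :=
  stmt_6_general f hconv hsym hint
end

section
/- Let f : (0,1) → [0,∞) be convex, symmetric in the sense that f(1−x) = f(x) for all x ∈ (0,1), and Lebesgue integrable on (0,1). Then for every integer k ≥ 2: (1/2)·f(1/2) ≤ (1/k)·Σ_{ℓ=1}^{k−1} f(ℓ/k) ≤ ∫₀¹ f(u) du; moreover lim_{k→∞} (1/k)·Σ_{ℓ=1}^{k−1} f(ℓ/k) = ∫₀¹ f(u) du, and the minimum over integers k ≥ 2 of (1/k)·Σ_{ℓ=1}^{k−1} f(ℓ/k) equals (1/2)·f(1/2), attained at k = 2. -/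
open MeasureTheory Finset Filter

open Set Topology

/-! Pairing a point `x` of a cell `[a, b]` with its reflection `a + b - x`, convexity gives
`2 f ((a + b) / 2) ≤ f x + f (a + b - x) ≤ f a + f b`; integrating over the cell yields the two
Hermite–Hadamard inequalities. Summed over the cells `[(2ℓ - 1) / 2k, (2ℓ + 1) / 2k]`, the midpoint
inequality bounds the Riemann sum by `∫₀¹ f` (using `f ≥ 0` near the endpoints); summed over the
cells `[ℓ / k, (ℓ + 1) / k]`, the trapezoid inequality bounds `∫_{1/k}^{1-1/k} f` by the Riemann
sum, which gives the limit by squeezing. Symmetry and convexity put the minimum of `f` at `1/2`, so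
the Riemann sum is at least `(k - 1) / k * f (1/2) ≥ f (1/2) / 2`. -/

theorem ConvexOn.two_mul_map_midpoint_le {s : Set ℝ} {f : ℝ → ℝ} {x y : ℝ} (hf : ConvexOn ℝ s f)
    (hx : x ∈ s) (hy : y ∈ s) : 2 * f ((x + y) / 2) ≤ f x + f y := by
  have h := hf.2 hx hy (by norm_num : (0:ℝ) ≤ 1/2) (by norm_num : (0:ℝ) ≤ 1/2) (by norm_num)
  simp only [smul_eq_mul] at h
  rw [show (x + y) / 2 = 1/2 * x + 1/2 * y by ring]
  linarith

theorem ConvexOn.map_add_map_reflect_le {f : ℝ → ℝ} {a b x : ℝ} (hf : ConvexOn ℝ (Icc a b) f)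
    (hx : x ∈ Icc a b) : f x + f (a + b - x) ≤ f a + f b := by
  obtain ⟨hax, hxb⟩ := hx
  rcases hax.eq_or_lt with rfl | hax'
  · rw [add_sub_cancel_left]
  have hab : 0 < b - a := by linarith
  have hs : 0 ≤ (b - x) / (b - a) := div_nonneg (by linarith) hab.le
  have ht : 0 ≤ (x - a) / (b - a) := div_nonneg (by linarith) hab.le
  have hst : (b - x) / (b - a) + (x - a) / (b - a) = 1 := by field_simp; ring
  have ha : a ∈ Icc a b := left_mem_Icc.2 (by linarith)
  have hb : b ∈ Icc a b := right_mem_Icc.2 (by linarith)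
  have h₁ := hf.2 ha hb hs ht hst
  have h₂ := hf.2 ha hb ht hs (by rw [add_comm, hst])
  have e₁ : ((b - x) / (b - a)) • a + ((x - a) / (b - a)) • b = x := by
    simp only [smul_eq_mul]; field_simp; ring
  have e₂ : ((x - a) / (b - a)) • a + ((b - x) / (b - a)) • b = a + b - x := by
    simp only [smul_eq_mul]; field_simp; ring
  rw [e₁] at h₁
  rw [e₂] at h₂
  simp only [smul_eq_mul] at h₁ h₂
  calc f x + f (a + b - x)
      ≤ (b - x) / (b - a) * f a + (x - a) / (b - a) * f b
        + ((x - a) / (b - a) * f a + (b - x) / (b - a) * f b) := add_le_add h₁ h₂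
    _ = f a + f b := by field_simp; ring

theorem ConvexOn.two_mul_map_midpoint_le_map_add_map_reflect {f : ℝ → ℝ} {a b x : ℝ}
    (hf : ConvexOn ℝ (Icc a b) f) (hx : x ∈ Icc a b) :
    2 * f ((a + b) / 2) ≤ f x + f (a + b - x) := by
  have h := hf.two_mul_map_midpoint_le hx (⟨by linarith [hx.2], by linarith [hx.1]⟩ :
    a + b - x ∈ Icc a b)
  rwa [add_sub_cancel] at h

theorem IntervalIntegrable.comp_reflect {f : ℝ → ℝ} {a b : ℝ}
    (hf : IntervalIntegrable f volume a b) :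
    IntervalIntegrable (fun x => f (a + b - x)) volume a b := by
  simpa using (hf.comp_sub_left (a + b)).symm

theorem IntervalIntegrable.mono_Icc {f : ℝ → ℝ} {a b c d : ℝ}
    (hf : IntervalIntegrable f volume a b) (hab : a ≤ b) (hcd : c ≤ d) (h : Icc c d ⊆ Icc a b) :
    IntervalIntegrable f volume c d :=
  hf.mono_set (by rwa [Set.uIcc_of_le hab, Set.uIcc_of_le hcd])

theorem intervalIntegral.integral_add_comp_reflect {f : ℝ → ℝ} {a b : ℝ}
    (hf : IntervalIntegrable f volume a b) :
    ∫ x in a..b, (f x + f (a + b - x)) = 2 * ∫ x in a..b, f x := by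
  rw [intervalIntegral.integral_add hf hf.comp_reflect, intervalIntegral.integral_comp_sub_left,
    add_sub_cancel_right, add_sub_cancel_left, two_mul]

theorem ConvexOn.mul_map_midpoint_le_integral {f : ℝ → ℝ} {a b : ℝ} (hab : a ≤ b)
    (hf : ConvexOn ℝ (Icc a b) f) (hint : IntervalIntegrable f volume a b) :
    (b - a) * f ((a + b) / 2) ≤ ∫ x in a..b, f x := by
  have h := intervalIntegral.integral_mono_on hab intervalIntegrable_const
    (hint.add hint.comp_reflect) fun x hx => hf.two_mul_map_midpoint_le_map_add_map_reflect hx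
  rw [intervalIntegral.integral_const, intervalIntegral.integral_add_comp_reflect hint,
    smul_eq_mul] at h
  linarith

theorem ConvexOn.integral_le_mul_average {f : ℝ → ℝ} {a b : ℝ} (hab : a ≤ b)
    (hf : ConvexOn ℝ (Icc a b) f) (hint : IntervalIntegrable f volume a b) :
    ∫ x in a..b, f x ≤ (b - a) * ((f a + f b) / 2) := by
  have h := intervalIntegral.integral_mono_on hab (hint.add hint.comp_reflect)
    intervalIntegrable_const fun x hx => hf.map_add_map_reflect_le hx
  rw [intervalIntegral.integral_const, intervalIntegral.integral_add_comp_reflect hint,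
    smul_eq_mul] at h
  linarith

section Partition

variable {f : ℝ → ℝ} {a : ℕ → ℝ} {m n : ℕ}

theorem Monotone.Icc_subset_Icc_succ (ha : Monotone a) {i : ℕ} (hmi : m ≤ i) (hin : i < n) :
    Icc (a i) (a (i + 1)) ⊆ Icc (a m) (a n) :=
  Icc_subset_Icc (ha hmi) (ha hin)

theorem IntervalIntegrable.of_Icc_succ (ha : Monotone a)
    (hint : IntervalIntegrable f volume (a m) (a n)) {i : ℕ} (hmi : m ≤ i) (hin : i < n) :
    IntervalIntegrable f volume (a i) (a (i + 1)) :=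
  hint.mono_Icc (ha (hmi.trans hin.le)) (ha i.le_succ) (ha.Icc_subset_Icc_succ hmi hin)

theorem ConvexOn.sum_mul_map_midpoint_le_integral (hmn : m ≤ n) (ha : Monotone a)
    (hf : ConvexOn ℝ (Icc (a m) (a n)) f) (hint : IntervalIntegrable f volume (a m) (a n)) :
    ∑ i ∈ Finset.Ico m n, (a (i + 1) - a i) * f ((a i + a (i + 1)) / 2)
      ≤ ∫ x in a m..a n, f x := by
  rw [← intervalIntegral.sum_integral_adjacent_intervals_Ico hmn
    fun i hi => hint.of_Icc_succ (i := i) ha hi.1 hi.2]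
  refine sum_le_sum fun i hi => ?_
  obtain ⟨hmi, hin⟩ := Finset.mem_Ico.1 hi
  exact (hf.subset (ha.Icc_subset_Icc_succ hmi hin) (convex_Icc _ _)).mul_map_midpoint_le_integral
    (ha i.le_succ) (hint.of_Icc_succ ha hmi hin)

theorem ConvexOn.integral_le_sum_mul_average (hmn : m ≤ n) (ha : Monotone a)
    (hf : ConvexOn ℝ (Icc (a m) (a n)) f) (hint : IntervalIntegrable f volume (a m) (a n)) :
    ∫ x in a m..a n, f x
      ≤ ∑ i ∈ Finset.Ico m n, (a (i + 1) - a i) * ((f (a i) + f (a (i + 1))) / 2) := by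
  rw [← intervalIntegral.sum_integral_adjacent_intervals_Ico hmn
    fun i hi => hint.of_Icc_succ (i := i) ha hi.1 hi.2]
  refine sum_le_sum fun i hi => ?_
  obtain ⟨hmi, hin⟩ := Finset.mem_Ico.1 hi
  exact (hf.subset (ha.Icc_subset_Icc_succ hmi hin) (convex_Icc _ _)).integral_le_mul_average
    (ha i.le_succ) (hint.of_Icc_succ ha hmi hin)

end Partition

theorem Finset.sum_Ico_average_succ_le {g : ℕ → ℝ} {m n : ℕ}
    (hg : ∀ i ∈ Finset.Ico m (n + 1), 0 ≤ g i) :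
    ∑ i ∈ Finset.Ico m n, (g i + g (i + 1)) / 2 ≤ ∑ i ∈ Finset.Ico m (n + 1), g i := by
  have h₁ : ∑ i ∈ Finset.Ico m n, g i ≤ ∑ i ∈ Finset.Ico m (n + 1), g i :=
    sum_le_sum_of_subset_of_nonneg (Finset.Ico_subset_Ico_right n.le_succ) fun i hi _ => hg i hi
  have h₂ : ∑ i ∈ Finset.Ico m n, g (i + 1) ≤ ∑ i ∈ Finset.Ico m (n + 1), g i := by
    rw [Finset.sum_Ico_add' g]
    exact sum_le_sum_of_subset_of_nonneg (Finset.Ico_subset_Ico_left m.le_succ)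
      fun i hi _ => hg i hi
  rw [← sum_div, sum_add_distrib]
  linarith

theorem IntervalIntegrable.tendsto_integral {ι : Type*} {l : Filter ι} {f : ℝ → ℝ} {a b : ℝ}
    {u v : ι → ℝ} (hf : IntervalIntegrable f volume a b) (hu : Tendsto u l (𝓝 a))
    (hv : Tendsto v l (𝓝 b)) (hu' : ∀ᶠ i in l, u i ∈ uIcc a b) (hv' : ∀ᶠ i in l, v i ∈ uIcc a b) :
    Tendsto (fun i => ∫ x in u i..v i, f x) l (𝓝 (∫ x in a..b, f x)) := by
  have hcont := intervalIntegral.continuousOn_primitive_interval' hf left_mem_uIcc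
  have hright := (hcont b right_mem_uIcc).tendsto.comp (tendsto_nhdsWithin_iff.2 ⟨hv, hv'⟩)
  have hleft := (hcont a left_mem_uIcc).tendsto.comp (tendsto_nhdsWithin_iff.2 ⟨hu, hu'⟩)
  rw [intervalIntegral.integral_same] at hleft
  rw [← sub_zero (∫ x in a..b, f x)]
  refine (hright.sub hleft).congr' ?_
  filter_upwards [hu', hv'] with i hui hvi
  exact intervalIntegral.integral_interval_sub_left
    (hf.mono_set (uIcc_subset_uIcc left_mem_uIcc hvi))
    (hf.mono_set (uIcc_subset_uIcc left_mem_uIcc hui))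

noncomputable def interiorRiemannSum (f : ℝ → ℝ) (k : ℕ) : ℝ :=
  (1 / (k:ℝ)) * ∑ ℓ ∈ Finset.Ico 1 k, f ((ℓ:ℝ) / (k:ℝ))

theorem interiorRiemannSum_two (f : ℝ → ℝ) : interiorRiemannSum f 2 = 1 / 2 * f (1 / 2) := by
  simp [interiorRiemannSum]

section UnitInterval

variable {f : ℝ → ℝ}

theorem div_mem_Ioo_of_mem_Ico {k ℓ : ℕ} (hℓ : ℓ ∈ Finset.Ico 1 k) :
    (ℓ:ℝ) / k ∈ Ioo (0:ℝ) 1 := by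
  obtain ⟨h1, h2⟩ := Finset.mem_Ico.1 hℓ
  have hk : (0:ℝ) < k := by exact_mod_cast (by omega : 0 < k)
  exact ⟨div_pos (by exact_mod_cast h1) hk, (div_lt_one hk).2 (by exact_mod_cast h2)⟩

theorem ConvexOn.map_half_le_of_symm (hconv : ConvexOn ℝ (Ioo 0 1) f)
    (hsym : ∀ x ∈ Ioo (0:ℝ) 1, f (1 - x) = f x) {x : ℝ} (hx : x ∈ Ioo (0:ℝ) 1) :
    f (1 / 2) ≤ f x := by
  have h := hconv.two_mul_map_midpoint_le hx (⟨by linarith [hx.2], by linarith [hx.1]⟩ :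
    1 - x ∈ Ioo (0:ℝ) 1)
  rw [add_sub_cancel, hsym x hx] at h
  linarith

theorem half_mul_map_half_le_interiorRiemannSum (hconv : ConvexOn ℝ (Ioo 0 1) f)
    (hsym : ∀ x ∈ Ioo (0:ℝ) 1, f (1 - x) = f x) (hhalf : 0 ≤ f (1 / 2)) {k : ℕ} (hk : 2 ≤ k) :
    1 / 2 * f (1 / 2) ≤ interiorRiemannSum f k := by
  have hk' : (2:ℝ) ≤ k := by exact_mod_cast hk
  calc 1 / 2 * f (1 / 2) ≤ (k - 1) / k * f (1 / 2) := by
        refine mul_le_mul_of_nonneg_right ?_ hhalf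
        rw [le_div_iff₀ (by linarith)]
        linarith
    _ = 1 / k * ∑ ℓ ∈ Finset.Ico 1 k, f (1 / 2) := by
        rw [sum_const, Nat.card_Ico, nsmul_eq_mul, Nat.cast_sub (by omega)]
        ring
    _ ≤ interiorRiemannSum f k := by
        unfold interiorRiemannSum
        gcongr with ℓ hℓ
        exact hconv.map_half_le_of_symm hsym (div_mem_Ioo_of_mem_Ico hℓ)

theorem interiorRiemannSum_le_integral (hconv : ConvexOn ℝ (Ioo 0 1) f)
    (hnonneg : ∀ x ∈ Ioo (0:ℝ) 1, 0 ≤ f x) (hint : IntervalIntegrable f volume 0 1) {k : ℕ}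
    (hk : 0 < k) : interiorRiemannSum f k ≤ ∫ x in (0:ℝ)..1, f x := by
  -- midpoints of the cells `[a i, a (i + 1)]` are the nodes `i / k`
  set a : ℕ → ℝ := fun i => (2 * i - 1) / (2 * k) with ha_def
  have ha : Monotone a := fun i j hij => by simp only [ha_def]; gcongr
  have h0 : 0 < a 1 := by simp only [ha_def]; positivity
  have h1 : a k < 1 := by simp only [ha_def]; rw [div_lt_one (by positivity)]; linarith
  have hsum : interiorRiemannSum f k
      = ∑ i ∈ Finset.Ico 1 k, (a (i + 1) - a i) * f ((a i + a (i + 1)) / 2) := by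
    rw [interiorRiemannSum, mul_sum]
    refine sum_congr rfl fun i _ => ?_
    simp only [ha_def]
    push_cast
    congr 2 <;> field_simp <;> ring
  have hnonneg' : 0 ≤ᵐ[volume.restrict (Ioc 0 1)] f := by
    rw [← Measure.restrict_congr_set Ioo_ae_eq_Ioc]
    exact (ae_restrict_iff' measurableSet_Ioo).2 (ae_of_all _ hnonneg)
  calc interiorRiemannSum f k
      ≤ ∫ x in a 1..a k, f x := hsum ▸ ConvexOn.sum_mul_map_midpoint_le_integral hk ha
        (hconv.subset (Icc_subset_Ioo h0 h1) (convex_Icc _ _))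
        (hint.mono_Icc zero_le_one (ha hk) (Icc_subset_Icc h0.le h1.le))
    _ ≤ ∫ x in (0:ℝ)..1, f x :=
        intervalIntegral.integral_mono_interval h0.le (ha hk) h1.le hnonneg' hint

theorem integral_le_interiorRiemannSum (hconv : ConvexOn ℝ (Ioo 0 1) f)
    (hnonneg : ∀ x ∈ Ioo (0:ℝ) 1, 0 ≤ f x) (hint : IntervalIntegrable f volume 0 1) {k : ℕ}
    (hk : 2 ≤ k) : ∫ x in 1 / (k:ℝ)..1 - 1 / k, f x ≤ interiorRiemannSum f k := by
  obtain ⟨n, rfl⟩ : ∃ n, k = n + 1 := ⟨k - 1, by omega⟩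
  set a : ℕ → ℝ := fun i => i / (n + 1 : ℕ) with ha_def
  have ha : Monotone a := fun i j hij => by simp only [ha_def]; gcongr
  have h0 : 0 < a 1 := by simp only [ha_def]; positivity
  have h1 : a n < 1 := by simp only [ha_def]; rw [div_lt_one (by positivity)]; push_cast; linarith
  have hends : 1 / ((n + 1 : ℕ) : ℝ) = a 1 ∧ 1 - 1 / ((n + 1 : ℕ) : ℝ) = a n := by
    simp only [ha_def]; push_cast; exact ⟨rfl, by field_simp; ring⟩
  have hnodes : ∀ i ∈ Finset.Ico 1 (n + 1), 0 ≤ f (a i) := fun i hi =>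
    hnonneg _ (div_mem_Ioo_of_mem_Ico hi)
  rw [hends.2, hends.1]
  calc ∫ x in a 1..a n, f x
      ≤ ∑ i ∈ Finset.Ico 1 n, (a (i + 1) - a i) * ((f (a i) + f (a (i + 1))) / 2) :=
        ConvexOn.integral_le_sum_mul_average (by omega) ha
          (hconv.subset (Icc_subset_Ioo h0 h1) (convex_Icc _ _))
          (hint.mono_Icc zero_le_one (ha (by omega)) (Icc_subset_Icc h0.le h1.le))
    _ = 1 / ((n + 1 : ℕ) : ℝ) * ∑ i ∈ Finset.Ico 1 n, (f (a i) + f (a (i + 1))) / 2 := by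
        rw [mul_sum]
        refine sum_congr rfl fun i _ => ?_
        congr 1
        simp only [ha_def]
        push_cast
        field_simp
        ring
    _ ≤ interiorRiemannSum f (n + 1) := by
        unfold interiorRiemannSum
        gcongr 1 / _ * ?_
        exact Finset.sum_Ico_average_succ_le (g := fun i => f (a i)) hnodes

theorem tendsto_interiorRiemannSum (hconv : ConvexOn ℝ (Ioo 0 1) f)
    (hnonneg : ∀ x ∈ Ioo (0:ℝ) 1, 0 ≤ f x) (hint : IntervalIntegrable f volume 0 1) :
    Tendsto (interiorRiemannSum f) atTop (𝓝 (∫ x in (0:ℝ)..1, f x)) := by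
  have hinv : Tendsto (fun k : ℕ => 1 / (k:ℝ)) atTop (𝓝 0) := tendsto_one_div_atTop_nhds_zero_nat
  have hmem : ∀ᶠ k : ℕ in atTop, 1 / (k:ℝ) ∈ uIcc (0:ℝ) 1 ∧ 1 - 1 / (k:ℝ) ∈ uIcc (0:ℝ) 1 := by
    filter_upwards [eventually_ge_atTop 1] with k hk
    have h : 1 / (k:ℝ) ≤ 1 := by rw [div_le_one (by positivity)]; exact_mod_cast hk
    rw [Set.uIcc_of_le zero_le_one]
    exact ⟨⟨by positivity, h⟩, ⟨by linarith, by linarith [show 0 ≤ 1 / (k:ℝ) by positivity]⟩⟩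
  have hinner := hint.tendsto_integral hinv (by simpa using hinv.const_sub 1)
    (hmem.mono fun _ h => h.1) (hmem.mono fun _ h => h.2)
  refine tendsto_of_tendsto_of_tendsto_of_le_of_le' hinner tendsto_const_nhds ?_ ?_
  · filter_upwards [eventually_ge_atTop 2] with k hk
    exact integral_le_interiorRiemannSum hconv hnonneg hint hk
  · filter_upwards [eventually_gt_atTop 0] with k hk
    exact interiorRiemannSum_le_integral hconv hnonneg hint hk

end UnitInterval

theorem stmt_7 (f : ℝ → ℝ)
    (hconv : ConvexOn ℝ (Set.Ioo (0:ℝ) 1) f)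
    (hnonneg : ∀ x ∈ Set.Ioo (0:ℝ) 1, 0 ≤ f x)
    (hsym : ∀ x ∈ Set.Ioo (0:ℝ) 1, f (1 - x) = f x)
    (hint : IntegrableOn f (Set.Ioo (0:ℝ) 1)) :
    (∀ k : ℕ, 2 ≤ k →
      (1/2) * f (1/2) ≤ (1/(k:ℝ)) * ∑ ℓ ∈ Finset.Ico 1 k, f ((ℓ:ℝ)/(k:ℝ)) ∧
      (1/(k:ℝ)) * ∑ ℓ ∈ Finset.Ico 1 k, f ((ℓ:ℝ)/(k:ℝ)) ≤ ∫ u in Set.Ioo (0:ℝ) 1, f u) ∧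
    Tendsto (fun k : ℕ => (1/(k:ℝ)) * ∑ ℓ ∈ Finset.Ico 1 k, f ((ℓ:ℝ)/(k:ℝ))) atTop
      (nhds (∫ u in Set.Ioo (0:ℝ) 1, f u)) ∧
    IsLeast {x : ℝ | ∃ k : ℕ, 2 ≤ k ∧
        x = (1/(k:ℝ)) * ∑ ℓ ∈ Finset.Ico 1 k, f ((ℓ:ℝ)/(k:ℝ))} ((1/2) * f (1/2)) ∧
    (1/(2:ℝ)) * ∑ ℓ ∈ Finset.Ico (1:ℕ) 2, f ((ℓ:ℝ)/(2:ℝ)) = (1/2) * f (1/2) := by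
  have hint' : IntervalIntegrable f volume 0 1 :=
    (intervalIntegrable_iff_integrableOn_Ioo_of_le zero_le_one).2 hint
  have hI : ∫ u in Ioo (0:ℝ) 1, f u = ∫ u in (0:ℝ)..1, f u := by
    rw [intervalIntegral.integral_of_le zero_le_one, integral_Ioc_eq_integral_Ioo]
  have hlower : ∀ k, 2 ≤ k → 1 / 2 * f (1 / 2) ≤ interiorRiemannSum f k :=
    fun k hk => half_mul_map_half_le_interiorRiemannSum hconv hsym (hnonneg _ (by norm_num)) hk
  rw [hI]
  refine ⟨fun k hk => ⟨hlower k hk, interiorRiemannSum_le_integral hconv hnonneg hint' (by omega)⟩,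
    tendsto_interiorRiemannSum hconv hnonneg hint',
    ⟨⟨2, le_rfl, (interiorRiemannSum_two f).symm⟩, ?_⟩, interiorRiemannSum_two f⟩
  rintro x ⟨k, hk, rfl⟩
  exact hlower k hk
end

section
/- Let α ∈ (1,2]. Then for every integer k ≥ 2: (1/k)·Σ_{ℓ=1}^{k−1} ((ℓ/k)·(1−ℓ/k))^{α−1} ≥ B(α,α) − 2^{1−2α}, and moreover B(α,α) − 2^{1−2α} > 0. -/
open MeasureTheory Finset

theorem stmt_8 (α : ℝ) (hα : 1 < α) (hα2 : α ≤ 2) :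
    (∀ k : ℕ, 2 ≤ k →
      Beta α α - (2:ℝ) ^ (1 - 2*α) ≤
        (1/(k:ℝ)) * ∑ ℓ ∈ Finset.Ico 1 k, (((ℓ:ℝ)/(k:ℝ)) * (1 - (ℓ:ℝ)/(k:ℝ))) ^ (α - 1)) ∧
    0 < Beta α α - (2:ℝ) ^ (1 - 2*α) := by
  set t := α - 1 with ht_def
  have ht : 0 < t := by simp only [ht_def]; linarith
  have ht1 : t ≤ 1 := by simp only [ht_def]; linarith
  set f : ℝ → ℝ := fun u => (u * (1 - u)) ^ t with hf_def
  have hfu : ∀ u : ℝ, f u = (u * (1 - u)) ^ t := fun _ => rfl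
  set M : ℝ := (1/4 : ℝ) ^ t with hM_def
  have hMpos : 0 < M := Real.rpow_pos_of_pos (by norm_num) t
  have hfc : Continuous f := by
    have h1 : Continuous fun u : ℝ => u * (1 - u) := by continuity
    exact h1.rpow_const (fun x => Or.inr ht.le)
  have hf0 : f 0 = 0 := by
    rw [hfu]
    norm_num
    exact Real.zero_rpow ht.ne'
  have hfhalf : f (1/2) = M := by
    rw [hfu, hM_def]
    norm_num
  have hfM : ∀ u ∈ Set.Icc (0:ℝ) 1, f u ≤ M := by
    intro u hu
    obtain ⟨hu0, hu1⟩ := hu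
    rw [hfu, hM_def]
    apply Real.rpow_le_rpow (by nlinarith) (by nlinarith [sq_nonneg (u - 1/2)]) ht.le
  have hmono : MonotoneOn f (Set.Icc (0:ℝ) (1/2)) := by
    intro x hx y hy hxy
    rw [hfu, hfu]
    apply Real.rpow_le_rpow (by nlinarith [hx.1, hx.2]) ?_ ht.le
    nlinarith [hx.1, hy.2]
  have hanti : AntitoneOn f (Set.Icc (1/2 : ℝ) 1) := by
    intro x hx y hy hxy
    rw [hfu, hfu]
    apply Real.rpow_le_rpow (by nlinarith [hy.1, hy.2]) ?_ ht.le
    nlinarith [hx.1, hy.2]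
  -- Beta as an interval integral of f
  have hBetaIoo : Beta α α = ∫ u in Set.Ioo (0:ℝ) 1, f u := by
    rw [Beta]
    apply setIntegral_congr_fun measurableSet_Ioo
    intro u hu
    rw [hfu]
    exact (Real.mul_rpow (le_of_lt hu.1) (by linarith [hu.2])).symm
  have hBeta : Beta α α = ∫ u in (0:ℝ)..1, f u := by
    rw [hBetaIoo, intervalIntegral.integral_of_le (by norm_num : (0:ℝ) ≤ 1),
      integral_Ioc_eq_integral_Ioo]
  -- the power identity
  have hpow : (2:ℝ) ^ (1 - 2*α) = (1/2) * M := by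
    have h2 : ((2:ℝ)) ^ (-2:ℝ) = 1/4 := by
      rw [show ((-2:ℝ)) = -((2:ℕ):ℝ) by norm_num, Real.rpow_neg (by norm_num : (0:ℝ) ≤ 2),
        Real.rpow_natCast]
      norm_num
    have h4 : M = (2:ℝ) ^ (-2*t) := by
      rw [hM_def, ← h2, ← Real.rpow_mul (by norm_num : (0:ℝ) ≤ 2)]
    rw [h4, show (1 - 2*α) = (-1) + (-2*t) by rw [ht_def]; ring,
      Real.rpow_add (by norm_num : (0:ℝ) < 2), Real.rpow_neg_one]
    norm_num
  constructor
  · -- main inequality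
    intro k hk
    have hk0 : (0:ℝ) < k := by positivity
    have hk2 : (2:ℝ) ≤ k := by exact_mod_cast hk
    set a : ℕ → ℝ := fun ℓ => (ℓ : ℝ) / k with ha_def
    have haa : ∀ m : ℕ, a m = (m:ℝ)/k := fun _ => rfl
    have hint : ∀ ℓ : ℕ, IntervalIntegrable f volume (a ℓ) (a (ℓ+1)) :=
      fun ℓ => hfc.intervalIntegrable _ _
    have hsplit : ∫ u in (0:ℝ)..1, f u = ∑ ℓ ∈ range k, ∫ u in a ℓ..a (ℓ+1), f u := by
      rw [intervalIntegral.sum_integral_adjacent_intervals (fun i _ => hint i)]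
      rw [haa 0, haa k]
      norm_num
      rw [div_self hk0.ne']
    set g : ℕ → ℝ := fun ℓ => f (min ((ℓ:ℝ)/k) (1/2)) with hg_def
    have hgg : ∀ m : ℕ, g m = f (min ((m:ℝ)/k) (1/2)) := fun _ => rfl
    have hstep : ∀ ℓ ∈ range k, (∫ u in a ℓ..a (ℓ+1), f u)
        ≤ (1/(k:ℝ)) * (f (a ℓ) + (g (ℓ+1) - g ℓ)) := by
      intro ℓ hℓ
      rw [mem_range] at hℓ
      have hℓk : (ℓ:ℝ) + 1 ≤ k := by exact_mod_cast hℓ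
      have haℓ : a ℓ = (ℓ:ℝ)/k := haa ℓ
      have haℓ1 : a (ℓ+1) = ((ℓ:ℝ)+1)/k := by rw [haa]; push_cast; ring
      have hab : a ℓ ≤ a (ℓ+1) := by
        rw [haℓ, haℓ1]
        exact div_le_div_of_nonneg_right (by linarith) hk0.le
      have hbound : ∀ u ∈ Set.Icc (a ℓ) (a (ℓ+1)), f u ≤ f (a ℓ) + (g (ℓ+1) - g ℓ) := by
        intro u hu
        have hul : (ℓ:ℝ)/k ≤ u := haℓ ▸ hu.1
        have hur : u ≤ ((ℓ:ℝ)+1)/k := haℓ1 ▸ hu.2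
        have hu0 : 0 ≤ u := le_trans (by positivity) hul
        have hu1 : u ≤ 1 := hur.trans (by rw [div_le_one hk0]; linarith)
        have hgsucc : g (ℓ+1) = f (min (((ℓ:ℝ)+1)/k) (1/2)) := by
          rw [hgg]; push_cast; ring_nf
        rw [haℓ]
        by_cases h1 : ((ℓ:ℝ)+1)/k ≤ 1/2
        · have hg1 : g (ℓ+1) = f (((ℓ:ℝ)+1)/k) := by rw [hgsucc, min_eq_left h1]
          have hg0 : g ℓ = f ((ℓ:ℝ)/k) := by
            rw [hgg, min_eq_left]
            exact le_trans (div_le_div_of_nonneg_right (by linarith) hk0.le) h1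
          rw [hg1, hg0]
          have hfle : f u ≤ f (((ℓ:ℝ)+1)/k) :=
            hmono ⟨hu0, hur.trans h1⟩ ⟨by positivity, h1⟩ hur
          linarith
        · by_cases h2 : (1:ℝ)/2 ≤ (ℓ:ℝ)/k
          · have hg1 : g (ℓ+1) = M := by
              rw [hgsucc, min_eq_right, hfhalf]
              exact h2.trans (div_le_div_of_nonneg_right (by linarith) hk0.le)
            have hg0 : g ℓ = M := by rw [hgg, min_eq_right h2, hfhalf]
            rw [hg1, hg0]
            have hfle : f u ≤ f ((ℓ:ℝ)/k) :=
              hanti ⟨h2, by rw [div_le_one hk0]; linarith⟩ ⟨h2.trans hul, hu1⟩ hul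
            linarith
          · have hg1 : g (ℓ+1) = M := by
              rw [hgsucc, min_eq_right, hfhalf]
              linarith
            have hg0 : g ℓ = f ((ℓ:ℝ)/k) := by
              rw [hgg, min_eq_left]
              linarith
            rw [hg1, hg0]
            have hfle : f u ≤ M := hfM u ⟨hu0, hu1⟩
            linarith
      have hlen : a (ℓ+1) - a ℓ = 1/(k:ℝ) := by
        rw [haℓ, haℓ1, div_sub_div_same]
        ring_nf
      calc (∫ u in a ℓ..a (ℓ+1), f u)
          ≤ ∫ _ in a ℓ..a (ℓ+1), (f (a ℓ) + (g (ℓ+1) - g ℓ)) :=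
            intervalIntegral.integral_mono_on hab (hint ℓ) (intervalIntegrable_const) hbound
        _ = (1/(k:ℝ)) * (f (a ℓ) + (g (ℓ+1) - g ℓ)) := by
            rw [intervalIntegral.integral_const, smul_eq_mul, hlen]
    have hsum : Beta α α ≤ (1/(k:ℝ)) * ((∑ ℓ ∈ Finset.Ico 1 k, f ((ℓ:ℝ)/k)) + M) := by
      rw [hBeta, hsplit]
      calc ∑ ℓ ∈ range k, ∫ u in a ℓ..a (ℓ+1), f u
          ≤ ∑ ℓ ∈ range k, (1/(k:ℝ)) * (f (a ℓ) + (g (ℓ+1) - g ℓ)) := Finset.sum_le_sum hstep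
        _ = (1/(k:ℝ)) * ((∑ ℓ ∈ range k, f (a ℓ)) + (g k - g 0)) := by
            rw [← Finset.mul_sum, Finset.sum_add_distrib, Finset.sum_range_sub g k]
        _ = (1/(k:ℝ)) * ((∑ ℓ ∈ Finset.Ico 1 k, f ((ℓ:ℝ)/k)) + M) := by
            congr 1
            have hgk : g k = M := by
              rw [hgg, min_eq_right, hfhalf]
              rw [div_self hk0.ne']
              linarith
            have hg0' : g 0 = 0 := by
              simp only [hgg, Nat.cast_zero, zero_div]
              rw [min_eq_left (by norm_num)]
              exact hf0
            rw [hgk, hg0', Finset.range_eq_Ico,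
              Finset.sum_eq_sum_Ico_succ_bot (by omega : 0 < k)]
            rw [haa 0]
            simp only [Nat.cast_zero, zero_div, hf0]
            have : ∀ m, f (a m) = f ((m:ℝ)/k) := fun m => by rw [haa]
            simp only [this]
            ring
    have hfin : Beta α α ≤ (1/(k:ℝ)) * (∑ ℓ ∈ Finset.Ico 1 k, f ((ℓ:ℝ)/k)) + (1/2) * M := by
      have hMk : (1/(k:ℝ)) * M ≤ (1/2) * M := by
        apply mul_le_mul_of_nonneg_right ?_ hMpos.le
        rw [div_le_div_iff₀ hk0 (by norm_num)]
        linarith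
      calc Beta α α ≤ (1/(k:ℝ)) * ((∑ ℓ ∈ Finset.Ico 1 k, f ((ℓ:ℝ)/k)) + M) := hsum
        _ = (1/(k:ℝ)) * (∑ ℓ ∈ Finset.Ico 1 k, f ((ℓ:ℝ)/k)) + (1/(k:ℝ)) * M := by ring
        _ ≤ _ := by linarith
    rw [hpow]
    have hfs : ∀ ℓ : ℕ, f ((ℓ:ℝ)/k) = (((ℓ:ℝ)/(k:ℝ)) * (1 - (ℓ:ℝ)/(k:ℝ))) ^ t :=
      fun ℓ => hfu _
    simp only [hfs] at hfin
    linarith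
  · -- positivity
    have hlow : ∀ u ∈ Set.Ioo (0:ℝ) 1, M * (4*u*(1-u)) ≤ f u := by
      intro u hu
      obtain ⟨hu0, hu1⟩ := hu
      have hx0 : 0 < 4*u*(1-u) := by nlinarith
      have hx1 : 4*u*(1-u) ≤ 1 := by nlinarith [sq_nonneg (u - 1/2)]
      have h1 : 4*u*(1-u) ≤ (4*u*(1-u)) ^ t := by
        nth_rewrite 1 [← Real.rpow_one (4*u*(1-u))]
        exact Real.rpow_le_rpow_of_exponent_ge hx0 hx1 ht1
      have h2 : f u = M * (4*u*(1-u)) ^ t := by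
        rw [hfu, hM_def, ← Real.mul_rpow (by norm_num) hx0.le]
        congr 1
        ring
      rw [h2]
      exact mul_le_mul_of_nonneg_left h1 hMpos.le
    have hc1 : Continuous fun u : ℝ => M * (4*u*(1-u)) :=
      continuous_const.mul ((continuous_const.mul continuous_id).mul
        (continuous_const.sub continuous_id))
    have hint1 : IntegrableOn (fun u : ℝ => M * (4*u*(1-u))) (Set.Ioo 0 1) volume :=
      (hc1.continuousOn.integrableOn_Icc).mono_set Set.Ioo_subset_Icc_self
    have hint2 : IntegrableOn f (Set.Ioo (0:ℝ) 1) volume :=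
      (hfc.continuousOn.integrableOn_Icc).mono_set Set.Ioo_subset_Icc_self
    have hle : (∫ u in Set.Ioo (0:ℝ) 1, M * (4*u*(1-u)))
        ≤ ∫ u in Set.Ioo (0:ℝ) 1, f u :=
      setIntegral_mono_on hint1 hint2 measurableSet_Ioo hlow
    have hcomp : (∫ u in Set.Ioo (0:ℝ) 1, M * (4*u*(1-u))) = M * (2/3) := by
      rw [← integral_Ioc_eq_integral_Ioo,
        ← intervalIntegral.integral_of_le (by norm_num : (0:ℝ) ≤ 1)]
      have heq : ∀ u : ℝ, M * (4*u*(1-u)) = (4*M) * u - (4*M) * u^2 := by intro u; ring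
      simp only [heq]
      rw [intervalIntegral.integral_sub, intervalIntegral.integral_const_mul,
        intervalIntegral.integral_const_mul, integral_id, integral_pow]
      · push_cast; ring
      · exact ((continuous_const.mul continuous_id).intervalIntegrable 0 1)
      · exact ((continuous_const.mul (continuous_pow 2)).intervalIntegrable 0 1)
    rw [hcomp] at hle
    rw [hpow, hBetaIoo]
    linarith
end

section
/- Let α ∈ (0,1], let C > 0 and ρ > 0, let k ≥ 2 be an integer, and let a_1, …, a_{k−1} be complex numbers with |a_j| ≤ C·ρ^{j}·j^{α−1} for every 1 ≤ j ≤ k−1. Then |Σ_{j=1}^{k−1} a_j a_{k−j}| ≤ C²·ρ^{k}·k^{2α−1}·B(α,α). -/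
/-!
Bounding the terms by `‖a j‖ ‖a (k - j)‖` turns the sum into `C² ρ^k k^(2α-2) ∑ g (j / k)`, where
`g u = u^(α-1) (1-u)^(α-1)` is the Beta integrand. Since `α ≤ 1`, `g` decreases on `(0, 1/2]` and
increases on `[1/2, 1)`, so `g (j / k)` is at most the mean of `g` over the cell of length `1 / k`
adjacent to `j / k` on the side away from `1/2`. These cells are pairwise disjoint subintervals of
`(0, 1)`, hence `∑ g (j / k) ≤ k B(α, α)`.
-/

open MeasureTheory Finset

theorem sum_mul_le_setIntegral_of_le_on {X ι : Type*} [MeasurableSpace X] {μ : Measure X}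
    {f : X → ℝ} {S : Set X} {s : Finset ι} {I : ι → Set X} {c : ι → ℝ}
    (hf : IntegrableOn f S μ) (hf0 : 0 ≤ᵐ[μ.restrict S] f)
    (hI : ∀ i ∈ s, MeasurableSet (I i)) (hIS : ∀ i ∈ s, I i ⊆ S)
    (hμI : ∀ i ∈ s, μ (I i) ≠ ⊤) (hdisj : (s : Set ι).PairwiseDisjoint I)
    (hc : ∀ i ∈ s, ∀ x ∈ I i, c i ≤ f x) :
    ∑ i ∈ s, μ.real (I i) * c i ≤ ∫ x in S, f x ∂μ := by
  have hfI : ∀ i ∈ s, IntegrableOn f (I i) μ := fun i hi => hf.mono_set (hIS i hi)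
  calc ∑ i ∈ s, μ.real (I i) * c i = ∑ i ∈ s, ∫ _ in I i, c i ∂μ := by
        simp only [setIntegral_const, smul_eq_mul]
    _ ≤ ∑ i ∈ s, ∫ x in I i, f x ∂μ := sum_le_sum fun i hi =>
        setIntegral_mono_on (integrableOn_const (hμI i hi)) (hfI i hi) (hI i hi) (hc i hi)
    _ = ∫ x in ⋃ i ∈ s, I i, f x ∂μ := (integral_biUnion_finset s hI hdisj hfI).symm
    _ ≤ ∫ x in S, f x ∂μ :=
        setIntegral_mono_set hf hf0 (Set.iUnion₂_subset hIS).eventuallyLE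

theorem Set.pairwiseDisjoint_Ioo_of_add_le {ι : Type*} [LinearOrder ι] {s : Set ι} {c : ι → ℝ}
    {δ : ℝ} (h : ∀ i ∈ s, ∀ j ∈ s, i < j → c i + δ ≤ c j) :
    s.PairwiseDisjoint fun i => Set.Ioo (c i) (c i + δ) := by
  intro i hi j hj hij
  rcases hij.lt_or_gt with hlt | hlt
  · exact Set.disjoint_left.2 fun x hxi hxj => by linarith [hxi.2, hxj.1, h i hi j hj hlt]
  · exact Set.disjoint_left.2 fun x hxi hxj => by linarith [hxi.1, hxj.2, h j hj i hi hlt]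

noncomputable def cellStart (k j : ℕ) : ℝ := (if 2 * j ≤ k then (j : ℝ) - 1 else j) / k

theorem cellStart_add_inv (k j : ℕ) :
    cellStart k j + 1 / k = (if 2 * j ≤ k then (j : ℝ) else j + 1) / k := by
  rw [cellStart, ← add_div]
  split_ifs <;> ring_nf

theorem cellStart_add_inv_le {k i j : ℕ} (hij : i < j) : cellStart k i + 1 / k ≤ cellStart k j := by
  have hij' : (i : ℝ) + 1 ≤ j := by exact_mod_cast hij
  rw [cellStart_add_inv, cellStart]
  gcongr
  split_ifs <;> linarith

theorem Ioo_cellStart_subset {k j : ℕ} (hj : j ∈ Ico 1 k) :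
    Set.Ioo (cellStart k j) (cellStart k j + 1 / k) ⊆ Set.Ioo 0 1 := by
  intro x hx
  rw [Set.mem_Ioo, cellStart_add_inv, cellStart] at hx
  have hj1 : (1 : ℝ) ≤ j := by exact_mod_cast (mem_Ico.1 hj).1
  have hjk : (j : ℝ) + 1 ≤ k := by exact_mod_cast (mem_Ico.1 hj).2
  have hk : (0 : ℝ) < k := by linarith
  split_ifs at hx
  · exact ⟨lt_of_le_of_lt (by positivity) hx.1, hx.2.trans_le ((div_le_one hk).2 (by linarith))⟩
  · exact ⟨lt_of_le_of_lt (by positivity) hx.1, hx.2.trans_le ((div_le_one hk).2 hjk)⟩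

theorem le_of_mem_Ioo_cellStart {g : ℝ → ℝ} (hanti : AntitoneOn g (Set.Ioc 0 (1 / 2)))
    (hmono : MonotoneOn g (Set.Ico (1 / 2) 1)) {k j : ℕ} (hj : j ∈ Ico 1 k) {x : ℝ}
    (hx : x ∈ Set.Ioo (cellStart k j) (cellStart k j + 1 / k)) : g (j / k) ≤ g x := by
  have hx01 := Ioo_cellStart_subset hj hx
  have hj1 : (0 : ℝ) < j := by exact_mod_cast (mem_Ico.1 hj).1
  have hk : (0 : ℝ) < k := hj1.trans (by exact_mod_cast (mem_Ico.1 hj).2)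
  rw [Set.mem_Ioo, cellStart_add_inv, cellStart] at hx
  split_ifs at hx with h2j
  · have hhalf : (j : ℝ) / k ≤ 1 / 2 := by
      rw [div_le_iff₀ hk]
      have : (2 * j : ℝ) ≤ k := by exact_mod_cast h2j
      linarith
    exact hanti ⟨hx01.1, hx.2.le.trans hhalf⟩ ⟨div_pos hj1 hk, hhalf⟩ hx.2.le
  · have hhalf : 1 / 2 < (j : ℝ) / k := by
      rw [lt_div_iff₀ hk]
      have : (k : ℝ) < 2 * j := by exact_mod_cast (not_le.1 h2j)
      linarith
    exact hmono ⟨hhalf.le, hx.1.trans hx01.2⟩ ⟨hhalf.le.trans hx.1.le, hx01.2⟩ hx.1.le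

theorem sum_le_mul_setIntegral_of_antitoneOn_of_monotoneOn {g : ℝ → ℝ}
    (hg : IntegrableOn g (Set.Ioo 0 1)) (hg0 : ∀ x ∈ Set.Ioo (0:ℝ) 1, 0 ≤ g x)
    (hanti : AntitoneOn g (Set.Ioc 0 (1 / 2))) (hmono : MonotoneOn g (Set.Ico (1 / 2) 1))
    (k : ℕ) : ∑ j ∈ Ico 1 k, g (j / k) ≤ k * ∫ x in Set.Ioo 0 1, g x := by
  rcases Nat.eq_zero_or_pos k with rfl | hk
  · simp
  have hk' : (0 : ℝ) < k := by exact_mod_cast hk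
  have hvol : ∀ j, volume.real (Set.Ioo (cellStart k j) (cellStart k j + 1 / k)) = 1 / k :=
    fun j => by simp [Real.volume_real_Ioo, hk'.le]
  have key := sum_mul_le_setIntegral_of_le_on (s := Ico 1 k) (c := fun j => g (j / k)) hg
    (ae_restrict_of_forall_mem measurableSet_Ioo hg0) (fun _ _ => measurableSet_Ioo)
    (fun _ => Ioo_cellStart_subset) (fun _ _ => measure_Ioo_lt_top.ne)
    (Set.pairwiseDisjoint_Ioo_of_add_le fun _ _ _ _ => cellStart_add_inv_le)
    (fun _ => le_of_mem_Ioo_cellStart hanti hmono)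
  rw [sum_congr rfl fun j _ => by rw [hvol], ← mul_sum] at key
  calc _ = k * (1 / k * ∑ j ∈ Ico 1 k, g (j / k)) := by field_simp
    _ ≤ _ := by gcongr

noncomputable def betaIntegrand (a b u : ℝ) : ℝ := u ^ (a - 1) * (1 - u) ^ (b - 1)

theorem betaIntegrand_nonneg (a b : ℝ) {u : ℝ} (hu : u ∈ Set.Icc 0 1) : 0 ≤ betaIntegrand a b u :=
  mul_nonneg (Real.rpow_nonneg hu.1 _) (Real.rpow_nonneg (sub_nonneg.2 hu.2) _)

theorem integrableOn_betaIntegrand {a b : ℝ} (ha : 0 < a) (hb : 0 < b) :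
    IntegrableOn (betaIntegrand a b) (Set.Ioo 0 1) := by
  have h := Complex.betaIntegral_convergent (u := a) (v := b) (by simpa) (by simpa)
  rw [intervalIntegrable_iff_integrableOn_Ioo_of_le zero_le_one] at h
  refine IntegrableOn.congr_fun h.re (fun u hu => ?_) measurableSet_Ioo
  have hu1 : 0 ≤ 1 - u := by linarith [hu.2]
  have e : ((u ^ (a - 1) * (1 - u) ^ (b - 1) : ℝ) : ℂ)
      = (u : ℂ) ^ ((a : ℂ) - 1) * (1 - (u : ℂ)) ^ ((b : ℂ) - 1) := by
    push_cast [Complex.ofReal_cpow hu.1.le, Complex.ofReal_cpow hu1]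
    rfl
  rw [betaIntegrand, ← e, RCLike.re_to_complex, Complex.ofReal_re]

theorem betaIntegrand_self {α u : ℝ} (hu : u ∈ Set.Icc 0 1) :
    betaIntegrand α α u = (u * (1 - u)) ^ (α - 1) :=
  (Real.mul_rpow hu.1 (sub_nonneg.2 hu.2)).symm

theorem antitoneOn_betaIntegrand {α : ℝ} (hα : α ≤ 1) :
    AntitoneOn (betaIntegrand α α) (Set.Ioc 0 (1 / 2)) := by
  intro x hx y hy hxy
  rw [betaIntegrand_self ⟨hx.1.le, by linarith [hx.2]⟩,
    betaIntegrand_self ⟨hy.1.le, by linarith [hy.2]⟩]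
  exact Real.rpow_le_rpow_of_nonpos (by nlinarith [hx.1, hx.2]) (by nlinarith [hx.2, hy.2])
    (by linarith)

theorem monotoneOn_betaIntegrand {α : ℝ} (hα : α ≤ 1) :
    MonotoneOn (betaIntegrand α α) (Set.Ico (1 / 2) 1) := by
  intro x hx y hy hxy
  rw [betaIntegrand_self ⟨by linarith [hx.1], hx.2.le⟩,
    betaIntegrand_self ⟨by linarith [hy.1], hy.2.le⟩]
  exact Real.rpow_le_rpow_of_nonpos (by nlinarith [hy.1, hy.2]) (by nlinarith [hx.1, hy.1])
    (by linarith)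

theorem rpow_mul_sub_rpow_eq_mul_betaIntegrand {K x : ℝ} (hK : 0 < K) (hx : 0 ≤ x) (hxK : x ≤ K)
    (a b : ℝ) :
    x ^ (a - 1) * (K - x) ^ (b - 1) = K ^ (a - 1 + (b - 1)) * betaIntegrand a b (x / K) := by
  rw [betaIntegrand, one_sub_div hK.ne', Real.div_rpow hx hK.le, Real.div_rpow (by linarith) hK.le,
    Real.rpow_add hK]
  have := Real.rpow_pos_of_pos hK (a - 1)
  have := Real.rpow_pos_of_pos hK (b - 1)
  field_simp

theorem norm_mul_le_mul_betaIntegrand {R : Type*} [NonUnitalSeminormedRing R] {C ρ α : ℝ}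
    {k j : ℕ} (hj : j ∈ Ico 1 k) {x y : R} (hx : ‖x‖ ≤ C * ρ ^ j * (j : ℝ) ^ (α - 1))
    (hy : ‖y‖ ≤ C * ρ ^ (k - j) * ((k - j : ℕ) : ℝ) ^ (α - 1)) :
    ‖x * y‖ ≤ C ^ 2 * ρ ^ k * (k : ℝ) ^ (α - 1 + (α - 1)) * betaIntegrand α α (j / k) := by
  obtain ⟨hj1, hjk⟩ := mem_Ico.1 hj
  have hk : (0 : ℝ) < k := by exact_mod_cast (by omega : 0 < k)
  calc ‖x * y‖ ≤ C * ρ ^ j * (j : ℝ) ^ (α - 1) * (C * ρ ^ (k - j) * ((k - j : ℕ) : ℝ) ^ (α - 1)) :=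
        norm_mul_le_of_le hx hy
    _ = C ^ 2 * (ρ ^ j * ρ ^ (k - j)) * ((j : ℝ) ^ (α - 1) * ((k : ℝ) - j) ^ (α - 1)) := by
        rw [Nat.cast_sub hjk.le]; ring
    _ = _ := by
        rw [← pow_add, Nat.add_sub_cancel' hjk.le, rpow_mul_sub_rpow_eq_mul_betaIntegrand hk
          j.cast_nonneg (by exact_mod_cast hjk.le)]
        ring

theorem stmt_9_general (α : ℝ) (hα : 0 < α) (hα1 : α ≤ 1)
    (C ρ : ℝ) (hρ : 0 < ρ)
    (k : ℕ) (hk : 2 ≤ k)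
    (a : ℕ → ℂ)
    (hbound : ∀ j : ℕ, 1 ≤ j → j ≤ k - 1 → ‖a j‖ ≤ C * ρ ^ j * (j:ℝ) ^ (α - 1)) :
    ‖∑ j ∈ Finset.Ico 1 k, a j * a (k - j)‖ ≤
      C ^ 2 * ρ ^ k * (k:ℝ) ^ (2*α - 1) * Beta α α := by
  have hk0 : (0 : ℝ) < k := by exact_mod_cast (by omega : 0 < k)
  set M := C ^ 2 * ρ ^ k * (k : ℝ) ^ (α - 1 + (α - 1))
  have hterm : ∀ j ∈ Ico 1 k, ‖a j * a (k - j)‖ ≤ M * betaIntegrand α α (j / k) := fun j hj =>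
    have ⟨hj1, hjk⟩ := mem_Ico.1 hj
    norm_mul_le_mul_betaIntegrand hj (hbound j hj1 (by omega))
      (hbound (k - j) (by omega) (by omega))
  have hsum := sum_le_mul_setIntegral_of_antitoneOn_of_monotoneOn (integrableOn_betaIntegrand hα hα)
    (fun x hx => betaIntegrand_nonneg α α ⟨hx.1.le, hx.2.le⟩) (antitoneOn_betaIntegrand hα1)
    (monotoneOn_betaIntegrand hα1) k
  calc ‖∑ j ∈ Ico 1 k, a j * a (k - j)‖ ≤ ∑ j ∈ Ico 1 k, M * betaIntegrand α α (j / k) :=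
        (norm_sum_le _ _).trans (sum_le_sum hterm)
    _ = M * ∑ j ∈ Ico 1 k, betaIntegrand α α (j / k) := (mul_sum _ _ _).symm
    _ ≤ M * (k * Beta α α) := by gcongr; exact hsum
    _ = C ^ 2 * ρ ^ k * (k : ℝ) ^ (2 * α - 1) * Beta α α := by
        rw [show 2 * α - 1 = α - 1 + (α - 1) + 1 by ring, Real.rpow_add_one hk0.ne']
        ring

theorem stmt_9 (α : ℝ) (hα : 0 < α) (hα1 : α ≤ 1)
    (C ρ : ℝ) (hC : 0 < C) (hρ : 0 < ρ)
    (k : ℕ) (hk : 2 ≤ k)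
    (a : ℕ → ℂ)
    (hbound : ∀ j : ℕ, 1 ≤ j → j ≤ k - 1 → ‖a j‖ ≤ C * ρ ^ j * (j:ℝ) ^ (α - 1)) :
    ‖∑ j ∈ Finset.Ico 1 k, a j * a (k - j)‖ ≤
      C ^ 2 * ρ ^ k * (k:ℝ) ^ (2*α - 1) * Beta α α :=
  stmt_9_general α hα hα1 C ρ hρ k hk a hbound
end

section
/- Let α ∈ (0,1], let C > 0 and ρ > 0, and let (a_k)_{k≥1} be complex numbers with |a_k| ≤ C·ρ^{k}·k^{α−1} for every k ≥ 1. Set τ = ρ^{−1/α}. Then for every t ∈ (0,τ) and every integer n₀ ≥ 1: Σ_{k ≥ n₀+1} |a_k| t^{αk} ≤ (C / (α·log(τ/t))) · (t/τ)^{n₀ α} / n₀^{1−α}. -/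
open Finset

theorem stmt_10 (α : ℝ) (hα : 0 < α) (hα1 : α ≤ 1)
    (C ρ : ℝ) (hC : 0 < C) (hρ : 0 < ρ)
    (a : ℕ → ℂ)
    (hbound : ∀ k : ℕ, 1 ≤ k → ‖a k‖ ≤ C * ρ ^ k * (k:ℝ) ^ (α - 1))
    (τ : ℝ) (hτ : τ = ρ ^ (-(1/α)))
    (t : ℝ) (ht0 : 0 < t) (ht : t < τ)
    (n₀ : ℕ) (hn₀ : 1 ≤ n₀) :
    (∑' k : ℕ, ‖a (n₀ + 1 + k)‖ * t ^ (α * ((n₀ + 1 + k : ℕ) : ℝ))) ≤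
      (C / (α * Real.log (τ / t))) * (t/τ) ^ ((n₀:ℝ) * α) / (n₀:ℝ) ^ (1 - α) := by
  have hτpos : 0 < τ := by rw [hτ]; exact Real.rpow_pos_of_pos hρ _
  have htτ : 0 < t / τ := div_pos ht0 hτpos
  have htτ1 : t / τ < 1 := (div_lt_one hτpos).2 ht
  set q : ℝ := (t / τ) ^ α with hqdef
  have hq0 : 0 < q := Real.rpow_pos_of_pos htτ _
  have hq1 : q < 1 := Real.rpow_lt_one htτ.le htτ1 hα
  have hτα : τ ^ α = ρ⁻¹ := by
    rw [hτ, ← Real.rpow_mul hρ.le]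
    rw [show (-(1/α)) * α = -1 by field_simp, Real.rpow_neg_one]
  have hqρ : ρ * t ^ α = q := by
    rw [hqdef, Real.div_rpow ht0.le hτpos.le, hτα]
    field_simp
  set r : ℝ := (n₀:ℝ) ^ (α - 1) with hrdef
  have hr0 : 0 < r := Real.rpow_pos_of_pos (by exact_mod_cast hn₀) _
  -- termwise bound
  have hterm : ∀ k : ℕ, ‖a (n₀ + 1 + k)‖ * t ^ (α * ((n₀ + 1 + k : ℕ) : ℝ)) ≤
      C * r * q ^ (n₀ + 1 + k) := by
    intro k
    set m := n₀ + 1 + k with hm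
    have hm1 : 1 ≤ m := by omega
    have hmn : (n₀:ℝ) ≤ (m:ℝ) := by exact_mod_cast (by omega : n₀ ≤ m)
    have h1 : ‖a m‖ ≤ C * ρ ^ m * (m:ℝ) ^ (α - 1) := hbound m hm1
    have h2 : (m:ℝ) ^ (α - 1) ≤ r :=
      Real.rpow_le_rpow_of_nonpos (by exact_mod_cast hn₀) hmn (by linarith)
    have h3 : t ^ (α * (m:ℝ)) = (t ^ α) ^ m := by
      rw [Real.rpow_mul ht0.le, Real.rpow_natCast]
    have htα0 : (0:ℝ) < t ^ α := Real.rpow_pos_of_pos ht0 _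
    have h4 : ρ ^ m * (t ^ α) ^ m = q ^ m := by
      rw [← mul_pow, hqρ]
    calc ‖a m‖ * t ^ (α * (m:ℝ)) ≤ (C * ρ ^ m * (m:ℝ) ^ (α - 1)) * t ^ (α * (m:ℝ)) := by
          apply mul_le_mul_of_nonneg_right h1 (Real.rpow_nonneg ht0.le _)
      _ ≤ (C * ρ ^ m * r) * t ^ (α * (m:ℝ)) := by
          apply mul_le_mul_of_nonneg_right _ (Real.rpow_nonneg ht0.le _)
          exact mul_le_mul_of_nonneg_left h2 (by positivity)
      _ = C * r * q ^ m := by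
          rw [h3, ← h4]; ring
  have hnn : ∀ k : ℕ, 0 ≤ ‖a (n₀ + 1 + k)‖ * t ^ (α * ((n₀ + 1 + k : ℕ) : ℝ)) := fun k =>
    mul_nonneg (norm_nonneg _) (Real.rpow_nonneg ht0.le _)
  have hgsum : Summable (fun k : ℕ => C * r * q ^ (n₀ + 1 + k)) := by
    have hg : Summable (fun k : ℕ => (C * r * q ^ (n₀ + 1)) * q ^ k) :=
      (summable_geometric_of_lt_one hq0.le hq1).mul_left _
    refine hg.congr fun k => ?_
    rw [pow_add]; ring
  have hlsum : Summable (fun k : ℕ => ‖a (n₀ + 1 + k)‖ * t ^ (α * ((n₀ + 1 + k : ℕ) : ℝ))) :=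
    Summable.of_nonneg_of_le hnn hterm hgsum
  have hts : (∑' k : ℕ, ‖a (n₀ + 1 + k)‖ * t ^ (α * ((n₀ + 1 + k : ℕ) : ℝ))) ≤
      ∑' k : ℕ, C * r * q ^ (n₀ + 1 + k) := Summable.tsum_le_tsum hterm hlsum hgsum
  have hgeo : (∑' k : ℕ, C * r * q ^ (n₀ + 1 + k)) = C * r * q ^ (n₀ + 1) * (1 - q)⁻¹ := by
    have h1 : (fun k : ℕ => C * r * q ^ (n₀ + 1 + k)) =
        fun k : ℕ => (C * r * q ^ (n₀ + 1)) * q ^ k := by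
      funext k; rw [pow_add]; ring
    rw [h1, tsum_mul_left, tsum_geometric_of_lt_one hq0.le hq1]
  -- log facts
  set L : ℝ := Real.log (τ / t) with hLdef
  have hL : 0 < L := Real.log_pos ((one_lt_div ht0).2 ht)
  have hαL : α * L = - Real.log q := by
    rw [hqdef, Real.log_rpow htτ, show t / τ = (τ / t)⁻¹ by rw [inv_div], Real.log_inv]
    ring
  have hkey : q * (α * L) ≤ 1 - q := by
    have h := Real.log_le_sub_one_of_pos (inv_pos.2 hq0)
    rw [Real.log_inv] at h
    have : α * L ≤ q⁻¹ - 1 := by rw [hαL]; linarith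
    have h2 : q * (α * L) ≤ q * (q⁻¹ - 1) := mul_le_mul_of_nonneg_left this hq0.le
    calc q * (α * L) ≤ q * (q⁻¹ - 1) := h2
      _ = 1 - q := by field_simp
  have hαL0 : 0 < α * L := mul_pos hα hL
  have h1q : 0 < 1 - q := by linarith
  -- rewrite RHS
  have hR : (t/τ) ^ ((n₀:ℝ) * α) = q ^ n₀ := by
    rw [mul_comm, Real.rpow_mul htτ.le, Real.rpow_natCast]
  have hN : (n₀:ℝ) ^ (1 - α) = r⁻¹ := by
    rw [hrdef, show (1 - α) = -(α - 1) by ring, Real.rpow_neg (Nat.cast_nonneg _)]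
  rw [hR, hN, div_eq_mul_inv, inv_inv]
  refine hts.trans (hgeo.le.trans ?_)
  have hfrac : q ^ (n₀ + 1) * (1 - q)⁻¹ ≤ q ^ n₀ / (α * L) := by
    rw [← div_eq_mul_inv, div_le_div_iff₀ h1q hαL0, pow_succ]
    have := mul_le_mul_of_nonneg_left hkey (pow_nonneg hq0.le n₀)
    nlinarith [pow_nonneg hq0.le n₀]
  calc C * r * q ^ (n₀ + 1) * (1 - q)⁻¹ = (C * r) * (q ^ (n₀+1) * (1 - q)⁻¹) := by ring
    _ ≤ (C * r) * (q ^ n₀ / (α * L)) := by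
        exact mul_le_mul_of_nonneg_left hfrac (by positivity)
    _ = C / (α * L) * q ^ n₀ * r := by ring
end

section
/- Let α ∈ (0,2], let C > 0 and ρ > 0, and let (a_k)_{k≥1} be complex numbers with |a_k| ≤ C·ρ^{k}·k^{α−1} for every k ≥ 1. Set τ = ρ^{−1/α}. Then for every t ∈ (0,τ) and every integer n₀ ≥ 1 satisfying n₀ ≥ (α−1)/(α·log(τ/t)): Σ_{k ≥ n₀+1} |a_k| t^{αk} ≤ (C·n₀^{α−1} / (α·log(τ/t))) · (t/τ)^{n₀ α} · (1 + max(α−1,0)/(α·n₀·log(τ/t))). -/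
/-!
With `L = α log (τ / t)` one has `(t / τ) ^ α = ρ t ^ α = exp (-L)`, so the `m`-th term is at most
`C m ^ (α - 1) exp (-L) ^ m`. The tangent line at `n₀` of the concave (for `α ≥ 1`) or decreasing
(for `α ≤ 1`) function `x ↦ x ^ (α - 1)` bounds `m ^ (α - 1)` by an affine function of `m - n₀`, so the
tail is dominated by an arithmetico-geometric series with ratio `q = exp (-L)`. Its sum involves
`q / (1 - q) = 1 / (exp L - 1) ≤ 1 / L` and `q / (1 - q) ^ 2 = 1 / (2 sinh (L / 2)) ^ 2 ≤ 1 / L ^ 2`.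
-/

namespace Real

theorem exp_neg_div_one_sub_exp_neg_le {L : ℝ} (hL : 0 < L) :
    exp (-L) / (1 - exp (-L)) ≤ 1 / L := by
  have h : exp (-L) / (1 - exp (-L)) = 1 / (exp L - 1) := by
    rw [exp_neg]
    field_simp
  rw [h]
  exact one_div_le_one_div_of_le hL (by linarith [add_one_le_exp L])

theorem exp_neg_div_one_sub_exp_neg_sq_le {L : ℝ} (hL : 0 < L) :
    exp (-L) / (1 - exp (-L)) ^ 2 ≤ 1 / L ^ 2 := by
  have h : exp (-L) / (1 - exp (-L)) ^ 2 = 1 / (2 * sinh (L / 2)) ^ 2 := by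
    have hexp : exp L = exp (L / 2) ^ 2 := by rw [← exp_nat_mul]; ring_nf
    rw [sinh_eq, exp_neg, exp_neg, hexp]
    field_simp
  rw [h]
  have hsinh := self_lt_sinh_iff.mpr (half_pos hL)
  exact one_div_le_one_div_of_le (by positivity) (pow_le_pow_left₀ hL.le (by linarith) 2)

theorem rpow_le_add_mul_sub {p n x : ℝ} (hp : p ≤ 1) (hn : 0 < n) (hnx : n ≤ x) :
    x ^ p ≤ n ^ p + max p 0 * n ^ (p - 1) * (x - n) := by
  rcases le_or_gt p 0 with hp0 | hp0
  · rw [max_eq_right hp0, zero_mul, zero_mul, add_zero]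
    exact rpow_le_rpow_of_nonpos hn hnx hp0
  · have hs : 0 ≤ (x - n) / n := div_nonneg (by linarith) hn.le
    calc x ^ p = (n * (1 + (x - n) / n)) ^ p := by congr 1; field_simp; ring
      _ = n ^ p * (1 + (x - n) / n) ^ p := mul_rpow hn.le (by linarith)
      _ ≤ n ^ p * (1 + p * ((x - n) / n)) :=
          mul_le_mul_of_nonneg_left (rpow_one_add_le_one_add_mul_self (by linarith) hp0.le hp)
            (rpow_nonneg hn.le p)
      _ = n ^ p + max p 0 * n ^ (p - 1) * (x - n) := by
          rw [max_eq_left hp0.le, rpow_sub_one hn.ne']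
          field_simp

end Real

open Real

theorem hasSum_affine_mul_geometric_tail {q : ℝ} (hq0 : 0 ≤ q) (hq1 : q < 1) (n : ℕ) (A B : ℝ) :
    HasSum (fun k : ℕ => (A + B * ((k : ℝ) + 1)) * q ^ (n + 1 + k))
      (q ^ n * (A * (q / (1 - q)) + B * (q / (1 - q) ^ 2))) := by
  have hgeom := hasSum_geometric_of_lt_one hq0 hq1
  have hcoe := hasSum_coe_mul_geometric_of_norm_lt_one (𝕜 := ℝ)
    (by rwa [Real.norm_eq_abs, abs_of_nonneg hq0])
  convert (hgeom.mul_left (q ^ n * q * (A + B))).add (hcoe.mul_left (q ^ n * q * B)) using 1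
  · rfl
  · funext k
    ring
  · have h1q : 1 - q ≠ 0 := by linarith
    field_simp
    ring

theorem tsum_tail_le_of_le_rpow_mul_exp_neg {f : ℕ → ℝ} {C p L : ℝ} {n : ℕ} (hC : 0 ≤ C)
    (hp : p ≤ 1) (hL : 0 < L) (hn : 0 < n) (hf0 : ∀ m, 0 ≤ f m)
    (hf : ∀ m, n < m → f m ≤ C * (m : ℝ) ^ p * exp (-L) ^ m) :
    ∑' k, f (n + 1 + k) ≤ C * (n : ℝ) ^ p / L * exp (-L) ^ n * (1 + max p 0 / (L * n)) := by
  have hq1 : exp (-L) < 1 := Real.exp_lt_one_iff.mpr (neg_lt_zero.mpr hL)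
  have hnR : (0 : ℝ) < n := by exact_mod_cast hn
  set A := (n : ℝ) ^ p
  set B := max p 0 * (n : ℝ) ^ (p - 1)
  have hg := (hasSum_affine_mul_geometric_tail (exp_pos _).le hq1 n A B).mul_left C
  have hle : ∀ k : ℕ, f (n + 1 + k) ≤ C * ((A + B * ((k : ℝ) + 1)) * exp (-L) ^ (n + 1 + k)) := by
    intro k
    have hx : ((n + 1 + k : ℕ) : ℝ) - n = k + 1 := by push_cast; ring
    have hnx : (n : ℝ) ≤ (n + 1 + k : ℕ) := by push_cast; linarith
    calc f (n + 1 + k) ≤ C * ((n + 1 + k : ℕ) : ℝ) ^ p * exp (-L) ^ (n + 1 + k) := hf _ (by omega)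
      _ ≤ C * ((A + B * ((k : ℝ) + 1)) * exp (-L) ^ (n + 1 + k)) := by
          rw [mul_assoc, ← hx]
          gcongr
          exact rpow_le_add_mul_sub hp hnR hnx
  calc ∑' k, f (n + 1 + k)
      ≤ C * (exp (-L) ^ n * (A * (exp (-L) / (1 - exp (-L))) +
          B * (exp (-L) / (1 - exp (-L)) ^ 2))) :=
        (Summable.tsum_le_tsum hle (hg.summable.of_nonneg_of_le (fun k => hf0 _) hle)
          hg.summable).trans_eq hg.tsum_eq
    _ ≤ C * (exp (-L) ^ n * (A * (1 / L) + B * (1 / L ^ 2))) := by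
        gcongr C * (_ * (A * ?_ + B * ?_))
        · exact exp_neg_div_one_sub_exp_neg_le hL
        · exact exp_neg_div_one_sub_exp_neg_sq_le hL
    _ = C * (n : ℝ) ^ p / L * exp (-L) ^ n * (1 + max p 0 / (L * n)) := by
        simp only [A, B, rpow_sub_one hnR.ne']
        field_simp

theorem stmt_11_general (α : ℝ) (hα : 0 < α) (hα2 : α ≤ 2)
    (C ρ : ℝ) (hC : 0 < C) (hρ : 0 < ρ)
    (a : ℕ → ℂ)
    (hbound : ∀ k : ℕ, 1 ≤ k → ‖a k‖ ≤ C * ρ ^ k * (k:ℝ) ^ (α - 1))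
    (τ : ℝ) (hτ : τ = ρ ^ (-(1/α)))
    (t : ℝ) (ht0 : 0 < t) (ht : t < τ)
    (n₀ : ℕ) (hn₀ : 1 ≤ n₀) :
    (∑' k : ℕ, ‖a (n₀ + 1 + k)‖ * t ^ (α * ((n₀ + 1 + k : ℕ) : ℝ))) ≤
      (C * (n₀:ℝ) ^ (α - 1) / (α * Real.log (τ / t))) * (t/τ) ^ ((n₀:ℝ) * α) *
        (1 + max (α - 1) 0 / (α * (n₀:ℝ) * Real.log (τ / t))) := by
  have hτ0 : 0 < τ := hτ ▸ rpow_pos_of_pos hρ _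
  set L := α * log (τ / t)
  have hL : 0 < L := mul_pos hα (log_pos ((one_lt_div ht0).mpr ht))
  have hq : (t / τ) ^ α = exp (-L) := by
    rw [rpow_def_of_pos (div_pos ht0 hτ0), ← inv_div, log_inv, neg_mul, mul_comm (log _)]
  have hρq : ρ * t ^ α = exp (-L) := by
    rw [← hq, div_rpow ht0.le hτ0.le, hτ, ← rpow_mul hρ.le, neg_mul, one_div,
      inv_mul_cancel₀ hα.ne', rpow_neg_one]
    field_simp
  have htail := tsum_tail_le_of_le_rpow_mul_exp_neg (f := fun m => ‖a m‖ * t ^ (α * m))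
    hC.le (by linarith : α - 1 ≤ 1) hL hn₀ (fun m => by positivity) fun m hm => by
      calc ‖a m‖ * t ^ (α * m) ≤ C * ρ ^ m * (m : ℝ) ^ (α - 1) * (t ^ α) ^ m := by
            rw [rpow_mul ht0.le, rpow_natCast]
            gcongr
            exact hbound m (by omega)
        _ = C * (m : ℝ) ^ (α - 1) * exp (-L) ^ m := by rw [← hρq, mul_pow]; ring
  rw [mul_comm (n₀ : ℝ), rpow_mul (div_pos ht0 hτ0).le, rpow_natCast, hq, mul_right_comm α]
  exact htail

theorem stmt_11 (α : ℝ) (hα : 0 < α) (hα2 : α ≤ 2)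
    (C ρ : ℝ) (hC : 0 < C) (hρ : 0 < ρ)
    (a : ℕ → ℂ)
    (hbound : ∀ k : ℕ, 1 ≤ k → ‖a k‖ ≤ C * ρ ^ k * (k:ℝ) ^ (α - 1))
    (τ : ℝ) (hτ : τ = ρ ^ (-(1/α)))
    (t : ℝ) (ht0 : 0 < t) (ht : t < τ)
    (n₀ : ℕ) (hn₀ : 1 ≤ n₀)
    (hn₀' : (α - 1) / (α * Real.log (τ / t)) ≤ (n₀:ℝ)) :
    (∑' k : ℕ, ‖a (n₀ + 1 + k)‖ * t ^ (α * ((n₀ + 1 + k : ℕ) : ℝ))) ≤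
      (C * (n₀:ℝ) ^ (α - 1) / (α * Real.log (τ / t))) * (t/τ) ^ ((n₀:ℝ) * α) *
        (1 + max (α - 1) 0 / (α * (n₀:ℝ) * Real.log (τ / t))) :=
  stmt_11_general α hα hα2 C ρ hC hρ a hbound τ hτ t ht0 ht n₀ hn₀
end

section
/- For every α ∈ (0,1] and every integer k ≥ 1: Γ(αk+1)/Γ(αk+α+1) ≤ α^{−α}·(k+1)^{−α}. -/
theorem stmt_12 (α : ℝ) (hα : 0 < α) (hα1 : α ≤ 1) (k : ℕ) (hk : 1 ≤ k) :
    Real.Gamma (α * (k:ℝ) + 1) / Real.Gamma (α * (k:ℝ) + α + 1) ≤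
      α ^ (-α) * ((k:ℝ) + 1) ^ (-α) := by
  have hk1 : (1:ℝ) ≤ (k:ℝ) := by exact_mod_cast hk
  set t : ℝ := α * k with ht
  have htpos : 0 < t := mul_pos hα (by linarith)
  have hx : (0:ℝ) < t + α := by linarith
  have hy : (0:ℝ) < t + 1 + α := by linarith
  have hGx : 0 < Real.Gamma (t + α) := Real.Gamma_pos_of_pos hx
  have hGy : 0 < Real.Gamma (t + 1 + α) := Real.Gamma_pos_of_pos hy
  have hG1 : 0 < Real.Gamma (t + 1) := Real.Gamma_pos_of_pos (by linarith)
  have hconv := Real.convexOn_log_Gamma.2 (Set.mem_Ioi.mpr hx) (Set.mem_Ioi.mpr hy)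
    hα.le (by linarith : (0:ℝ) ≤ 1 - α) (by ring)
  have hcomb : α • (t + α) + (1 - α) • (t + 1 + α) = t + 1 := by
    simp [smul_eq_mul]; ring
  rw [hcomb] at hconv
  simp only [Function.comp_apply, smul_eq_mul] at hconv
  have hlog : Real.log (Real.Gamma (t + 1)) ≤
      Real.log (Real.Gamma (t + α) ^ α * Real.Gamma (t + 1 + α) ^ (1 - α)) := by
    rw [Real.log_mul (by positivity) (by positivity), Real.log_rpow hGx, Real.log_rpow hGy]
    exact hconv
  have hkey : Real.Gamma (t + 1) ≤
      Real.Gamma (t + α) ^ α * Real.Gamma (t + 1 + α) ^ (1 - α) :=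
    (Real.log_le_log_iff hG1 (by positivity)).mp hlog
  -- rewrite Γ(t+1+α) = (t+α) Γ(t+α)
  have hGadd : Real.Gamma (t + 1 + α) = (t + α) * Real.Gamma (t + α) := by
    have := Real.Gamma_add_one hx.ne'
    rw [show t + α + 1 = t + 1 + α by ring] at this
    exact this
  have hbound : Real.Gamma (t + 1) ≤ (t + α) ^ (-α) * Real.Gamma (t + 1 + α) := by
    calc Real.Gamma (t + 1) ≤ Real.Gamma (t + α) ^ α * Real.Gamma (t + 1 + α) ^ (1 - α) := hkey
    _ = (t + α) ^ (-α) * Real.Gamma (t + 1 + α) := by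
        rw [hGadd, Real.mul_rpow hx.le hGx.le]
        rw [show Real.Gamma (t + α) ^ α * ((t + α) ^ (1 - α) * Real.Gamma (t + α) ^ (1 - α))
          = (t + α) ^ (1 - α) * (Real.Gamma (t + α) ^ α * Real.Gamma (t + α) ^ (1 - α)) by ring]
        rw [← Real.rpow_add hGx, show α + (1 - α) = 1 by ring, Real.rpow_one,
          show (1 - α) = -α + 1 by ring, Real.rpow_add hx, Real.rpow_one]
        ring
  have hRHS : α ^ (-α) * ((k:ℝ) + 1) ^ (-α) = (t + α) ^ (-α) := by
    rw [← Real.mul_rpow hα.le (by linarith : (0:ℝ) ≤ (k:ℝ) + 1)]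
    congr 1
    ring
  rw [hRHS, show α * (k:ℝ) + α + 1 = t + 1 + α by ring, div_le_iff₀ hGy]
  exact hbound
end

section
/- For every α ∈ [1,2] and every integer k ≥ 1: Γ(αk+1)/Γ(αk+α+1) ≤ (αk)^{−α}. -/
theorem stmt_13 (α : ℝ) (hα : 1 ≤ α) (hα2 : α ≤ 2) (k : ℕ) (hk : 1 ≤ k) :
    Real.Gamma (α * (k:ℝ) + 1) / Real.Gamma (α * (k:ℝ) + α + 1) ≤
      (α * (k:ℝ)) ^ (-α) := by
  have hk1 : (1:ℝ) ≤ (k:ℝ) := by exact_mod_cast hk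
  set x : ℝ := α * k with hxdef
  have hx1 : 1 ≤ x := by nlinarith
  have hxpos : 0 < x := lt_of_lt_of_le one_pos hx1
  set s : ℝ := α - 1 with hsdef
  have hs0 : 0 ≤ s := by simp [hsdef]; linarith
  have hs1 : s ≤ 1 := by simp [hsdef]; linarith
  have h1 : (0:ℝ) < x + 1 + s := by linarith
  have h2 : (0:ℝ) < x + 2 + s := by linarith
  have hG1 : 0 < Real.Gamma (x + 1 + s) := Real.Gamma_pos_of_pos h1
  have hG2pos : 0 < Real.Gamma (x + 2) := Real.Gamma_pos_of_pos (by linarith)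
  -- log-convexity gives: Γ(x+2) ≤ (x+1+s)^(1-s) * Γ(x+1+s)
  have hconv := Real.convexOn_log_Gamma.2 (Set.mem_Ioi.mpr h1) (Set.mem_Ioi.mpr h2)
      hs0 (by linarith : (0:ℝ) ≤ 1 - s) (by ring)
  have hcomb : s • (x + 1 + s) + (1 - s) • (x + 2 + s) = x + 2 := by
    simp [smul_eq_mul]; ring
  rw [hcomb] at hconv
  have hG2s : Real.Gamma (x + 2 + s) = (x + 1 + s) * Real.Gamma (x + 1 + s) := by
    have := Real.Gamma_add_one (s := x + 1 + s) (ne_of_gt h1)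
    rw [← this]; ring_nf
  have key : Real.Gamma (x + 2) ≤ (x + 1 + s) ^ (1 - s) * Real.Gamma (x + 1 + s) := by
    have hrhspos : 0 < (x + 1 + s) ^ (1 - s) * Real.Gamma (x + 1 + s) :=
      mul_pos (Real.rpow_pos_of_pos h1 _) hG1
    rw [← Real.log_le_log_iff hG2pos hrhspos]
    calc Real.log (Real.Gamma (x + 2))
        ≤ s * Real.log (Real.Gamma (x + 1 + s)) +
            (1 - s) * Real.log (Real.Gamma (x + 2 + s)) := hconv
      _ = (1 - s) * Real.log (x + 1 + s) + Real.log (Real.Gamma (x + 1 + s)) := by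
          rw [hG2s, Real.log_mul (ne_of_gt h1) (ne_of_gt hG1)]; ring
      _ = Real.log ((x + 1 + s) ^ (1 - s) * Real.Gamma (x + 1 + s)) := by
          rw [Real.log_mul (ne_of_gt (Real.rpow_pos_of_pos h1 _)) (ne_of_gt hG1),
            Real.log_rpow h1]
  -- hence Γ(x+α+1) = (x+1+s) * Γ(x+1+s) ≥ (x+1+s)^s * Γ(x+2)
  have hxα : x + α + 1 = (x + 1 + s) + 1 := by rw [hsdef]; ring
  have hGα : Real.Gamma (x + α + 1) = (x + 1 + s) * Real.Gamma (x + 1 + s) := by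
    rw [hxα, Real.Gamma_add_one (ne_of_gt h1)]
  have step1 : (x + 1 + s) ^ s * Real.Gamma (x + 2) ≤ Real.Gamma (x + α + 1) := by
    rw [hGα]
    calc (x + 1 + s) ^ s * Real.Gamma (x + 2)
        ≤ (x + 1 + s) ^ s * ((x + 1 + s) ^ (1 - s) * Real.Gamma (x + 1 + s)) := by
          exact mul_le_mul_of_nonneg_left key (le_of_lt (Real.rpow_pos_of_pos h1 _))
      _ = (x + 1 + s) * Real.Gamma (x + 1 + s) := by
          rw [← mul_assoc, ← Real.rpow_add h1, show s + (1 - s) = 1 by ring,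
            Real.rpow_one]
  have hG2 : Real.Gamma (x + 2) = (x + 1) * Real.Gamma (x + 1) := by
    have := Real.Gamma_add_one (s := x + 1) (by positivity)
    rw [← this]; ring_nf
  have hGx1pos : 0 < Real.Gamma (x + 1) := Real.Gamma_pos_of_pos (by linarith)
  -- x^α Γ(x+1) ≤ Γ(x+α+1)
  have main : x ^ α * Real.Gamma (x + 1) ≤ Real.Gamma (x + α + 1) := by
    refine le_trans ?_ step1
    rw [hG2]
    have hb : x ^ s ≤ (x + 1 + s) ^ s :=
      Real.rpow_le_rpow (le_of_lt hxpos) (by linarith) hs0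
    have hxα' : x ^ α = x ^ s * x := by
      rw [show α = s + 1 by simp [hsdef], Real.rpow_add hxpos, Real.rpow_one]
    rw [hxα']
    have hx2 : x ^ s * x * Real.Gamma (x + 1) ≤ x ^ s * (x + 1) * Real.Gamma (x + 1) := by
      have : x ^ s * x ≤ x ^ s * (x + 1) :=
        mul_le_mul_of_nonneg_left (by linarith) (le_of_lt (Real.rpow_pos_of_pos hxpos _))
      exact mul_le_mul_of_nonneg_right this (le_of_lt hGx1pos)
    refine hx2.trans ?_
    have : x ^ s * (x + 1) ≤ (x + 1 + s) ^ s * (x + 1) :=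
      mul_le_mul_of_nonneg_right hb (by linarith)
    calc x ^ s * (x + 1) * Real.Gamma (x + 1)
        ≤ (x + 1 + s) ^ s * (x + 1) * Real.Gamma (x + 1) :=
          mul_le_mul_of_nonneg_right this (le_of_lt hGx1pos)
      _ = (x + 1 + s) ^ s * ((x + 1) * Real.Gamma (x + 1)) := by ring
  have hGαpos : 0 < Real.Gamma (x + α + 1) := Real.Gamma_pos_of_pos (by linarith)
  rw [div_le_iff₀ hGαpos, Real.rpow_neg (le_of_lt hxpos)]
  rw [inv_mul_eq_div, le_div_iff₀ (Real.rpow_pos_of_pos hxpos α)]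
  calc Real.Gamma (x + 1) * x ^ α = x ^ α * Real.Gamma (x + 1) := by ring
    _ ≤ Real.Gamma (x + α + 1) := main
end
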